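/- arXiv:2405.06177 — 13 statements merged into one kernel-verified Lean document; each statement's English description precedes it below -/
import Mathlib

section
/- Let n ≥ 3 and let S be a nonempty proper subset of [n-1]. Then the maximum of d_H(σ,ρ) over all pairs of distinct permutations σ, ρ ∈ D(S;n) equals n-1 if S is an interval of consecutive integers {i, i+1, …, j} with i = 1 or j = n-1, and equals n otherwise. -/
/-- `σ` is a permutation of `[n] = {1,…,n}`, written in one-line notation:
`σ j` is the `j`-th entry, for `1 ≤ j ≤ n`. -/
def IsPermOn (n : ℕ) (σ : ℕ → ℕ) : Prop :=
  Set.BijOn σ (Set.Icc 1 n) (Set.Icc 1 n)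

/-- The descent set `D(σ) = {i ∈ [n-1] | σ_i > σ_{i+1}}`. -/
def DescentSet (n : ℕ) (σ : ℕ → ℕ) : Finset ℕ :=
  (Finset.Icc 1 (n - 1)).filter fun i => σ (i + 1) < σ i

/-- `D(S;n)`, the set of permutations of `[n]` with descent set `S`. -/
def DSn (n : ℕ) (S : Finset ℕ) : Set (ℕ → ℕ) :=
  {σ | IsPermOn n σ ∧ DescentSet n σ = S}

/-- The Hamming distance `d_H(σ,ρ) = |{i ∈ [n] : σ_i ≠ ρ_i}|`. -/
def dHamming (n : ℕ) (σ ρ : ℕ → ℕ) : ℕ :=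
  ((Finset.Icc 1 n).filter fun i => σ i ≠ ρ i).card

/-- The `ℓ∞` distance `d_ℓ(σ,ρ) = max_{1 ≤ i ≤ n} |σ_i − ρ_i|`. -/
def dLinf (n : ℕ) (σ ρ : ℕ → ℕ) : ℕ :=
  (Finset.Icc 1 n).sup fun i => ((σ i : ℤ) - (ρ i : ℤ)).natAbs

/-- `σ` and `ρ` are distinct as permutations of `[n]`
(they differ at some index of `[n]`). -/
def DistinctOn (n : ℕ) (σ ρ : ℕ → ℕ) : Prop :=
  ∃ i ∈ Set.Icc 1 n, σ i ≠ ρ i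

namespace S2

/-- previous element of S strictly below k, or 0 -/
def pprev (S : Finset ℕ) (k : ℕ) : ℕ :=
  ((insert 0 (S.filter (fun s => s < k))).max' (Finset.insert_nonempty _ _))

/-- next element of S at or above k, or n -/
def nnext (n : ℕ) (S : Finset ℕ) (k : ℕ) : ℕ :=
  ((insert n (S.filter (fun s => k ≤ s))).min' (Finset.insert_nonempty _ _))

lemma pprev_lt {S : Finset ℕ} {k : ℕ} (hk : 1 ≤ k) : pprev S k < k := by
  unfold pprev
  rw [Finset.max'_lt_iff]
  intro y hy
  rcases Finset.mem_insert.1 hy with h | h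
  · omega
  · exact (Finset.mem_filter.1 h).2

lemma le_pprev {S : Finset ℕ} {k s : ℕ} (hs : s ∈ S) (h : s < k) : s ≤ pprev S k := by
  unfold pprev
  have hmem : s ∈ S.filter (fun x => x < k) := Finset.mem_filter.2 ⟨hs, h⟩
  exact Finset.le_max' _ s (Finset.mem_insert_of_mem hmem)

lemma pprev_mem {S : Finset ℕ} {k : ℕ} : pprev S k = 0 ∨ pprev S k ∈ S := by
  rcases Finset.mem_insert.1 (Finset.max'_mem (insert 0 (S.filter (fun s => s < k)))
      (Finset.insert_nonempty _ _)) with h | h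
  · exact Or.inl h
  · exact Or.inr (Finset.mem_filter.1 h).1

lemma notMem_of_pprev_lt {S : Finset ℕ} {k x : ℕ} (h1 : pprev S k < x) (h2 : x < k) :
    x ∉ S := fun hx => absurd (le_pprev hx h2) (by omega)

lemma le_nnext {n : ℕ} {S : Finset ℕ} {k : ℕ} (hk : k ≤ n) : k ≤ nnext n S k := by
  unfold nnext
  apply Finset.le_min'
  intro y hy
  rcases Finset.mem_insert.1 hy with h | h
  · omega
  · exact (Finset.mem_filter.1 h).2

lemma nnext_le_n {n : ℕ} {S : Finset ℕ} {k : ℕ} : nnext n S k ≤ n := by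
  unfold nnext
  exact Finset.min'_le _ _ (Finset.mem_insert_self _ _)

lemma nnext_le {n : ℕ} {S : Finset ℕ} {k s : ℕ} (hs : s ∈ S) (h : k ≤ s) : nnext n S k ≤ s := by
  unfold nnext
  have hmem : s ∈ S.filter (fun x => k ≤ x) := Finset.mem_filter.2 ⟨hs, h⟩
  exact Finset.min'_le _ _ (Finset.mem_insert_of_mem hmem)

lemma nnext_mem {n : ℕ} {S : Finset ℕ} {k : ℕ} : nnext n S k = n ∨ nnext n S k ∈ S := by
  rcases Finset.mem_insert.1 (Finset.min'_mem (insert n (S.filter (fun s => k ≤ s)))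
      (Finset.insert_nonempty _ _)) with h | h
  · exact Or.inl h
  · exact Or.inr (Finset.mem_filter.1 h).1

lemma notMem_of_lt_nnext {n : ℕ} {S : Finset ℕ} {k x : ℕ} (h1 : k ≤ x) (h2 : x < nnext n S k) :
    x ∉ S := fun hx => absurd (nnext_le (n := n) hx h1) (by omega)

lemma nnext_eq_of_mem {n : ℕ} {S : Finset ℕ} {k : ℕ} (hk : k ∈ S) (hkn : k ≤ n) :
    nnext n S k = k :=
  le_antisymm (nnext_le hk le_rfl) (le_nnext hkn)

lemma nnext_succ_of_notMem {n : ℕ} {S : Finset ℕ} {k : ℕ} (hk : k ∉ S) :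
    nnext n S (k + 1) = nnext n S k := by
  unfold nnext
  congr 1
  ext s
  simp only [Finset.mem_insert, Finset.mem_filter]
  constructor
  · rintro (h | ⟨h1, h2⟩)
    · exact Or.inl h
    · exact Or.inr ⟨h1, by omega⟩
  · rintro (h | ⟨h1, h2⟩)
    · exact Or.inl h
    · refine Or.inr ⟨h1, ?_⟩
      rcases Nat.eq_or_lt_of_le h2 with h | h
      · exact absurd (h ▸ h1) hk
      · omega

lemma pprev_succ_of_mem {S : Finset ℕ} {k : ℕ} (hk : k ∈ S) : pprev S (k + 1) = k :=
  le_antisymm (by have := pprev_lt (S := S) (k := k + 1) (by omega); omega)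
    (le_pprev hk (by omega))

lemma pprev_succ_of_notMem {S : Finset ℕ} {k : ℕ} (hk : k ∉ S) :
    pprev S (k + 1) = pprev S k := by
  unfold pprev
  congr 1
  ext s
  simp only [Finset.mem_insert, Finset.mem_filter]
  constructor
  · rintro (h | ⟨h1, h2⟩)
    · exact Or.inl h
    · refine Or.inr ⟨h1, ?_⟩
      rcases Nat.eq_or_lt_of_le (by omega : s ≤ k) with h | h
      · exact absurd (h ▸ h1) hk
      · omega
  · rintro (h | ⟨h1, h2⟩)
    · exact Or.inl h
    · exact Or.inr ⟨h1, by omega⟩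

lemma pprev_mono {S : Finset ℕ} {k k' : ℕ} (h : k ≤ k') : pprev S k ≤ pprev S k' := by
  unfold pprev
  apply Finset.max'_subset
  apply Finset.insert_subset_insert
  apply Finset.monotone_filter_right
  intro x hx; omega

lemma nnext_mono {n : ℕ} {S : Finset ℕ} {k k' : ℕ} (h : k ≤ k') : nnext n S k ≤ nnext n S k' := by
  unfold nnext
  apply Finset.min'_subset
  apply Finset.insert_subset_insert
  apply Finset.monotone_filter_right
  intro x hx; omega

/-- key separation for canonical-formula injectivity -/
lemma canon_sep {n : ℕ} {S : Finset ℕ} {k k' : ℕ} (hk : 1 ≤ k) (hkk : k < k') (hk' : k' ≤ n) :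
    (nnext n S k = nnext n S k' ∧ pprev S k = pprev S k') ∨
    (nnext n S k + 1 ≤ nnext n S k' ∧ nnext n S k ≤ pprev S k') := by
  rcases Nat.eq_or_lt_of_le (nnext_mono (n := n) (S := S) (le_of_lt hkk)) with heq | hlt
  · left
    refine ⟨heq, le_antisymm (pprev_mono (le_of_lt hkk)) ?_⟩
    rcases pprev_mem (S := S) (k := k') with h0 | hS
    · omega
    · have hlt' : pprev S k' < k' := pprev_lt (by omega)
      rcases Nat.lt_or_ge (pprev S k') k with h | h
      · exact le_pprev hS h
      · exfalso
        have h1 := nnext_le (n := n) hS h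
        have h2 := le_nnext (n := n) (S := S) (k := k') (by omega)
        omega
  · right
    have hSk : nnext n S k ∈ S := by
      rcases nnext_mem (n := n) (S := S) (k := k) with h | h
      · exfalso; have := nnext_le_n (n := n) (S := S) (k := k'); omega
      · exact h
    have hlt2 : nnext n S k < k' := by
      by_contra h
      have := nnext_le (n := n) (S := S) hSk (by omega : k' ≤ nnext n S k)
      omega
    exact ⟨by omega, le_pprev hSk hlt2⟩


lemma isPermOn_of {n : ℕ} {σ : ℕ → ℕ}
    (h1 : Set.MapsTo σ (Set.Icc 1 n) (Set.Icc 1 n))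
    (h2 : Set.InjOn σ (Set.Icc 1 n)) : IsPermOn n σ :=
  ((Set.finite_Icc 1 n).injOn_iff_bijOn_of_mapsTo h1).1 h2

lemma descentSet_eq {n : ℕ} {σ : ℕ → ℕ} (S : Finset ℕ)
    (h : ∀ k, 1 ≤ k → k ≤ n - 1 → (σ (k + 1) < σ k ↔ k ∈ S))
    (hsub : S ⊆ Finset.Icc 1 (n - 1)) : DescentSet n σ = S := by
  unfold DescentSet
  ext k
  simp only [Finset.mem_filter, Finset.mem_Icc]
  constructor
  · rintro ⟨⟨hk1, hk2⟩, hd⟩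
    exact (h k hk1 hk2).1 hd
  · intro hk
    have := Finset.mem_Icc.1 (hsub hk)
    exact ⟨this, (h k this.1 this.2).2 hk⟩

lemma dHamming_le {n : ℕ} (σ ρ : ℕ → ℕ) : dHamming n σ ρ ≤ n := by
  calc dHamming n σ ρ ≤ (Finset.Icc 1 n).card := Finset.card_filter_le _ _
  _ = n := by rw [Nat.card_Icc]; omega

lemma dHamming_eq_n {n : ℕ} {σ ρ : ℕ → ℕ} (h : ∀ k ∈ Finset.Icc 1 n, σ k ≠ ρ k) :
    dHamming n σ ρ = n := by
  unfold dHamming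
  rw [Finset.filter_true_of_mem h, Nat.card_Icc]
  omega

lemma dHamming_le_pred {n p : ℕ} {σ ρ : ℕ → ℕ} (hp : p ∈ Finset.Icc 1 n) (h : σ p = ρ p) :
    dHamming n σ ρ ≤ n - 1 := by
  unfold dHamming
  have hsub : (Finset.Icc 1 n).filter (fun i => σ i ≠ ρ i) ⊆ (Finset.Icc 1 n).erase p := by
    intro x hx
    rw [Finset.mem_erase]
    rw [Finset.mem_filter] at hx
    refine ⟨?_, hx.1⟩
    rintro rfl
    exact hx.2 h
  calc _ ≤ ((Finset.Icc 1 n).erase p).card := Finset.card_le_card hsub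
  _ = n - 1 := by rw [Finset.card_erase_of_mem hp, Nat.card_Icc]; omega

lemma dHamming_eq_pred {n p : ℕ} {σ ρ : ℕ → ℕ} (hp : p ∈ Finset.Icc 1 n) (h : σ p = ρ p)
    (hne : ∀ k ∈ Finset.Icc 1 n, k ≠ p → σ k ≠ ρ k) :
    dHamming n σ ρ = n - 1 := by
  unfold dHamming
  have : (Finset.Icc 1 n).filter (fun i => σ i ≠ ρ i) = (Finset.Icc 1 n).erase p := by
    ext x
    rw [Finset.mem_erase, Finset.mem_filter]
    constructor
    · rintro ⟨h1, h2⟩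
      refine ⟨?_, h1⟩
      rintro rfl; exact h2 h
    · rintro ⟨h1, h2⟩
      exact ⟨h2, hne x h2 h1⟩
  rw [this, Finset.card_erase_of_mem hp, Nat.card_Icc]
  omega

/-- transfer a pair of fully-disjoint permutations through value complement -/
lemma complement_pair {n : ℕ} {S : Finset ℕ} (hn : 1 ≤ n) (hsub : S ⊆ Finset.Icc 1 (n - 1))
    (h : ∃ σ ∈ DSn n (Finset.Icc 1 (n - 1) \ S), ∃ ρ ∈ DSn n (Finset.Icc 1 (n - 1) \ S),
      ∀ k ∈ Finset.Icc 1 n, σ k ≠ ρ k) :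
    ∃ σ ∈ DSn n S, ∃ ρ ∈ DSn n S, ∀ k ∈ Finset.Icc 1 n, σ k ≠ ρ k := by
  obtain ⟨σ, ⟨hσP, hσD⟩, ρ, ⟨hρP, hρD⟩, hdis⟩ := h
  have compl_perm : ∀ τ : ℕ → ℕ, IsPermOn n τ → IsPermOn n (fun k => n + 1 - τ k) := by
    intro τ hτ
    apply isPermOn_of
    · intro x hx
      have := hτ.mapsTo hx
      simp only [Set.mem_Icc] at *
      omega
    · intro x hx y hy hxy
      apply hτ.injOn hx hy
      have h1 := hτ.mapsTo hx
      have h2 := hτ.mapsTo hy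
      simp only [Set.mem_Icc] at h1 h2
      simp only at hxy
      omega
  have compl_desc : ∀ τ : ℕ → ℕ, IsPermOn n τ →
      DescentSet n (fun k => n + 1 - τ k) = Finset.Icc 1 (n - 1) \ DescentSet n τ := by
    intro τ hτ
    unfold DescentSet
    ext k
    simp only [Finset.mem_filter, Finset.mem_sdiff, Finset.mem_Icc]
    constructor
    · rintro ⟨⟨h1, h2⟩, hd⟩
      have m1 := hτ.mapsTo (Set.mem_Icc.2 (by omega : 1 ≤ k ∧ k ≤ n))
      have m2 := hτ.mapsTo (Set.mem_Icc.2 (by omega : 1 ≤ k + 1 ∧ k + 1 ≤ n))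
      simp only [Set.mem_Icc] at m1 m2
      exact ⟨⟨h1, h2⟩, by rintro ⟨-, hd'⟩; omega⟩
    · rintro ⟨⟨h1, h2⟩, hd⟩
      refine ⟨⟨h1, h2⟩, ?_⟩
      have m1 := hτ.mapsTo (Set.mem_Icc.2 (by omega : 1 ≤ k ∧ k ≤ n))
      have m2 := hτ.mapsTo (Set.mem_Icc.2 (by omega : 1 ≤ k + 1 ∧ k + 1 ≤ n))
      simp only [Set.mem_Icc] at m1 m2
      have hne : τ k ≠ τ (k + 1) := by
        intro he
        have := hτ.injOn (Set.mem_Icc.2 (by omega : 1 ≤ k ∧ k ≤ n))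
          (Set.mem_Icc.2 (by omega : 1 ≤ k + 1 ∧ k + 1 ≤ n)) he
        omega
      have : ¬ (τ (k + 1) < τ k) := fun hc => hd ⟨⟨h1, h2⟩, hc⟩
      omega
  refine ⟨fun k => n + 1 - σ k, ⟨compl_perm σ hσP, ?_⟩,
          fun k => n + 1 - ρ k, ⟨compl_perm ρ hρP, ?_⟩, ?_⟩
  · rw [compl_desc σ hσP, hσD, Finset.sdiff_sdiff_eq_self hsub]
  · rw [compl_desc ρ hρP, hρD, Finset.sdiff_sdiff_eq_self hsub]
  · intro k hk
    have h1 := hσP.mapsTo (Set.mem_Icc.2 (Finset.mem_Icc.1 hk))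
    have h2 := hρP.mapsTo (Set.mem_Icc.2 (Finset.mem_Icc.1 hk))
    simp only [Set.mem_Icc] at h1 h2
    have := hdis k hk
    simp only
    omega


/-- the value permutation: -1 cyclically on [1,c], +1 cyclically on (c,n] -/
def phiC (n c v : ℕ) : ℕ :=
  if v = 1 then c else if v ≤ c then v - 1 else if v ≤ n - 1 then v + 1 else c + 1

lemma phiC_mem {n c v : ℕ} (h2 : 2 ≤ c) (hc : c + 2 ≤ n) (hv : 1 ≤ v) (hvn : v ≤ n) :
    1 ≤ phiC n c v ∧ phiC n c v ≤ n := by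
  unfold phiC; split_ifs <;> omega

lemma phiC_injOn {n c : ℕ} (h2 : 2 ≤ c) (hc : c + 2 ≤ n) {v w : ℕ}
    (hv : 1 ≤ v) (hvn : v ≤ n) (hw : 1 ≤ w) (hwn : w ≤ n)
    (h : phiC n c v = phiC n c w) : v = w := by
  unfold phiC at h; split_ifs at h <;> omega

lemma phiC_ne {n c v : ℕ} (h2 : 2 ≤ c) (hc : c + 2 ≤ n) (hv : 1 ≤ v) (hvn : v ≤ n) :
    phiC n c v ≠ v := by
  unfold phiC; split_ifs <;> omega

lemma phiC_lt_iff {n c v w : ℕ} (h2 : 2 ≤ c) (hc : c + 2 ≤ n)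
    (hv : 1 ≤ v) (hvn : v ≤ n) (hw : 1 ≤ w) (hwn : w ≤ n) (hne : v ≠ w)
    (s1 : v = 1 → c + 1 ≤ w) (s2 : w = 1 → c + 1 ≤ v)
    (s3 : v = n → w ≤ c) (s4 : w = n → v ≤ c) :
    (phiC n c w < phiC n c v ↔ w < v) := by
  unfold phiC; split_ifs <;> omega


/-- case I permutation: `1 ∪ top block` on the long run ending at q0,
`{n} ∪ bottom` on the last run, canonical blocks elsewhere. -/
def sigI (n p0 q0 mx : ℕ) (S : Finset ℕ) (k : ℕ) : ℕ :=
  if k ≤ p0 then n - (q0 - p0) - nnext n S k + (k - pprev S k)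
  else if k = p0 + 1 then 1
  else if k ≤ q0 then n - (q0 - p0) - 1 + (k - p0)
  else if k ≤ mx then n - nnext n S k + (k - pprev S k)
  else if k ≤ n - 1 then k - mx + 1
  else n

set_option maxHeartbeats 1600000 in
lemma caseI {n : ℕ} {S : Finset ℕ} (hsub : S ⊆ Finset.Icc 1 (n - 1))
    {q0 : ℕ} (hq0 : q0 ∈ S) (hlong : pprev S q0 + 2 ≤ q0) (hnm : n - 1 ∉ S) :
    ∃ σ ∈ DSn n S, ∃ ρ ∈ DSn n S, ∀ k ∈ Finset.Icc 1 n, σ k ≠ ρ k := by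
  classical
  set p0 := pprev S q0 with hp0def
  set mx := pprev S n with hmxdef
  have hq0r : 1 ≤ q0 ∧ q0 ≤ n - 1 := Finset.mem_Icc.1 (hsub hq0)
  have hn4' : 2 ≤ q0 := by omega
  have hq0mx : q0 ≤ mx := le_pprev hq0 (by omega)
  have hmxS : mx ∈ S := by
    rcases pprev_mem (S := S) (k := n) with h | h
    · omega
    · exact h
  have hmxr : 1 ≤ mx ∧ mx ≤ n - 1 := Finset.mem_Icc.1 (hsub hmxS)
  have hmx2 : mx ≤ n - 2 := by
    rcases Nat.eq_or_lt_of_le hmxr.2 with h | h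
    · exact absurd (h ▸ hmxS) hnm
    · omega
  have hn4 : 4 ≤ n := by omega
  have hSmx : ∀ s ∈ S, s ≤ mx := fun s hs =>
    le_pprev hs (by have := Finset.mem_Icc.1 (hsub hs); omega)
  have hp0S : p0 = 0 ∨ p0 ∈ S := pprev_mem
  have hp0lt : p0 < q0 := by omega
  have hint : ∀ x, p0 < x → x < q0 → x ∉ S := fun x h1 h2 => notMem_of_pprev_lt h1 h2
  have hF : ∀ k, 1 ≤ k → k ≤ n → pprev S k < k ∧ k ≤ nnext n S k ∧ nnext n S k ≤ n :=
    fun k h1 h2 => ⟨pprev_lt h1, le_nnext h2, nnext_le_n⟩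
  have hF1 : ∀ k, 1 ≤ k → k ≤ p0 → nnext n S k ≤ p0 := by
    intro k h1 h2
    rcases hp0S with h | h
    · omega
    · exact nnext_le h h2
  have hF4 : ∀ k, q0 < k → k ≤ mx → q0 ≤ pprev S k ∧ nnext n S k ≤ mx := fun k h1 h2 =>
    ⟨le_pprev hq0 h1, nnext_le hmxS h2⟩
  set f := sigI n p0 q0 mx S with hfdef
  have E1 : ∀ k, k ≤ p0 → f k = n - (q0 - p0) - nnext n S k + (k - pprev S k) := by
    intro k h; show sigI n p0 q0 mx S k = _
    unfold sigI; rw [if_pos h]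
  have E2 : f (p0 + 1) = 1 := by
    show sigI n p0 q0 mx S (p0 + 1) = _
    unfold sigI; rw [if_neg (by omega), if_pos rfl]
  have E3 : ∀ k, p0 + 2 ≤ k → k ≤ q0 → f k = n - (q0 - p0) - 1 + (k - p0) := by
    intro k h1 h2; show sigI n p0 q0 mx S k = _
    unfold sigI; rw [if_neg (by omega), if_neg (by omega), if_pos h2]
  have E4 : ∀ k, q0 < k → k ≤ mx → f k = n - nnext n S k + (k - pprev S k) := by
    intro k h1 h2; show sigI n p0 q0 mx S k = _
    unfold sigI; rw [if_neg (by omega), if_neg (by omega), if_neg (by omega), if_pos h2]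
  have E5 : ∀ k, mx < k → k ≤ n - 1 → f k = k - mx + 1 := by
    intro k h1 h2; show sigI n p0 q0 mx S k = _
    unfold sigI
    rw [if_neg (by omega), if_neg (by omega), if_neg (by omega), if_neg (by omega), if_pos h2]
  have E6 : f n = n := by
    show sigI n p0 q0 mx S n = _
    unfold sigI
    rw [if_neg (by omega), if_neg (by omega), if_neg (by omega), if_neg (by omega),
      if_neg (by omega)]
  have B1 : ∀ k, 1 ≤ k → k ≤ p0 → n - q0 + 1 ≤ f k ∧ f k ≤ n - (q0 - p0) := by
    intro k h1 h2
    have h3 := hF k h1 (by omega)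
    have h4 := hF1 k h1 h2
    rw [E1 k h2]; omega
  have B3 : ∀ k, p0 + 2 ≤ k → k ≤ q0 → n - (q0 - p0) + 1 ≤ f k ∧ f k ≤ n - 1 := by
    intro k h1 h2
    rw [E3 k h1 h2]; omega
  have B4 : ∀ k, q0 < k → k ≤ mx → n - mx + 1 ≤ f k ∧ f k ≤ n - q0 := by
    intro k h1 h2
    have h3 := hF k (by omega) (by omega)
    have h4 := hF4 k h1 h2
    rw [E4 k h1 h2]; omega
  have B5 : ∀ k, mx < k → k ≤ n - 1 → 2 ≤ f k ∧ f k ≤ n - mx := by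
    intro k h1 h2
    rw [E5 k h1 h2]; omega
  have hmem : ∀ k, 1 ≤ k → k ≤ n → 1 ≤ f k ∧ f k ≤ n := by
    intro k h1 h2
    rcases Nat.lt_or_ge k (p0 + 1) with h | h
    · have := B1 k h1 (by omega); omega
    · rcases Nat.eq_or_lt_of_le h with h' | h'
      · rw [← h', E2]; omega
      · rcases Nat.lt_or_ge k (q0 + 1) with h'' | h''
        · have := B3 k (by omega) (by omega); omega
        · rcases Nat.lt_or_ge k (mx + 1) with h3 | h3
          · have := B4 k (by omega) (by omega); omega
          · rcases Nat.lt_or_ge k n with h5 | h5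
            · have := B5 k (by omega) (by omega); omega
            · have hkn : k = n := by omega
              rw [hkn, E6]; omega
  have INJ : ∀ j k, 1 ≤ j → j < k → k ≤ n → f j ≠ f k := by
    intro j k hj hjk hk
    rcases Nat.lt_or_ge j (p0 + 1) with hj1 | hj1
    · have bj := B1 j hj (by omega)
      rcases Nat.lt_or_ge k (p0 + 1) with hk1 | hk1
      · have bk := B1 k (by omega) (by omega)
        rw [E1 j (by omega), E1 k (by omega)]
        have hsep := canon_sep (n := n) (S := S) hj hjk hk
        have h3 := hF j hj (by omega)
        have h4 := hF k (by omega) hk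
        have h5 := hF1 j hj (by omega)
        have h6 := hF1 k (by omega) (by omega)
        rcases hsep with ⟨e1, e2⟩ | ⟨e1, e2⟩
        · rw [e1, e2]; omega
        · omega
      · rcases Nat.eq_or_lt_of_le hk1 with hk2 | hk2
        · rw [← hk2, E2]; omega
        · rcases Nat.lt_or_ge k (q0 + 1) with hk3 | hk3
          · have bk := B3 k (by omega) (by omega); omega
          · rcases Nat.lt_or_ge k (mx + 1) with hk4 | hk4
            · have bk := B4 k (by omega) (by omega); omega
            · rcases Nat.lt_or_ge k n with hk5 | hk5
              · have bk := B5 k (by omega) (by omega); omega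
              · have hkn : k = n := by omega
                rw [hkn, E6]; omega
    · rcases Nat.eq_or_lt_of_le hj1 with hj2 | hj2
      · rw [← hj2, E2]
        rcases Nat.lt_or_ge k (q0 + 1) with hk3 | hk3
        · have bk := B3 k (by omega) (by omega); omega
        · rcases Nat.lt_or_ge k (mx + 1) with hk4 | hk4
          · have bk := B4 k (by omega) (by omega); omega
          · rcases Nat.lt_or_ge k n with hk5 | hk5
            · have bk := B5 k (by omega) (by omega); omega
            · have hkn : k = n := by omega
              rw [hkn, E6]; omega
      · rcases Nat.lt_or_ge j (q0 + 1) with hj3 | hj3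
        · have bj := B3 j (by omega) (by omega)
          rcases Nat.lt_or_ge k (q0 + 1) with hk3 | hk3
          · rw [E3 j (by omega) (by omega), E3 k (by omega) (by omega)]; omega
          · rcases Nat.lt_or_ge k (mx + 1) with hk4 | hk4
            · have bk := B4 k (by omega) (by omega); omega
            · rcases Nat.lt_or_ge k n with hk5 | hk5
              · have bk := B5 k (by omega) (by omega); omega
              · have hkn : k = n := by omega
                rw [hkn, E6]; omega
        · rcases Nat.lt_or_ge j (mx + 1) with hj4 | hj4
          · have bj := B4 j (by omega) (by omega)
            rcases Nat.lt_or_ge k (mx + 1) with hk4 | hk4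
            · have bk := B4 k (by omega) (by omega)
              rw [E4 j (by omega) (by omega), E4 k (by omega) (by omega)]
              have hsep := canon_sep (n := n) (S := S) (by omega : 1 ≤ j) hjk hk
              have h3 := hF j (by omega) (by omega)
              have h4 := hF k (by omega) hk
              have h5 := hF4 j (by omega) (by omega)
              have h6 := hF4 k (by omega) (by omega)
              rcases hsep with ⟨e1, e2⟩ | ⟨e1, e2⟩
              · rw [e1, e2]; omega
              · omega
            · rcases Nat.lt_or_ge k n with hk5 | hk5
              · have bk := B5 k (by omega) (by omega); omega
              · have hkn : k = n := by omega
                rw [hkn, E6]; omega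
          · have bj := B5 j (by omega) (by omega)
            rcases Nat.lt_or_ge k n with hk5 | hk5
            · rw [E5 j (by omega) (by omega), E5 k (by omega) (by omega)]; omega
            · have hkn : k = n := by omega
              rw [hkn, E6]; omega
  have DES : ∀ k, 1 ≤ k → k ≤ n - 1 → (f (k + 1) < f k ↔ k ∈ S) := by
    intro k hk1 hk2
    rcases Nat.lt_or_ge k p0 with h | h
    · have h3 := hF k hk1 (by omega)
      have h4 := hF (k + 1) (by omega) (by omega)
      have h5 := hF1 k hk1 (by omega)
      have h6 := hF1 (k + 1) (by omega) (by omega)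
      rw [E1 k (by omega), E1 (k + 1) (by omega)]
      by_cases hkS : k ∈ S
      · have e1 : nnext n S k = k := nnext_eq_of_mem hkS (by omega)
        have e2 : pprev S (k + 1) = k := pprev_succ_of_mem hkS
        rw [e1, e2]
        simp only [hkS, iff_true]
        omega
      · have e1 : nnext n S (k + 1) = nnext n S k := nnext_succ_of_notMem hkS
        have e2 : pprev S (k + 1) = pprev S k := pprev_succ_of_notMem hkS
        rw [e1, e2]
        simp only [hkS, iff_false, not_lt]
        omega
    · rcases Nat.eq_or_lt_of_le h with h' | h'
      · -- h' : p0 = k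
        have hp0' : p0 ∈ S := by
          rcases hp0S with h0 | h0
          · omega
          · exact h0
        have hkS : k ∈ S := h' ▸ hp0'
        have bk := B1 k hk1 (by omega)
        have e := E2
        rw [h'] at e
        rw [e]
        simp only [hkS, iff_true]
        omega
      · rcases Nat.eq_or_lt_of_le h' with h2 | h2
        · -- h2 : p0 + 1 = k
          have hkS : k ∉ S := hint k (by omega) (by omega)
          have e := E3 (k + 1) (by omega) (by omega)
          have h2' : p0 + 1 = k := h2
          have e2 := E2
          rw [h2'] at e2
          rw [e, e2]
          simp only [hkS, iff_false, not_lt]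
          omega
        · rcases Nat.lt_or_ge k q0 with h3 | h3
          · have hkS : k ∉ S := hint k (by omega) (by omega)
            rw [E3 k (by omega) (by omega), E3 (k + 1) (by omega) (by omega)]
            simp only [hkS, iff_false, not_lt]
            omega
          · rcases Nat.eq_or_lt_of_le h3 with h4 | h4
            · -- h4 : q0 = k
              have e0 : f k = n - (q0 - p0) - 1 + (k - p0) := E3 k (by omega) (by omega)
              have hkS : k ∈ S := h4 ▸ hq0
              simp only [hkS, iff_true]
              rcases Nat.lt_or_ge k mx with h5 | h5
              · have bk := B4 (k + 1) (by omega) (by omega)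
                omega
              · have bk := B5 (k + 1) (by omega) (by omega)
                omega
            · rcases Nat.lt_or_ge k mx with h5 | h5
              · have h3' := hF k (by omega) (by omega)
                have h4' := hF (k + 1) (by omega) (by omega)
                have h5' := hF4 k (by omega) (by omega)
                have h6' := hF4 (k + 1) (by omega) (by omega)
                rw [E4 k (by omega) (by omega), E4 (k + 1) (by omega) (by omega)]
                by_cases hkS : k ∈ S
                · have e1 : nnext n S k = k := nnext_eq_of_mem hkS (by omega)
                  have e2 : pprev S (k + 1) = k := pprev_succ_of_mem hkS
                  rw [e1, e2]
                  simp only [hkS, iff_true]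
                  omega
                · have e1 : nnext n S (k + 1) = nnext n S k := nnext_succ_of_notMem hkS
                  have e2 : pprev S (k + 1) = pprev S k := pprev_succ_of_notMem hkS
                  rw [e1, e2]
                  simp only [hkS, iff_false, not_lt]
                  omega
              · rcases Nat.eq_or_lt_of_le h5 with h6 | h6
                · -- h6 : mx = k
                  have bj := B4 k (by omega) (by omega)
                  rw [E5 (k + 1) (by omega) (by omega)]
                  have hkS : k ∈ S := h6 ▸ hmxS
                  simp only [hkS, iff_true]
                  omega
                · have hkS : k ∉ S := fun hc => by have := hSmx k hc; omega
                  simp only [hkS, iff_false, not_lt]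
                  rcases Nat.lt_or_ge (k + 1) n with h7 | h7
                  · rw [E5 k (by omega) (by omega), E5 (k + 1) (by omega) (by omega)]
                    omega
                  · have hkk : k + 1 = n := by omega
                    rw [hkk, E6, E5 k (by omega) (by omega)]
                    omega
  -- extremal value locations
  have hA : ∀ k, 1 ≤ k → k ≤ n → (f k = 1 → k = p0 + 1) ∧ (f k ≤ n - 1 ∨ k = n) := by
    intro k h1 h2
    rcases Nat.lt_or_ge k (p0 + 1) with h | h
    · have := B1 k h1 (by omega)
      exact ⟨by omega, Or.inl (by omega)⟩
    · rcases Nat.eq_or_lt_of_le h with h' | h'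
      · rw [← h', E2]
        exact ⟨fun _ => rfl, Or.inl (by omega)⟩
      · rcases Nat.lt_or_ge k (q0 + 1) with h'' | h''
        · have := B3 k (by omega) (by omega)
          exact ⟨by omega, Or.inl (by omega)⟩
        · rcases Nat.lt_or_ge k (mx + 1) with h3 | h3
          · have := B4 k (by omega) (by omega)
            exact ⟨by omega, Or.inl (by omega)⟩
          · rcases Nat.lt_or_ge k n with h5 | h5
            · have := B5 k (by omega) (by omega)
              exact ⟨by omega, Or.inl (by omega)⟩
            · have hk : k = n := by omega
              rw [hk, E6]
              exact ⟨by omega, Or.inr rfl⟩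
  have hperm : IsPermOn n f := by
    apply isPermOn_of
    · intro x hx
      simp only [Set.mem_Icc] at hx ⊢
      exact hmem x hx.1 hx.2
    · intro a ha b hb hab
      simp only [Set.mem_Icc] at ha hb
      by_contra hne
      rcases lt_trichotomy a b with h | h | h
      · exact INJ a b ha.1 h hb.2 hab
      · exact hne h
      · exact INJ b a hb.1 h ha.2 hab.symm
  have hdesc : DescentSet n f = S := descentSet_eq S DES hsub
  have hc2 : 2 ≤ n - mx := by omega
  have hcn : (n - mx) + 2 ≤ n := by omega
  set c := n - mx with hcdef
  set g : ℕ → ℕ := fun k => phiC n c (f k) with hgdef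
  have hgperm : IsPermOn n g := by
    apply isPermOn_of
    · intro x hx
      simp only [Set.mem_Icc] at hx ⊢
      have := hmem x hx.1 hx.2
      exact phiC_mem hc2 hcn this.1 this.2
    · intro a ha b hb hab
      simp only [Set.mem_Icc] at ha hb
      have h1 := hmem a ha.1 ha.2
      have h2 := hmem b hb.1 hb.2
      have h3 : f a = f b := phiC_injOn hc2 hcn h1.1 h1.2 h2.1 h2.2 hab
      by_contra hne
      rcases lt_trichotomy a b with h | h | h
      · exact INJ a b ha.1 h hb.2 h3
      · exact hne h
      · exact INJ b a hb.1 h ha.2 h3.symm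
  have hgdes : DescentSet n g = S := by
    apply descentSet_eq S _ hsub
    intro k h1 h2
    rw [← DES k h1 h2]
    have hv := hmem k h1 (by omega)
    have hw := hmem (k + 1) (by omega) (by omega)
    have hA1 := hA k h1 (by omega)
    have hA2 := hA (k + 1) (by omega) (by omega)
    apply phiC_lt_iff hc2 hcn hv.1 hv.2 hw.1 hw.2
    · exact INJ k (k + 1) h1 (by omega) (by omega)
    · intro hfk
      have hk' : k = p0 + 1 := hA1.1 hfk
      have he : f (k + 1) = n - (q0 - p0) - 1 + (k + 1 - p0) := by
        apply E3 <;> omega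
      omega
    · intro hfk
      have hk' : k + 1 = p0 + 1 := hA2.1 hfk
      have := B1 k h1 (by omega)
      omega
    · intro hfk
      rcases hA1.2 with h | h <;> omega
    · intro hfk
      have hk' : k + 1 = n := by rcases hA2.2 with h | h <;> omega
      have he : f k = k - mx + 1 := E5 k (by omega) (by omega)
      omega
  refine ⟨f, ⟨hperm, hdesc⟩, g, ⟨hgperm, hgdes⟩, ?_⟩
  intro k hk
  rw [Finset.mem_Icc] at hk
  have := hmem k hk.1 hk.2
  exact (phiC_ne hc2 hcn this.1 this.2).symm
/-- case I' permutation: `{1} ∪ top block` on the first run,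
`bottom ∪ {n}` on the long run ending at q0 (q0 ∈ S or q0 = n). -/
def sigIp (n mn p0 q0 : ℕ) (S : Finset ℕ) (k : ℕ) : ℕ :=
  if k = 1 then 1
  else if k ≤ mn then n - mn + k - 1
  else if k ≤ p0 then n - nnext n S k + (k - pprev S k)
  else if k < q0 then k - p0 + 1
  else if k = q0 then n
  else (q0 - p0) + (n - nnext n S k) + (k - pprev S k)

set_option maxHeartbeats 1600000 in
lemma caseIp {n : ℕ} {S : Finset ℕ} (hsub : S ⊆ Finset.Icc 1 (n - 1))
    {q0 : ℕ} (hq0 : q0 ∈ S ∨ q0 = n) (hp01 : 1 ≤ pprev S q0)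
    (hlong : pprev S q0 + 2 ≤ q0) (h1S : 1 ∉ S) :
    ∃ σ ∈ DSn n S, ∃ ρ ∈ DSn n S, ∀ k ∈ Finset.Icc 1 n, σ k ≠ ρ k := by
  classical
  set p0 := pprev S q0 with hp0def
  set mn := nnext n S 1 with hmndef
  have hp0S : p0 ∈ S := by
    rcases pprev_mem (S := S) (k := q0) with h | h
    · omega
    · exact h
  have hp0r : 1 ≤ p0 ∧ p0 ≤ n - 1 := Finset.mem_Icc.1 (hsub hp0S)
  have hq0n : q0 ≤ n := by
    rcases hq0 with h | h
    · have := Finset.mem_Icc.1 (hsub h); omega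
    · omega
  have hmnp0 : mn ≤ p0 := nnext_le hp0S (by omega)
  have hmnS : mn ∈ S := by
    rcases nnext_mem (n := n) (S := S) (k := 1) with h | h
    · omega
    · exact h
  have hmn2 : 2 ≤ mn := by
    have := Finset.mem_Icc.1 (hsub hmnS)
    rcases Nat.eq_or_lt_of_le this.1 with h | h
    · exact absurd (h ▸ hmnS) h1S
    · omega
  have hSmn : ∀ s ∈ S, mn ≤ s := fun s hs =>
    nnext_le hs (by have := Finset.mem_Icc.1 (hsub hs); omega)
  have hn4 : 4 ≤ n := by omega
  have hp0n2 : p0 ≤ n - 2 := by omega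
  have hint : ∀ x, p0 < x → x < q0 → x ∉ S := fun x h1 h2 => notMem_of_pprev_lt h1 h2
  have hF : ∀ k, 1 ≤ k → k ≤ n → pprev S k < k ∧ k ≤ nnext n S k ∧ nnext n S k ≤ n :=
    fun k h1 h2 => ⟨pprev_lt h1, le_nnext h2, nnext_le_n⟩
  have hF3 : ∀ k, mn < k → k ≤ p0 → mn ≤ pprev S k ∧ nnext n S k ≤ p0 := fun k h1 h2 =>
    ⟨le_pprev hmnS h1, nnext_le hp0S h2⟩
  have hF6 : ∀ k, q0 < k → k ≤ n → q0 ≤ pprev S k := by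
    intro k h1 h2
    have hq0S : q0 ∈ S := by
      rcases hq0 with h | h
      · exact h
      · omega
    exact le_pprev hq0S h1
  set f := sigIp n mn p0 q0 S with hfdef
  have E1 : f 1 = 1 := by
    show sigIp n mn p0 q0 S 1 = _
    unfold sigIp; rw [if_pos rfl]
  have E2 : ∀ k, 2 ≤ k → k ≤ mn → f k = n - mn + k - 1 := by
    intro k h1 h2; show sigIp n mn p0 q0 S k = _
    unfold sigIp; rw [if_neg (by omega), if_pos h2]
  have E3 : ∀ k, mn < k → k ≤ p0 → f k = n - nnext n S k + (k - pprev S k) := by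
    intro k h1 h2; show sigIp n mn p0 q0 S k = _
    unfold sigIp; rw [if_neg (by omega), if_neg (by omega), if_pos h2]
  have E4 : ∀ k, p0 < k → k < q0 → f k = k - p0 + 1 := by
    intro k h1 h2; show sigIp n mn p0 q0 S k = _
    unfold sigIp; rw [if_neg (by omega), if_neg (by omega), if_neg (by omega), if_pos h2]
  have E5 : f q0 = n := by
    show sigIp n mn p0 q0 S q0 = _
    unfold sigIp
    rw [if_neg (by omega), if_neg (by omega), if_neg (by omega), if_neg (by omega), if_pos rfl]
  have E6 : ∀ k, q0 < k → k ≤ n →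
      f k = (q0 - p0) + (n - nnext n S k) + (k - pprev S k) := by
    intro k h1 h2; show sigIp n mn p0 q0 S k = _
    unfold sigIp
    rw [if_neg (by omega), if_neg (by omega), if_neg (by omega), if_neg (by omega),
      if_neg (by omega)]
  have B2 : ∀ k, 2 ≤ k → k ≤ mn → n - mn + 1 ≤ f k ∧ f k ≤ n - 1 := by
    intro k h1 h2
    rw [E2 k h1 h2]; omega
  have B3 : ∀ k, mn < k → k ≤ p0 → n - p0 + 1 ≤ f k ∧ f k ≤ n - mn := by
    intro k h1 h2
    have h3 := hF k (by omega) (by omega)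
    have h4 := hF3 k h1 h2
    rw [E3 k h1 h2]; omega
  have B4 : ∀ k, p0 < k → k < q0 → 2 ≤ f k ∧ f k ≤ q0 - p0 := by
    intro k h1 h2
    rw [E4 k h1 h2]; omega
  have B6 : ∀ k, q0 < k → k ≤ n → (q0 - p0) + 1 ≤ f k ∧ f k ≤ n - p0 := by
    intro k h1 h2
    have h3 := hF k (by omega) h2
    have h4 := hF6 k h1 h2
    rw [E6 k h1 h2]; omega
  have hmem : ∀ k, 1 ≤ k → k ≤ n → 1 ≤ f k ∧ f k ≤ n := by
    intro k h1 h2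
    rcases Nat.eq_or_lt_of_le h1 with h | h
    · rw [← h, E1]; omega
    · rcases Nat.lt_or_ge k (mn + 1) with h' | h'
      · have := B2 k (by omega) (by omega); omega
      · rcases Nat.lt_or_ge k (p0 + 1) with h'' | h''
        · have := B3 k (by omega) (by omega); omega
        · rcases Nat.lt_or_ge k q0 with h3 | h3
          · have := B4 k (by omega) h3; omega
          · rcases Nat.eq_or_lt_of_le h3 with h4 | h4
            · rw [← h4, E5]; omega
            · have := B6 k h4 h2; omega
  have INJ : ∀ j k, 1 ≤ j → j < k → k ≤ n → f j ≠ f k := by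
    intro j k hj hjk hk
    have hzk : ∀ m, 1 ≤ m → m ≤ n → m ≠ 1 → m ≠ q0 →
        (2 ≤ m ∧ m ≤ mn ∧ n - mn + 1 ≤ f m ∧ f m ≤ n - 1) ∨
        (mn < m ∧ m ≤ p0 ∧ n - p0 + 1 ≤ f m ∧ f m ≤ n - mn) ∨
        (p0 < m ∧ m < q0 ∧ 2 ≤ f m ∧ f m ≤ q0 - p0) ∨
        (q0 < m ∧ m ≤ n ∧ (q0 - p0) + 1 ≤ f m ∧ f m ≤ n - p0) := by
      intro m h1 h2 h3 h4
      rcases Nat.lt_or_ge m (mn + 1) with h' | h'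
      · have := B2 m (by omega) (by omega)
        exact Or.inl ⟨by omega, by omega, this.1, this.2⟩
      · rcases Nat.lt_or_ge m (p0 + 1) with h'' | h''
        · have := B3 m (by omega) (by omega)
          exact Or.inr (Or.inl ⟨by omega, by omega, this.1, this.2⟩)
        · rcases Nat.lt_or_ge m q0 with h5 | h5
          · have := B4 m (by omega) h5
            exact Or.inr (Or.inr (Or.inl ⟨by omega, h5, this.1, this.2⟩))
          · have h6 : q0 < m := by omega
            have := B6 m h6 h2
            exact Or.inr (Or.inr (Or.inr ⟨h6, h2, this.1, this.2⟩))
    rcases Nat.eq_or_lt_of_le hj with hj1 | hj1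
    · -- j = 1
      rw [← hj1, E1]
      by_cases hkq : k = q0
      · rw [hkq, E5]; omega
      · rcases hzk k (by omega) hk (by omega) hkq with h | h | h | h <;> omega
    · by_cases hjq : j = q0
      · rw [hjq, E5]
        by_cases hkq : k = q0
        · omega
        · rcases hzk k (by omega) hk (by omega) hkq with h | h | h | h <;> omega
      · by_cases hkq : k = q0
        · rw [hkq, E5]
          rcases hzk j (by omega) (by omega) (by omega) hjq with h | h | h | h <;> omega
        · rcases hzk j (by omega) (by omega) (by omega) hjq with h1 | h1 | h1 | h1 <;>
            rcases hzk k (by omega) hk (by omega) hkq with h2 | h2 | h2 | h2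
          -- same-zone Z2/Z2: linear
          · rw [E2 j (by omega) (by omega), E2 k (by omega) (by omega)]; omega
          · omega
          · omega
          · omega
          · omega
          -- Z3/Z3 canonical
          · rw [E3 j (by omega) (by omega), E3 k (by omega) (by omega)]
            have hsep := canon_sep (n := n) (S := S) (by omega : 1 ≤ j) hjk hk
            have h3 := hF j (by omega) (by omega)
            have h4 := hF k (by omega) hk
            have h5 := hF3 j (by omega) (by omega)
            have h6 := hF3 k (by omega) (by omega)
            rcases hsep with ⟨e1, e2⟩ | ⟨e1, e2⟩
            · rw [e1, e2]; omega
            · omega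
          · omega
          · omega
          · omega
          · omega
          -- Z4/Z4 linear
          · rw [E4 j (by omega) (by omega), E4 k (by omega) (by omega)]; omega
          · omega
          · omega
          · omega
          · omega
          -- Z6/Z6 canonical
          · rw [E6 j (by omega) (by omega), E6 k (by omega) (by omega)]
            have hsep := canon_sep (n := n) (S := S) (by omega : 1 ≤ j) hjk hk
            have h3 := hF j (by omega) (by omega)
            have h4 := hF k (by omega) hk
            have h5 := hF6 j (by omega) (by omega)
            have h6 := hF6 k (by omega) (by omega)
            rcases hsep with ⟨e1, e2⟩ | ⟨e1, e2⟩
            · rw [e1, e2]; omega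
            · omega
  have DES : ∀ k, 1 ≤ k → k ≤ n - 1 → (f (k + 1) < f k ↔ k ∈ S) := by
    intro k hk1 hk2
    rcases Nat.eq_or_lt_of_le hk1 with h | h
    · -- k = 1
      have e2 : f (1 + 1) = n - mn + (1 + 1) - 1 := E2 (1 + 1) (by omega) (by omega)
      rw [← h, E1, e2]
      simp only [h1S, iff_false, not_lt]
      omega
    · rcases Nat.lt_or_ge k mn with h2 | h2
      · -- 2 ≤ k < mn : zone2 internal
        have hkS : k ∉ S := fun hc => by have := hSmn k hc; omega
        rw [E2 k (by omega) (by omega), E2 (k + 1) (by omega) (by omega)]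
        simp only [hkS, iff_false, not_lt]
        omega
      · rcases Nat.eq_or_lt_of_le h2 with h3 | h3
        · -- h3 : mn = k
          have hkS : k ∈ S := h3 ▸ hmnS
          have ej : f k = n - mn + k - 1 := E2 k (by omega) (by omega)
          simp only [hkS, iff_true]
          rcases Nat.lt_or_ge k p0 with h4 | h4
          · have := B3 (k + 1) (by omega) (by omega)
            omega
          · -- mn = p0 = k, k+1 in zone4 (p0 + 1 < q0)
            have := B4 (k + 1) (by omega) (by omega)
            omega
        · rcases Nat.lt_or_ge k p0 with h4 | h4
          · -- mn < k < p0 : zone3 internal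
            have h3' := hF k (by omega) (by omega)
            have h4' := hF (k + 1) (by omega) (by omega)
            have h5' := hF3 k (by omega) (by omega)
            have h6' := hF3 (k + 1) (by omega) (by omega)
            rw [E3 k (by omega) (by omega), E3 (k + 1) (by omega) (by omega)]
            by_cases hkS : k ∈ S
            · have e1 : nnext n S k = k := nnext_eq_of_mem hkS (by omega)
              have e2 : pprev S (k + 1) = k := pprev_succ_of_mem hkS
              rw [e1, e2]
              simp only [hkS, iff_true]
              omega
            · have e1 : nnext n S (k + 1) = nnext n S k := nnext_succ_of_notMem hkS
              have e2 : pprev S (k + 1) = pprev S k := pprev_succ_of_notMem hkS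
              rw [e1, e2]
              simp only [hkS, iff_false, not_lt]
              omega
          · rcases Nat.eq_or_lt_of_le h4 with h5 | h5
            · -- h5 : p0 = k (with mn < k)
              have hkS : k ∈ S := h5 ▸ hp0S
              have bj := B3 k (by omega) (by omega)
              have e2 : f (k + 1) = (k + 1) - p0 + 1 := E4 (k + 1) (by omega) (by omega)
              rw [e2]
              simp only [hkS, iff_true]
              omega
            · rcases Nat.lt_or_ge (k + 1) q0 with h6 | h6
              · -- p0 < k < k+1 < q0 : zone4 internal
                have hkS : k ∉ S := hint k (by omega) (by omega)
                rw [E4 k (by omega) (by omega), E4 (k + 1) (by omega) (by omega)]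
                simp only [hkS, iff_false, not_lt]
                omega
              · rcases Nat.eq_or_lt_of_le h6 with h7 | h7
                · -- k + 1 = q0
                  have hkS : k ∉ S := hint k (by omega) (by omega)
                  have e1 : f k = k - p0 + 1 := E4 k (by omega) (by omega)
                  have e2 : f (k + 1) = n := by rw [← h7]; exact E5
                  rw [e1, e2]
                  simp only [hkS, iff_false, not_lt]
                  omega
                · rcases Nat.eq_or_lt_of_le (by omega : q0 ≤ k) with h8 | h8
                  · -- h8 : q0 = k
                    have hq0S : q0 ∈ S := by
                      rcases hq0 with hh | hh
                      · exact hh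
                      · omega
                    have hkS : k ∈ S := h8 ▸ hq0S
                    have e1 : f k = n := by rw [← h8, E5]
                    have := B6 (k + 1) (by omega) (by omega)
                    rw [e1]
                    simp only [hkS, iff_true]
                    omega
                  · -- q0 < k : zone6 internal
                    have h3' := hF k (by omega) (by omega)
                    have h4' := hF (k + 1) (by omega) (by omega)
                    have h5' := hF6 k (by omega) (by omega)
                    have h6' := hF6 (k + 1) (by omega) (by omega)
                    rw [E6 k (by omega) (by omega), E6 (k + 1) (by omega) (by omega)]
                    by_cases hkS : k ∈ S
                    · have e1 : nnext n S k = k := nnext_eq_of_mem hkS (by omega)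
                      have e2 : pprev S (k + 1) = k := pprev_succ_of_mem hkS
                      rw [e1, e2]
                      simp only [hkS, iff_true]
                      omega
                    · have e1 : nnext n S (k + 1) = nnext n S k := nnext_succ_of_notMem hkS
                      have e2 : pprev S (k + 1) = pprev S k := pprev_succ_of_notMem hkS
                      rw [e1, e2]
                      simp only [hkS, iff_false, not_lt]
                      omega
  have hA : ∀ k, 1 ≤ k → k ≤ n → (f k = 1 → k = 1) ∧ (f k = n → k = q0) := by
    intro k h1 h2
    rcases Nat.eq_or_lt_of_le h1 with h | h
    · rw [← h, E1]
      exact ⟨fun _ => rfl, by omega⟩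
    · by_cases hkq : k = q0
      · rw [hkq, E5]
        exact ⟨by omega, fun _ => rfl⟩
      · rcases Nat.lt_or_ge k (mn + 1) with h' | h'
        · have := B2 k (by omega) (by omega)
          exact ⟨by omega, by omega⟩
        · rcases Nat.lt_or_ge k (p0 + 1) with h'' | h''
          · have := B3 k (by omega) (by omega)
            exact ⟨by omega, by omega⟩
          · rcases Nat.lt_or_ge k q0 with h3 | h3
            · have := B4 k (by omega) h3
              exact ⟨by omega, by omega⟩
            · have := B6 k (by omega) h2
              exact ⟨by omega, by omega⟩
  have hperm : IsPermOn n f := by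
    apply isPermOn_of
    · intro x hx
      simp only [Set.mem_Icc] at hx ⊢
      exact hmem x hx.1 hx.2
    · intro a ha b hb hab
      simp only [Set.mem_Icc] at ha hb
      by_contra hne
      rcases lt_trichotomy a b with h | h | h
      · exact INJ a b ha.1 h hb.2 hab
      · exact hne h
      · exact INJ b a hb.1 h ha.2 hab.symm
  have hdesc : DescentSet n f = S := descentSet_eq S DES hsub
  have hc2 : 2 ≤ n - mn := by omega
  have hcn : (n - mn) + 2 ≤ n := by omega
  set c := n - mn with hcdef
  set g : ℕ → ℕ := fun k => phiC n c (f k) with hgdef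
  have hgperm : IsPermOn n g := by
    apply isPermOn_of
    · intro x hx
      simp only [Set.mem_Icc] at hx ⊢
      have := hmem x hx.1 hx.2
      exact phiC_mem hc2 hcn this.1 this.2
    · intro a ha b hb hab
      simp only [Set.mem_Icc] at ha hb
      have h1 := hmem a ha.1 ha.2
      have h2 := hmem b hb.1 hb.2
      have h3 : f a = f b := phiC_injOn hc2 hcn h1.1 h1.2 h2.1 h2.2 hab
      by_contra hne
      rcases lt_trichotomy a b with h | h | h
      · exact INJ a b ha.1 h hb.2 h3
      · exact hne h
      · exact INJ b a hb.1 h ha.2 h3.symm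
  have hgdes : DescentSet n g = S := by
    apply descentSet_eq S _ hsub
    intro k h1 h2
    rw [← DES k h1 h2]
    have hv := hmem k h1 (by omega)
    have hw := hmem (k + 1) (by omega) (by omega)
    have hA1 := hA k h1 (by omega)
    have hA2 := hA (k + 1) (by omega) (by omega)
    apply phiC_lt_iff hc2 hcn hv.1 hv.2 hw.1 hw.2
    · exact INJ k (k + 1) h1 (by omega) (by omega)
    · intro hfk
      have hk' : k = 1 := hA1.1 hfk
      have he : f (k + 1) = n - mn + (k + 1) - 1 := E2 (k + 1) (by omega) (by omega)
      omega
    · intro hfk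
      have hk' : k + 1 = 1 := hA2.1 hfk
      omega
    · intro hfk
      have hk' : k = q0 := hA1.2 hfk
      have := B6 (k + 1) (by omega) (by omega)
      omega
    · intro hfk
      have hk' : k + 1 = q0 := hA2.2 hfk
      have he : f k = k - p0 + 1 := E4 k (by omega) (by omega)
      omega
  refine ⟨f, ⟨hperm, hdesc⟩, g, ⟨hgperm, hgdes⟩, ?_⟩
  intro k hk
  rw [Finset.mem_Icc] at hk
  have := hmem k hk.1 hk.2
  exact (phiC_ne hc2 hcn this.1 this.2).symm

def sigBL (n j k : ℕ) : ℕ := if k ≤ j then n + 1 - k else k - j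
def rhoBL (n j k : ℕ) : ℕ := if k ≤ j + 1 then j + 2 - k else k
def sigBR (n i k : ℕ) : ℕ := if k ≤ i then n - i + k else n + 1 - k
def rhoBR (n i k : ℕ) : ℕ := if k + 1 ≤ i then k else n + i - k

lemma badL {n j : ℕ} (hn : 3 ≤ n) (hj1 : 1 ≤ j) (hj2 : j ≤ n - 2) :
    ∃ σ ∈ DSn n (Finset.Icc 1 j), ∃ ρ ∈ DSn n (Finset.Icc 1 j),
      σ (j + 1) = ρ (j + 1) ∧ ∀ k ∈ Finset.Icc 1 n, k ≠ j + 1 → σ k ≠ ρ k := by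
  have hsub : Finset.Icc 1 j ⊆ Finset.Icc 1 (n - 1) := by
    intro x hx; rw [Finset.mem_Icc] at *; omega
  refine ⟨sigBL n j, ⟨?_, ?_⟩, rhoBL n j, ⟨?_, ?_⟩, ?_, ?_⟩
  · apply isPermOn_of
    · intro x hx; simp only [Set.mem_Icc] at *; unfold sigBL; split_ifs <;> omega
    · intro a ha b hb hab
      simp only [Set.mem_Icc] at ha hb
      unfold sigBL at hab; split_ifs at hab <;> omega
  · apply descentSet_eq _ _ hsub
    intro k h1 h2
    rw [Finset.mem_Icc]
    unfold sigBL; split_ifs <;> omega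
  · apply isPermOn_of
    · intro x hx; simp only [Set.mem_Icc] at *; unfold rhoBL; split_ifs <;> omega
    · intro a ha b hb hab
      simp only [Set.mem_Icc] at ha hb
      unfold rhoBL at hab; split_ifs at hab <;> omega
  · apply descentSet_eq _ _ hsub
    intro k h1 h2
    rw [Finset.mem_Icc]
    unfold rhoBL; split_ifs <;> omega
  · unfold sigBL rhoBL; split_ifs <;> omega
  · intro k hk hkj
    rw [Finset.mem_Icc] at hk
    unfold sigBL rhoBL; split_ifs <;> omega

lemma badR {n i : ℕ} (hn : 3 ≤ n) (hi1 : 2 ≤ i) (hi2 : i ≤ n - 1) :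
    ∃ σ ∈ DSn n (Finset.Icc i (n - 1)), ∃ ρ ∈ DSn n (Finset.Icc i (n - 1)),
      σ i = ρ i ∧ ∀ k ∈ Finset.Icc 1 n, k ≠ i → σ k ≠ ρ k := by
  have hsub : Finset.Icc i (n - 1) ⊆ Finset.Icc 1 (n - 1) := by
    intro x hx; rw [Finset.mem_Icc] at *; omega
  refine ⟨sigBR n i, ⟨?_, ?_⟩, rhoBR n i, ⟨?_, ?_⟩, ?_, ?_⟩
  · apply isPermOn_of
    · intro x hx; simp only [Set.mem_Icc] at *; unfold sigBR; split_ifs <;> omega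
    · intro a ha b hb hab
      simp only [Set.mem_Icc] at ha hb
      unfold sigBR at hab; split_ifs at hab <;> omega
  · apply descentSet_eq _ _ hsub
    intro k h1 h2
    rw [Finset.mem_Icc]
    unfold sigBR; split_ifs <;> omega
  · apply isPermOn_of
    · intro x hx; simp only [Set.mem_Icc] at *; unfold rhoBR; split_ifs <;> omega
    · intro a ha b hb hab
      simp only [Set.mem_Icc] at ha hb
      unfold rhoBR at hab; split_ifs at hab <;> omega
  · apply descentSet_eq _ _ hsub
    intro k h1 h2
    rw [Finset.mem_Icc]
    unfold rhoBR; split_ifs <;> omega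
  · unfold sigBR rhoBR; split_ifs <;> omega
  · intro k hk hki
    rw [Finset.mem_Icc] at hk
    unfold sigBR rhoBR; split_ifs <;> omega

lemma forcedL {n j : ℕ} (hn : 3 ≤ n) (hj1 : 1 ≤ j) (hj2 : j ≤ n - 2) {σ : ℕ → ℕ}
    (hσ : σ ∈ DSn n (Finset.Icc 1 j)) : σ (j + 1) = 1 := by
  obtain ⟨hperm, hdesc⟩ := hσ
  have dec : ∀ k, 1 ≤ k → k ≤ j → σ (k + 1) < σ k := by
    intro k h1 h2
    have hk : k ∈ DescentSet n σ := by rw [hdesc]; exact Finset.mem_Icc.2 ⟨h1, h2⟩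
    exact (Finset.mem_filter.1 hk).2
  have asc : ∀ k, j + 1 ≤ k → k ≤ n - 1 → σ k < σ (k + 1) := by
    intro k h1 h2
    have hnot : k ∉ DescentSet n σ := by
      rw [hdesc]; rw [Finset.mem_Icc]; omega
    have h3 : ¬ (σ (k + 1) < σ k) := fun hc =>
      hnot (Finset.mem_filter.2 ⟨Finset.mem_Icc.2 ⟨by omega, h2⟩, hc⟩)
    have hne : σ k ≠ σ (k + 1) := by
      intro he
      have := hperm.injOn (Set.mem_Icc.2 ⟨by omega, by omega⟩)
        (Set.mem_Icc.2 ⟨by omega, by omega⟩) he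
      omega
    omega
  have down : ∀ d, d ≤ j → σ (j + 1) ≤ σ (j + 1 - d) := by
    intro d
    induction d with
    | zero => intro _; simp
    | succ d ih =>
      intro hd
      have h1 := ih (by omega)
      have h2 := dec (j - d) (by omega) (by omega)
      have e1 : j + 1 - d = (j - d) + 1 := by omega
      have e2 : j + 1 - (d + 1) = j - d := by omega
      rw [e1] at h1
      rw [e2]
      omega
  have up : ∀ d, j + 1 + d ≤ n → σ (j + 1) ≤ σ (j + 1 + d) := by
    intro d
    induction d with
    | zero => intro _; simp
    | succ d ih =>
      intro hd
      have h1 := ih (by omega)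
      have h2 := asc (j + 1 + d) (by omega) (by omega)
      have e1 : j + 1 + (d + 1) = (j + 1 + d) + 1 := by omega
      rw [e1]
      omega
  have hmin : ∀ m, 1 ≤ m → m ≤ n → σ (j + 1) ≤ σ m := by
    intro m h1 h2
    rcases le_or_gt m (j + 1) with h | h
    · have h3 := down (j + 1 - m) (by omega)
      have e : j + 1 - (j + 1 - m) = m := by omega
      rwa [e] at h3
    · have h3 := up (m - (j + 1)) (by omega)
      have e : j + 1 + (m - (j + 1)) = m := by omega
      rwa [e] at h3
  obtain ⟨m, hm, hm1⟩ := hperm.surjOn (Set.mem_Icc.2 ⟨le_rfl, by omega⟩ : (1 : ℕ) ∈ Set.Icc 1 n)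
  have hms := Set.mem_Icc.1 hm
  have h1 := hmin m hms.1 hms.2
  have h2 := hperm.mapsTo (Set.mem_Icc.2 ⟨by omega, by omega⟩ : (j + 1 : ℕ) ∈ Set.Icc 1 n)
  rw [Set.mem_Icc] at h2
  omega

lemma forcedR {n i : ℕ} (hn : 3 ≤ n) (hi1 : 2 ≤ i) (hi2 : i ≤ n - 1) {σ : ℕ → ℕ}
    (hσ : σ ∈ DSn n (Finset.Icc i (n - 1))) : σ i = n := by
  obtain ⟨hperm, hdesc⟩ := hσ
  have dec : ∀ k, i ≤ k → k ≤ n - 1 → σ (k + 1) < σ k := by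
    intro k h1 h2
    have hk : k ∈ DescentSet n σ := by rw [hdesc]; exact Finset.mem_Icc.2 ⟨h1, h2⟩
    exact (Finset.mem_filter.1 hk).2
  have asc : ∀ k, 1 ≤ k → k ≤ i - 1 → σ k < σ (k + 1) := by
    intro k h1 h2
    have hnot : k ∉ DescentSet n σ := by
      rw [hdesc]; rw [Finset.mem_Icc]; omega
    have h3 : ¬ (σ (k + 1) < σ k) := fun hc =>
      hnot (Finset.mem_filter.2 ⟨Finset.mem_Icc.2 ⟨by omega, by omega⟩, hc⟩)
    have hne : σ k ≠ σ (k + 1) := by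
      intro he
      have := hperm.injOn (Set.mem_Icc.2 ⟨by omega, by omega⟩)
        (Set.mem_Icc.2 ⟨by omega, by omega⟩) he
      omega
    omega
  have down : ∀ d, d ≤ i - 1 → σ (i - d) ≤ σ i := by
    intro d
    induction d with
    | zero => intro _; simp
    | succ d ih =>
      intro hd
      have h1 := ih (by omega)
      have h2 := asc (i - (d + 1)) (by omega) (by omega)
      have e1 : i - (d + 1) + 1 = i - d := by omega
      rw [e1] at h2
      omega
  have up : ∀ d, i + d ≤ n → σ (i + d) ≤ σ i := by
    intro d
    induction d with
    | zero => intro _; simp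
    | succ d ih =>
      intro hd
      have h1 := ih (by omega)
      have h2 := dec (i + d) (by omega) (by omega)
      have e1 : i + (d + 1) = (i + d) + 1 := by omega
      rw [e1]
      omega
  have hmax : ∀ m, 1 ≤ m → m ≤ n → σ m ≤ σ i := by
    intro m h1 h2
    rcases le_or_gt m i with h | h
    · have h3 := down (i - m) (by omega)
      have e : i - (i - m) = m := by omega
      rwa [e] at h3
    · have h3 := up (m - i) (by omega)
      have e : i + (m - i) = m := by omega
      rwa [e] at h3
  obtain ⟨m, hm, hm1⟩ := hperm.surjOn (Set.mem_Icc.2 ⟨by omega, le_rfl⟩ : (n : ℕ) ∈ Set.Icc 1 n)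
  have hms := Set.mem_Icc.1 hm
  have h1 := hmax m hms.1 hms.2
  have h2 := hperm.mapsTo (Set.mem_Icc.2 ⟨by omega, by omega⟩ : (i : ℕ) ∈ Set.Icc 1 n)
  rw [Set.mem_Icc] at h2
  omega

lemma eq_Icc_one_of_closed {n : ℕ} {S : Finset ℕ} (hsub : S ⊆ Finset.Icc 1 (n - 1))
    (hne : S.Nonempty) (hcl : ∀ q ∈ S, q = 1 ∨ q - 1 ∈ S) :
    S = Finset.Icc 1 (S.max' hne) := by
  have key : ∀ d q, q ∈ S → 1 ≤ q - d → q - d ∈ S := by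
    intro d
    induction d with
    | zero => intro q hq _; simpa using hq
    | succ d ih =>
      intro q hq h
      have h1 : q - d ∈ S := ih q hq (by omega)
      rcases hcl _ h1 with h2 | h2
      · omega
      · have e : q - (d + 1) = (q - d) - 1 := by omega
        rw [e]; exact h2
  ext x
  rw [Finset.mem_Icc]
  constructor
  · intro hx
    have := Finset.mem_Icc.1 (hsub hx)
    exact ⟨this.1, Finset.le_max' _ _ hx⟩
  · rintro ⟨h1, h2⟩
    have h3 := key (S.max' hne - x) (S.max' hne) (S.max'_mem hne) (by omega)
    have e : S.max' hne - (S.max' hne - x) = x := by omega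
    rwa [e] at h3

lemma eq_Icc_min_of_closed {n : ℕ} {S : Finset ℕ} (hn : 3 ≤ n)
    (hsub : S ⊆ Finset.Icc 1 (n - 1)) (hne : S.Nonempty)
    (hcl : ∀ q, (q ∈ S ∨ q = n) → S.min' hne < q → q - 1 ∈ S) :
    S = Finset.Icc (S.min' hne) (n - 1) := by
  have hmn := Finset.mem_Icc.1 (hsub (S.min'_mem hne))
  have hn1 : n - 1 ∈ S := by
    have := hcl n (Or.inr rfl) (by omega)
    exact this
  have key : ∀ d, (n - 1) - d ≥ S.min' hne → (n - 1) - d ∈ S := by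
    intro d
    induction d with
    | zero => intro _; simpa using hn1
    | succ d ih =>
      intro h
      have h1 : (n - 1) - d ∈ S := ih (by omega)
      have h2 := hcl _ (Or.inl h1) (by omega)
      have e : (n - 1) - (d + 1) = ((n - 1) - d) - 1 := by omega
      rw [e]; exact h2
  ext x
  rw [Finset.mem_Icc]
  constructor
  · intro hx
    have := Finset.mem_Icc.1 (hsub hx)
    exact ⟨Finset.min'_le _ _ hx, this.2⟩
  · rintro ⟨h1, h2⟩
    have h3 := key ((n - 1) - x) (by omega)
    have e : (n - 1) - ((n - 1) - x) = x := by omega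
    rwa [e] at h3


lemma pprev_eq_pred {S : Finset ℕ} {q : ℕ} (hq : 1 ≤ q) (h1 : ¬ pprev S q + 2 ≤ q) :
    pprev S q = q - 1 := by
  have := pprev_lt (S := S) hq
  omega

lemma get_conj1 {n : ℕ} {S : Finset ℕ} (hsub : S ⊆ Finset.Icc 1 (n - 1))
    (hne : S.Nonempty) (h1 : 1 ∉ S) : ∃ q ∈ S, pprev S q + 2 ≤ q := by
  by_contra hcon
  push_neg at hcon
  have hcl : ∀ q ∈ S, q = 1 ∨ q - 1 ∈ S := by
    intro q hq
    have hq1 : 1 ≤ q := (Finset.mem_Icc.1 (hsub hq)).1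
    have he : pprev S q = q - 1 := pprev_eq_pred hq1 (by have := hcon q hq; omega)
    rcases pprev_mem (S := S) (k := q) with h3 | h3
    · left; omega
    · right; rwa [he] at h3
  have heq := eq_Icc_one_of_closed hsub hne hcl
  have hmax1 : 1 ≤ S.max' hne := (Finset.mem_Icc.1 (hsub (S.max'_mem hne))).1
  have : (1 : ℕ) ∈ S := by
    rw [heq]; exact Finset.mem_Icc.2 ⟨le_rfl, hmax1⟩
  exact h1 this

lemma get_conj1' {n : ℕ} {S : Finset ℕ} (hsub : S ⊆ Finset.Icc 1 (n - 1))
    (hne : S.Nonempty)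
    (hnb : ¬ ∃ i j, S = Finset.Icc i j ∧ (i = 1 ∨ j = n - 1)) :
    ∃ q ∈ S, pprev S q + 2 ≤ q := by
  by_contra hcon
  push_neg at hcon
  have hcl : ∀ q ∈ S, q = 1 ∨ q - 1 ∈ S := by
    intro q hq
    have hq1 : 1 ≤ q := (Finset.mem_Icc.1 (hsub hq)).1
    have he : pprev S q = q - 1 := pprev_eq_pred hq1 (by have := hcon q hq; omega)
    rcases pprev_mem (S := S) (k := q) with h3 | h3
    · left; omega
    · right; rwa [he] at h3
  exact hnb ⟨1, S.max' hne, eq_Icc_one_of_closed hsub hne hcl, Or.inl rfl⟩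

lemma get_conj2 {n : ℕ} {S : Finset ℕ} (hn : 3 ≤ n) (hsub : S ⊆ Finset.Icc 1 (n - 1))
    (hne : S.Nonempty)
    (hnb : ¬ ∃ i j, S = Finset.Icc i j ∧ (i = 1 ∨ j = n - 1)) :
    ∃ q, (q ∈ S ∨ q = n) ∧ 1 ≤ pprev S q ∧ pprev S q + 2 ≤ q := by
  by_contra hcon
  push_neg at hcon
  have hmn := Finset.mem_Icc.1 (hsub (S.min'_mem hne))
  have hcl : ∀ q, (q ∈ S ∨ q = n) → S.min' hne < q → q - 1 ∈ S := by
    intro q hq hlt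
    have hp1 : 1 ≤ pprev S q := le_trans hmn.1 (le_pprev (S.min'_mem hne) hlt)
    have h2 := hcon q hq hp1
    have he : pprev S q = q - 1 := pprev_eq_pred (by omega) (by omega)
    rcases pprev_mem (S := S) (k := q) with h3 | h3
    · omega
    · rwa [he] at h3
  exact hnb ⟨S.min' hne, n - 1, eq_Icc_min_of_closed hn hsub hne hcl, Or.inr rfl⟩


end S2

open S2 in
/-- Maximum Hamming distance over `D(S;n)`: `n-1` when `S` is an interval
`{i,…,j}` with `i = 1` or `j = n-1`, and `n` otherwise. -/
theorem stmt2 (n : ℕ) (hn : 3 ≤ n) (S : Finset ℕ)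
    (hsub : S ⊆ Finset.Icc 1 (n - 1)) (hne : S.Nonempty)
    (hproper : S ≠ Finset.Icc 1 (n - 1)) :
    ((∃ i j, S = Finset.Icc i j ∧ (i = 1 ∨ j = n - 1)) →
      IsGreatest {d : ℕ | ∃ σ ∈ DSn n S, ∃ ρ ∈ DSn n S,
        DistinctOn n σ ρ ∧ d = dHamming n σ ρ} (n - 1)) ∧
    (¬ (∃ i j, S = Finset.Icc i j ∧ (i = 1 ∨ j = n - 1)) →
      IsGreatest {d : ℕ | ∃ σ ∈ DSn n S, ∃ ρ ∈ DSn n S,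
        DistinctOn n σ ρ ∧ d = dHamming n σ ρ} n) := by
  constructor
  · rintro ⟨i, j, hS, hij⟩
    subst hS
    rcases hij with rfl | rfl
    · -- S = Icc 1 j
      have hj1 : 1 ≤ j := by
        obtain ⟨x, hx⟩ := hne
        rw [Finset.mem_Icc] at hx
        omega
      have hjn : j ≤ n - 1 := by
        have h1 : j ∈ Finset.Icc 1 j := Finset.mem_Icc.2 ⟨hj1, le_rfl⟩
        have := Finset.mem_Icc.1 (hsub h1)
        omega
      have hj2 : j ≤ n - 2 := by
        rcases Nat.eq_or_lt_of_le hjn with h | h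
        · exact absurd (by rw [h]) hproper
        · omega
      obtain ⟨σ, hσ, ρ, hρ, hagree, hdiff⟩ := badL hn hj1 hj2
      constructor
      · refine ⟨σ, hσ, ρ, hρ, ⟨1, Set.mem_Icc.2 ⟨le_rfl, by omega⟩,
          hdiff 1 (Finset.mem_Icc.2 ⟨le_rfl, by omega⟩) (by omega)⟩, ?_⟩
        exact (dHamming_eq_pred (Finset.mem_Icc.2 ⟨by omega, by omega⟩) hagree hdiff).symm
      · rintro d ⟨σ', hσ', ρ', hρ', hdist, rfl⟩
        have h1 := forcedL hn hj1 hj2 hσ'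
        have h2 := forcedL hn hj1 hj2 hρ'
        exact dHamming_le_pred (Finset.mem_Icc.2 ⟨by omega, by omega⟩) (h1.trans h2.symm)
    · -- S = Icc i (n - 1)
      have hi1 : 1 ≤ i := by
        by_contra hc
        have h0 : (0 : ℕ) ∈ Finset.Icc i (n - 1) := Finset.mem_Icc.2 ⟨by omega, by omega⟩
        have := Finset.mem_Icc.1 (hsub h0)
        omega
      have hin : i ≤ n - 1 := by
        obtain ⟨x, hx⟩ := hne
        rw [Finset.mem_Icc] at hx
        omega
      have hi2 : 2 ≤ i := by
        rcases Nat.eq_or_lt_of_le hi1 with h | h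
        · exact absurd (by rw [← h]) hproper
        · omega
      obtain ⟨σ, hσ, ρ, hρ, hagree, hdiff⟩ := badR hn hi2 hin
      constructor
      · refine ⟨σ, hσ, ρ, hρ, ⟨1, Set.mem_Icc.2 ⟨le_rfl, by omega⟩,
          hdiff 1 (Finset.mem_Icc.2 ⟨le_rfl, by omega⟩) (by omega)⟩, ?_⟩
        exact (dHamming_eq_pred (Finset.mem_Icc.2 ⟨by omega, by omega⟩) hagree hdiff).symm
      · rintro d ⟨σ', hσ', ρ', hρ', hdist, rfl⟩
        have h1 := forcedR hn hi2 hin hσ'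
        have h2 := forcedR hn hi2 hin hρ'
        exact dHamming_le_pred (Finset.mem_Icc.2 ⟨by omega, by omega⟩) (h1.trans h2.symm)
  · intro hnb
    have hpair : ∃ σ ∈ DSn n S, ∃ ρ ∈ DSn n S, ∀ k ∈ Finset.Icc 1 n, σ k ≠ ρ k := by
      by_cases hn1 : n - 1 ∈ S
      · by_cases h1 : 1 ∈ S
        · -- both endpoints in S: use complement
          apply complement_pair (by omega) hsub
          have hTsub : Finset.Icc 1 (n - 1) \ S ⊆ Finset.Icc 1 (n - 1) := Finset.sdiff_subset
          have hTne : (Finset.Icc 1 (n - 1) \ S).Nonempty := by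
            obtain ⟨x, hx1, hx2⟩ := Finset.exists_of_ssubset (lt_of_le_of_ne hsub hproper)
            exact ⟨x, Finset.mem_sdiff.2 ⟨hx1, hx2⟩⟩
          have hT1 : 1 ∉ Finset.Icc 1 (n - 1) \ S := fun hc => (Finset.mem_sdiff.1 hc).2 h1
          have hTnm : n - 1 ∉ Finset.Icc 1 (n - 1) \ S := fun hc => (Finset.mem_sdiff.1 hc).2 hn1
          obtain ⟨q0, hq0, hlong⟩ := get_conj1 hTsub hTne hT1
          exact caseI hTsub hq0 hlong hTnm
        · obtain ⟨q0, hq0, hp1, hlong⟩ := get_conj2 hn hsub hne hnb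
          exact caseIp hsub hq0 hp1 hlong h1
      · obtain ⟨q0, hq0, hlong⟩ := get_conj1' hsub hne hnb
        exact caseI hsub hq0 hlong hn1
    obtain ⟨σ, hσ, ρ, hρ, hdiff⟩ := hpair
    constructor
    · exact ⟨σ, hσ, ρ, hρ, ⟨1, Set.mem_Icc.2 ⟨le_rfl, by omega⟩,
        hdiff 1 (Finset.mem_Icc.2 ⟨le_rfl, by omega⟩)⟩, (dHamming_eq_n hdiff).symm⟩
    · rintro d ⟨σ', _, ρ', _, _, rfl⟩
      exact dHamming_le σ' ρ'
end

section
/- Let n ≥ 3 and let S = {1, 2, …, k} for some k with 1 ≤ k ≤ n-2. Then the maximum of d_H(σ,ρ) over all pairs of distinct permutations σ, ρ ∈ D(S;n) equals n-1. -/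
/-!
A permutation with descent set `{1,…,k}` decreases strictly up to position `k+1` and increases
strictly from there on, so its minimum `1` sits at position `k+1`. Two such permutations therefore
agree at `k+1`, which bounds their Hamming distance by `n-1`; the bound is attained by a pair that
differs at every other position.
-/

open Finset

lemma isPermOn_of_injOn {n : ℕ} {σ : ℕ → ℕ} (hmaps : Set.MapsTo σ (Set.Icc 1 n) (Set.Icc 1 n))
    (hinj : Set.InjOn σ (Set.Icc 1 n)) : IsPermOn n σ :=
  ((Set.finite_Icc 1 n).injOn_iff_bijOn_of_mapsTo hmaps).mp hinj

lemma card_erase_Icc_one {n i : ℕ} (hi : i ∈ Icc 1 n) : ((Icc 1 n).erase i).card = n - 1 := by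
  rw [card_erase_of_mem hi, Nat.card_Icc, Nat.add_sub_cancel]

section Hamming

variable {n : ℕ} {σ ρ : ℕ → ℕ}

lemma distinctOn_of_dHamming_pos (h : 0 < dHamming n σ ρ) : DistinctOn n σ ρ := by
  obtain ⟨i, hi⟩ := card_pos.mp h
  rw [mem_filter] at hi
  exact ⟨i, Set.mem_Icc.mpr (mem_Icc.mp hi.1), hi.2⟩

lemma dHamming_le_pred_of_apply_eq {i : ℕ} (hi : i ∈ Icc 1 n) (h : σ i = ρ i) :
    dHamming n σ ρ ≤ n - 1 := by
  rw [← card_erase_Icc_one hi]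
  refine card_le_card fun j hj => ?_
  rw [mem_filter] at hj
  exact mem_erase.mpr ⟨fun hji => hj.2 (hji ▸ h), hj.1⟩

end Hamming

section Valley

variable {n k : ℕ} {σ : ℕ → ℕ}

lemma strictAntiOn_of_mem_DSn_Icc (hσ : σ ∈ DSn n (Icc 1 k)) :
    StrictAntiOn σ (Set.Icc 1 (k + 1)) := by
  refine strictAntiOn_of_succ_lt Set.ordConnected_Icc fun i _ ⟨hi1, _⟩ ⟨_, hik'⟩ => ?_
  rw [Order.succ_eq_add_one] at hik' ⊢
  have hdesc : i ∈ DescentSet n σ := by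
    rw [hσ.2, mem_Icc]
    omega
  exact (mem_filter.mp hdesc).2

lemma strictMonoOn_of_mem_DSn_Icc (hσ : σ ∈ DSn n (Icc 1 k)) :
    StrictMonoOn σ (Set.Icc (k + 1) n) := by
  refine strictMonoOn_of_lt_succ Set.ordConnected_Icc fun i _ ⟨hki, hin⟩ ⟨_, hin'⟩ => ?_
  rw [Order.succ_eq_add_one] at hin' ⊢
  have hascent : i ∉ DescentSet n σ := by
    rw [hσ.2, mem_Icc]
    omega
  simp only [DescentSet, mem_filter, mem_Icc, not_and, not_lt] at hascent
  refine lt_of_le_of_ne (hascent ⟨by omega, by omega⟩) fun h => ?_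
  have := hσ.1.injOn ⟨by omega, hin⟩ ⟨by omega, hin'⟩ h
  omega

lemma apply_succ_eq_one_of_mem_DSn_Icc (hσ : σ ∈ DSn n (Icc 1 k)) (hk : k < n) :
    σ (k + 1) = 1 := by
  have hmin : ∀ j ∈ Set.Icc 1 n, σ (k + 1) ≤ σ j := by
    rintro j ⟨hj1, hjn⟩
    rcases le_total j (k + 1) with hjk | hkj
    · exact (strictAntiOn_of_mem_DSn_Icc hσ).antitoneOn ⟨hj1, hjk⟩ ⟨by omega, le_rfl⟩ hjk
    · exact (strictMonoOn_of_mem_DSn_Icc hσ).monotoneOn ⟨le_rfl, by omega⟩ ⟨hkj, hjn⟩ hkj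
  obtain ⟨j, hj, hσj⟩ := hσ.1.surjOn ⟨le_rfl, (by omega : 1 ≤ n)⟩
  have hpos : 1 ≤ σ (k + 1) := (hσ.1.mapsTo ⟨by omega, by omega⟩).1
  exact le_antisymm (hσj ▸ hmin j hj) hpos

end Valley

section Witnesses

variable {n k : ℕ}

/-- `(k+1, k, …, 1, k+2, …, n)` in one-line notation. -/
def reversePrefix (k i : ℕ) : ℕ := if i ≤ k + 1 then k + 2 - i else i

/-- `(n, k+1, k, …, 3, 1, 2, k+2, …, n-1)` in one-line notation. -/
def reversePrefixPartner (n k i : ℕ) : ℕ :=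
  if i = 1 then n
  else if i ≤ k then k + 3 - i
  else if i = k + 1 then 1
  else if i = k + 2 then 2
  else i - 1

lemma reversePrefix_mem_DSn (hk : k < n) : reversePrefix k ∈ DSn n (Icc 1 k) := by
  refine ⟨isPermOn_of_injOn ?_ ?_, ?_⟩
  · rintro i ⟨hi1, hin⟩
    constructor <;> unfold reversePrefix <;> split_ifs <;> omega
  · rintro i ⟨hi1, hin⟩ j ⟨hj1, hjn⟩
    unfold reversePrefix
    split_ifs <;> omega
  · ext i
    simp only [DescentSet, mem_filter, mem_Icc]
    unfold reversePrefix
    split_ifs <;> omega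

lemma reversePrefixPartner_mem_DSn (hk1 : 1 ≤ k) (hk2 : k + 2 ≤ n) :
    reversePrefixPartner n k ∈ DSn n (Icc 1 k) := by
  refine ⟨isPermOn_of_injOn ?_ ?_, ?_⟩
  · rintro i ⟨hi1, hin⟩
    constructor <;> unfold reversePrefixPartner <;> split_ifs <;> omega
  · rintro i ⟨hi1, hin⟩ j ⟨hj1, hjn⟩
    unfold reversePrefixPartner
    split_ifs <;> omega
  · ext i
    simp only [DescentSet, mem_filter, mem_Icc]
    unfold reversePrefixPartner
    split_ifs <;> omega

lemma dHamming_reversePrefix_reversePrefixPartner (hk1 : 1 ≤ k) (hk2 : k + 2 ≤ n) :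
    dHamming n (reversePrefix k) (reversePrefixPartner n k) = n - 1 := by
  have hk : k + 1 ∈ Icc 1 n := mem_Icc.mpr ⟨by omega, by omega⟩
  rw [dHamming, ← card_erase_Icc_one hk]
  congr 1
  ext i
  simp only [mem_filter, mem_erase, mem_Icc]
  unfold reversePrefix reversePrefixPartner
  split_ifs <;> omega

end Witnesses

theorem stmt3_general (n k : ℕ) (hk1 : 1 ≤ k) (hk2 : k ≤ n - 2) :
    IsGreatest {d : ℕ | ∃ σ ∈ DSn n (Finset.Icc 1 k), ∃ ρ ∈ DSn n (Finset.Icc 1 k),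
      DistinctOn n σ ρ ∧ d = dHamming n σ ρ} (n - 1) := by
  have hdist := dHamming_reversePrefix_reversePrefixPartner hk1 (by omega : k + 2 ≤ n)
  constructor
  · refine ⟨reversePrefix k, reversePrefix_mem_DSn (by omega),
      reversePrefixPartner n k, reversePrefixPartner_mem_DSn hk1 (by omega),
      distinctOn_of_dHamming_pos (by omega), hdist.symm⟩
  · rintro d ⟨σ, hσ, ρ, hρ, -, rfl⟩
    have hk : k < n := by omega
    exact dHamming_le_pred_of_apply_eq (mem_Icc.mpr ⟨by omega, by omega⟩)
      ((apply_succ_eq_one_of_mem_DSn_Icc hσ hk).trans (apply_succ_eq_one_of_mem_DSn_Icc hρ hk).symm)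

/-- For `S = {1,…,k}` with `1 ≤ k ≤ n-2`, the maximum Hamming distance
over `D(S;n)` is `n-1`. -/
theorem stmt3 (n k : ℕ) (hn : 3 ≤ n) (hk1 : 1 ≤ k) (hk2 : k ≤ n - 2) :
    IsGreatest {d : ℕ | ∃ σ ∈ DSn n (Finset.Icc 1 k), ∃ ρ ∈ DSn n (Finset.Icc 1 k),
      DistinctOn n σ ρ ∧ d = dHamming n σ ρ} (n - 1) :=
  stmt3_general n k hk1 hk2
end

section
/- Let n ≥ 3 and let S = {k, k+1, …, n-1} for some k with 2 ≤ k ≤ n-1. Then the maximum of d_H(σ,ρ) over all pairs of distinct permutations σ, ρ ∈ D(S;n) equals n-1. -/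
/-!
Every `σ ∈ D({k,…,n-1}; n)` rises on `[1,k]` and falls on `[k,n]`, so its maximum `n` sits at
position `k`. Any two such permutations therefore agree at `k`, giving `d_H ≤ n - 1`, and the two
unimodal permutations `1 2 ⋯ (k-1) n (n-1) ⋯ k` and `(n-k+1) ⋯ (n-1) n (n-k) ⋯ 1` differ
everywhere else as soon as `2 ≤ k < n`.
-/

open Set

lemma IsPermOn.of_mapsTo_of_injOn {n : ℕ} {σ : ℕ → ℕ} (hmaps : MapsTo σ (Icc 1 n) (Icc 1 n))
    (hinj : InjOn σ (Icc 1 n)) : IsPermOn n σ :=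
  ((finite_Icc 1 n).injOn_iff_bijOn_of_mapsTo hmaps).mp hinj

section Peak

variable {n k : ℕ} {σ : ℕ → ℕ}

lemma monotoneOn_of_descentSet_eq_Icc (hkn : k ≤ n) (hσ : DescentSet n σ = Finset.Icc k (n - 1)) :
    MonotoneOn σ (Icc 1 k) := by
  refine monotoneOn_of_le_add_one ordConnected_Icc fun i _ hi hi' => ?_
  simp only [mem_Icc] at hi hi'
  have hnot : i ∉ DescentSet n σ := by
    rw [hσ, Finset.mem_Icc]
    omega
  simp only [DescentSet, Finset.mem_filter, Finset.mem_Icc, not_and, not_lt] at hnot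
  exact hnot ⟨hi.1, by omega⟩

lemma antitoneOn_of_descentSet_eq_Icc (hσ : DescentSet n σ = Finset.Icc k (n - 1)) :
    AntitoneOn σ (Icc k n) := by
  refine antitoneOn_of_add_one_le ordConnected_Icc fun i _ hi hi' => ?_
  have hdesc : i ∈ DescentSet n σ := by
    rw [hσ, Finset.mem_Icc]
    simp only [mem_Icc] at hi hi'
    omega
  exact (Finset.mem_filter.mp hdesc).2.le

lemma IsPermOn.apply_eq_of_monotoneOn_of_antitoneOn (hσ : IsPermOn n σ) (hk : k ∈ Icc 1 n)
    (hmono : MonotoneOn σ (Icc 1 k)) (hanti : AntitoneOn σ (Icc k n)) : σ k = n := by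
  obtain ⟨m, hm, hσm⟩ := hσ.surjOn (right_mem_Icc.mpr (hk.1.trans hk.2))
  have hle : σ k ≤ n := (hσ.mapsTo hk).2
  rcases le_total m k with hmk | hkm
  · have := hmono ⟨hm.1, hmk⟩ (right_mem_Icc.mpr hk.1) hmk
    omega
  · have := hanti (left_mem_Icc.mpr hk.2) ⟨hkm, hm.2⟩ hkm
    omega

lemma apply_eq_of_mem_DSn_Icc (hk : k ∈ Icc 1 n) (hσ : σ ∈ DSn n (Finset.Icc k (n - 1))) :
    σ k = n :=
  hσ.1.apply_eq_of_monotoneOn_of_antitoneOn hk (monotoneOn_of_descentSet_eq_Icc hk.2 hσ.2)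
    (antitoneOn_of_descentSet_eq_Icc hσ.2)

end Peak

section Hamming

variable {n i : ℕ} {σ ρ : ℕ → ℕ}

lemma dHamming_le_sub_one_of_apply_eq (hi : i ∈ Icc 1 n) (h : σ i = ρ i) :
    dHamming n σ ρ ≤ n - 1 := by
  have hsub : (Finset.Icc 1 n).filter (fun j => σ j ≠ ρ j) ⊆ (Finset.Icc 1 n).erase i :=
    fun j hj => Finset.mem_erase.mpr
      ⟨fun hji => (Finset.mem_filter.mp hj).2 (hji ▸ h), (Finset.mem_filter.mp hj).1⟩
  calc dHamming n σ ρ ≤ ((Finset.Icc 1 n).erase i).card := Finset.card_le_card hsub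
    _ = n - 1 := by rw [Finset.card_erase_of_mem (Finset.mem_Icc.mpr hi), Nat.card_Icc]; rfl

lemma dHamming_eq_sub_one (hi : i ∈ Icc 1 n) (h : ∀ j ∈ Icc 1 n, σ j = ρ j ↔ j = i) :
    dHamming n σ ρ = n - 1 := by
  have hfilter : (Finset.Icc 1 n).filter (fun j => σ j ≠ ρ j) = (Finset.Icc 1 n).erase i := by
    rw [← Finset.filter_ne']
    exact Finset.filter_congr fun j hj => not_congr (h j (Finset.mem_Icc.mp hj))
  rw [dHamming, hfilter, Finset.card_erase_of_mem (Finset.mem_Icc.mpr hi), Nat.card_Icc]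
  rfl

end Hamming

section Witnesses

variable {n k : ℕ}

/-- In one-line notation, `1 2 ⋯ (k-1) n (n-1) ⋯ k`. -/
def peakLow (n k j : ℕ) : ℕ := if j < k then j else n + k - j

/-- In one-line notation, `(n-k+1) ⋯ (n-1) n (n-k) ⋯ 1`. -/
def peakHigh (n k j : ℕ) : ℕ := if j ≤ k then n - k + j else n + 1 - j

lemma peakLow_mem_DSn (hk : k ∈ Icc 1 n) : peakLow n k ∈ DSn n (Finset.Icc k (n - 1)) := by
  obtain ⟨hk1, hkn⟩ := hk
  refine ⟨IsPermOn.of_mapsTo_of_injOn (fun j hj => ?_) (fun a ha b hb hab => ?_), ?_⟩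
  · simp only [mem_Icc, peakLow] at hj ⊢
    split_ifs <;> omega
  · simp only [mem_Icc, peakLow] at ha hb hab
    split_ifs at hab <;> omega
  · ext i
    simp only [DescentSet, Finset.mem_filter, Finset.mem_Icc]
    simp only [peakLow]
    split_ifs <;> omega

lemma peakHigh_mem_DSn (hk : k ∈ Icc 1 n) : peakHigh n k ∈ DSn n (Finset.Icc k (n - 1)) := by
  obtain ⟨hk1, hkn⟩ := hk
  refine ⟨IsPermOn.of_mapsTo_of_injOn (fun j hj => ?_) (fun a ha b hb hab => ?_), ?_⟩
  · simp only [mem_Icc, peakHigh] at hj ⊢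
    split_ifs <;> omega
  · simp only [mem_Icc, peakHigh] at ha hb hab
    split_ifs at hab <;> omega
  · ext i
    simp only [DescentSet, Finset.mem_filter, Finset.mem_Icc]
    simp only [peakHigh]
    split_ifs <;> omega

lemma peakLow_eq_peakHigh_iff (hk1 : 2 ≤ k) (hkn : k < n) {j : ℕ} (hj : j ∈ Icc 1 n) :
    peakLow n k j = peakHigh n k j ↔ j = k := by
  simp only [mem_Icc] at hj
  simp only [peakLow, peakHigh]
  split_ifs <;> omega

end Witnesses

theorem stmt4_general (n k : ℕ) (hk1 : 2 ≤ k) (hk2 : k ≤ n - 1) :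
    IsGreatest {d : ℕ | ∃ σ ∈ DSn n (Finset.Icc k (n - 1)), ∃ ρ ∈ DSn n (Finset.Icc k (n - 1)),
      DistinctOn n σ ρ ∧ d = dHamming n σ ρ} (n - 1) := by
  have hkn : k < n := by omega
  have hk : k ∈ Icc 1 n := ⟨by omega, hkn.le⟩
  have hagree := fun j (hj : j ∈ Icc 1 n) => peakLow_eq_peakHigh_iff hk1 hkn hj
  refine ⟨⟨peakLow n k, peakLow_mem_DSn hk, peakHigh n k, peakHigh_mem_DSn hk, ?_, ?_⟩, ?_⟩
  · have h1 : 1 ∈ Icc 1 n := ⟨le_rfl, by omega⟩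
    exact ⟨1, h1, fun h => by have := (hagree 1 h1).mp h; omega⟩
  · exact (dHamming_eq_sub_one hk hagree).symm
  · rintro d ⟨σ, hσ, ρ, hρ, -, rfl⟩
    exact dHamming_le_sub_one_of_apply_eq hk
      ((apply_eq_of_mem_DSn_Icc hk hσ).trans (apply_eq_of_mem_DSn_Icc hk hρ).symm)

/-- For `S = {k,…,n-1}` with `2 ≤ k ≤ n-1`, the maximum Hamming distance
over `D(S;n)` is `n-1`. -/
theorem stmt4 (n k : ℕ) (hn : 3 ≤ n) (hk1 : 2 ≤ k) (hk2 : k ≤ n - 1) :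
    IsGreatest {d : ℕ | ∃ σ ∈ DSn n (Finset.Icc k (n - 1)), ∃ ρ ∈ DSn n (Finset.Icc k (n - 1)),
      DistinctOn n σ ρ ∧ d = dHamming n σ ρ} (n - 1) :=
  stmt4_general n k hk1 hk2
end

section
/- Let n ≥ 4 and let S = {k, k+1, …, n-2} for some k with 2 ≤ k ≤ n-2. Then there exist permutations σ, ρ ∈ D(S;n) with d_H(σ,ρ) = n, i.e., σ and ρ differ at every index. -/
/-!
Explicit witnesses. In one-line notation
`σ = 1 2 ⋯ (k-1) n (n-1) ⋯ (k+2) k (k+1)` and `ρ = 2 3 ⋯ k (n-1) (n-2) ⋯ (k+1) 1 n`: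
both are increasing, then decreasing on positions `k, …, n-1`, then increasing, so their
descent set is `{k, …, n-2}`. They differ everywhere because `ρ = σ + 1` before position `k`,
`ρ = σ - 1` on the decreasing block, and the last two entries `k, k+1` and `1, n` disagree.
-/

def sigmaPerm (n k j : ℕ) : ℕ :=
  if j < k then j else if j ≤ n - 2 then n + k - j else if j = n - 1 then k else k + 1

def sigmaPermInv (n k v : ℕ) : ℕ :=
  if v < k then v else if v = k then n - 1 else if v = k + 1 then n else n + k - v

def rhoPerm (n k j : ℕ) : ℕ :=
  if j < k then j + 1 else if j ≤ n - 2 then n + k - 1 - j else if j = n - 1 then 1 else n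

def rhoPermInv (n k v : ℕ) : ℕ :=
  if v = 1 then n - 1 else if v ≤ k then v - 1 else if v ≤ n - 1 then n + k - 1 - v else n

theorem dHamming_eq_of_forall_ne {n : ℕ} {σ ρ : ℕ → ℕ}
    (h : ∀ i ∈ Finset.Icc 1 n, σ i ≠ ρ i) : dHamming n σ ρ = n := by
  rw [dHamming, Finset.filter_true_of_mem h, Nat.card_Icc, Nat.add_sub_cancel]

section Witnesses

variable {n k : ℕ} (hk : 1 ≤ k) (hkn : k ≤ n - 2)
include hk hkn

theorem isPermOn_sigmaPerm : IsPermOn n (sigmaPerm n k) := by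
  refine Set.InvOn.bijOn (f' := sigmaPermInv n k) ⟨?_, ?_⟩ ?_ ?_ <;>
  · intro x hx
    simp only [Set.mem_Icc, sigmaPerm, sigmaPermInv] at hx ⊢
    split_ifs <;> omega

theorem isPermOn_rhoPerm : IsPermOn n (rhoPerm n k) := by
  refine Set.InvOn.bijOn (f' := rhoPermInv n k) ⟨?_, ?_⟩ ?_ ?_ <;>
  · intro x hx
    simp only [Set.mem_Icc, rhoPerm, rhoPermInv] at hx ⊢
    split_ifs <;> omega

theorem descentSet_sigmaPerm : DescentSet n (sigmaPerm n k) = Finset.Icc k (n - 2) := by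
  ext i
  simp only [DescentSet, Finset.mem_filter, Finset.mem_Icc]
  simp only [sigmaPerm]
  split_ifs <;> omega

theorem descentSet_rhoPerm : DescentSet n (rhoPerm n k) = Finset.Icc k (n - 2) := by
  ext i
  simp only [DescentSet, Finset.mem_filter, Finset.mem_Icc]
  simp only [rhoPerm]
  split_ifs <;> omega

end Witnesses

theorem sigmaPerm_ne_rhoPerm {n k i : ℕ} (hk : 2 ≤ k) (hkn : k ≤ n - 2)
    (hi : i ∈ Finset.Icc 1 n) : sigmaPerm n k i ≠ rhoPerm n k i := by
  simp only [Finset.mem_Icc, sigmaPerm, rhoPerm] at hi ⊢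
  split_ifs <;> omega

theorem stmt6_general (n k : ℕ) (hk1 : 2 ≤ k) (hk2 : k ≤ n - 2) :
    ∃ σ ∈ DSn n (Finset.Icc k (n - 2)), ∃ ρ ∈ DSn n (Finset.Icc k (n - 2)),
      dHamming n σ ρ = n := by
  have hk : 1 ≤ k := by omega
  exact ⟨sigmaPerm n k, ⟨isPermOn_sigmaPerm hk hk2, descentSet_sigmaPerm hk hk2⟩,
    rhoPerm n k, ⟨isPermOn_rhoPerm hk hk2, descentSet_rhoPerm hk hk2⟩,
    dHamming_eq_of_forall_ne fun _ hi => sigmaPerm_ne_rhoPerm hk1 hk2 hi⟩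

/-- For `S = {k,…,n-2}` with `2 ≤ k ≤ n-2`, there exist
`σ, ρ ∈ D(S;n)` with `d_H(σ,ρ) = n`, i.e. differing at every index. -/
theorem stmt6 (n k : ℕ) (hn : 4 ≤ n) (hk1 : 2 ≤ k) (hk2 : k ≤ n - 2) :
    ∃ σ ∈ DSn n (Finset.Icc k (n - 2)), ∃ ρ ∈ DSn n (Finset.Icc k (n - 2)),
      dHamming n σ ρ = n :=
  stmt6_general n k hk1 hk2
end

section
/- Fix n ≥ 3 and i ∈ {2, 3, …, n-1}, and let S = {1, 2, …, n-i}. Then the maximum of d_ℓ(σ,ρ) over all pairs of distinct permutations σ, ρ ∈ D(S;n) equals max{i-1, n-i}. -/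
private lemma chain_dec (n i : ℕ) (σ : ℕ → ℕ)
    (hD : DescentSet n σ = Finset.Icc 1 (n - i)) (hi2 : i ≤ n - 1) :
    ∀ k a, 1 ≤ a → a + k ≤ n - i + 1 → σ (a + k) + k ≤ σ a := by
  intro k
  induction k with
  | zero => intro a _ _; simp
  | succ m ih =>
    intro a ha hb
    have h1 := ih a ha (by omega)
    have hmem : (a + m) ∈ DescentSet n σ := by
      rw [hD, Finset.mem_Icc]; omega
    simp only [DescentSet, Finset.mem_filter, Finset.mem_Icc] at hmem
    have h2 := hmem.2
    have e : a + (m + 1) = (a + m) + 1 := by omega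
    rw [e]
    omega

private lemma chain_inc (n i : ℕ) (σ : ℕ → ℕ) (hperm : IsPermOn n σ)
    (hD : DescentSet n σ = Finset.Icc 1 (n - i)) (hi2 : i ≤ n - 1) :
    ∀ k a, n - i + 1 ≤ a → a + k ≤ n → σ a + k ≤ σ (a + k) := by
  intro k
  induction k with
  | zero => intro a _ _; simp
  | succ m ih =>
    intro a ha hb
    have h1 := ih a ha (by omega)
    have hnot : (a + m) ∉ DescentSet n σ := by
      rw [hD, Finset.mem_Icc]; omega
    simp only [DescentSet, Finset.mem_filter, Finset.mem_Icc, not_and, not_lt] at hnot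
    have hle : σ (a + m) ≤ σ (a + m + 1) := hnot ⟨by omega, by omega⟩
    have hne : σ (a + m) ≠ σ (a + m + 1) := by
      intro heq
      have := hperm.injOn (Set.mem_Icc.mpr ⟨by omega, by omega⟩)
        (Set.mem_Icc.mpr ⟨by omega, by omega⟩) heq
      omega
    have e : a + (m + 1) = (a + m) + 1 := by omega
    rw [e]
    omega

private lemma sigma_bounds (n i : ℕ) (σ : ℕ → ℕ)
    (hσ : σ ∈ DSn n (Finset.Icc 1 (n - i))) (hn : 3 ≤ n) (hi1 : 2 ≤ i) (hi2 : i ≤ n - 1)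
    (j : ℕ) (hj1 : 1 ≤ j) (hj2 : j ≤ n) :
    (j ≤ n - i → n - i + 2 - j ≤ σ j ∧ σ j ≤ n + 1 - j) ∧
    (n - i + 1 ≤ j → j - (n - i) ≤ σ j ∧ σ j ≤ j) := by
  obtain ⟨hperm, hD⟩ := hσ
  have hmap := hperm.mapsTo
  have h1n : σ 1 ∈ Set.Icc 1 n := hmap (Set.mem_Icc.mpr ⟨le_refl 1, by omega⟩)
  have hnn : σ n ∈ Set.Icc 1 n := hmap (Set.mem_Icc.mpr ⟨by omega, le_refl n⟩)
  have hvn : σ (n - i + 1) ∈ Set.Icc 1 n := hmap (Set.mem_Icc.mpr ⟨by omega, by omega⟩)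
  rw [Set.mem_Icc] at h1n hnn hvn
  constructor
  · intro hj
    constructor
    · have h := chain_dec n i σ hD hi2 (n - i + 1 - j) j hj1 (by omega)
      have e : j + (n - i + 1 - j) = n - i + 1 := by omega
      rw [e] at h; omega
    · have h := chain_dec n i σ hD hi2 (j - 1) 1 le_rfl (by omega)
      have e : 1 + (j - 1) = j := by omega
      rw [e] at h; omega
  · intro hj
    constructor
    · have h := chain_inc n i σ hperm hD hi2 (j - (n - i + 1)) (n - i + 1) le_rfl (by omega)
      have e : (n - i + 1) + (j - (n - i + 1)) = j := by omega
      rw [e] at h; omega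
    · have h := chain_inc n i σ hperm hD hi2 (n - j) j hj (by omega)
      have e : j + (n - j) = n := by omega
      rw [e] at h; omega

/-- For `S = {1,…,n-i}` with `2 ≤ i ≤ n-1`, the maximum `ℓ∞` distance over
`D(S;n)` is `max (i-1) (n-i)`. -/
theorem stmt7 (n i : ℕ) (hn : 3 ≤ n) (hi1 : 2 ≤ i) (hi2 : i ≤ n - 1) :
    IsGreatest {d : ℕ | ∃ σ ∈ DSn n (Finset.Icc 1 (n - i)), ∃ ρ ∈ DSn n (Finset.Icc 1 (n - i)),
      DistinctOn n σ ρ ∧ d = dLinf n σ ρ} (max (i - 1) (n - i)) := by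
  constructor
  · refine ⟨(fun j => if j ≤ n - i then n + 1 - j else j - (n - i)), ⟨⟨?_, ?_, ?_⟩, ?_⟩,
            (fun j => if j ≤ n - i + 1 then n - i + 2 - j else j), ⟨⟨?_, ?_, ?_⟩, ?_⟩, ?_, ?_⟩
    · intro j hj; rw [Set.mem_Icc] at *; dsimp only; split_ifs <;> omega
    · intro j1 h1 j2 h2 h; rw [Set.mem_Icc] at h1 h2; dsimp only at h
      split_ifs at h <;> omega
    · intro y hy; rw [Set.mem_Icc] at hy
      refine ⟨if y ≤ i then y + (n - i) else n + 1 - y, ?_, ?_⟩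
      · rw [Set.mem_Icc]; split_ifs <;> omega
      · dsimp only; split_ifs <;> omega
    · ext k
      simp only [DescentSet, Finset.mem_filter, Finset.mem_Icc]
      split_ifs <;> omega
    · intro j hj; rw [Set.mem_Icc] at *; dsimp only; split_ifs <;> omega
    · intro j1 h1 j2 h2 h; rw [Set.mem_Icc] at h1 h2; dsimp only at h
      split_ifs at h <;> omega
    · intro y hy; rw [Set.mem_Icc] at hy
      refine ⟨if y ≤ n - i + 1 then n - i + 2 - y else y, ?_, ?_⟩
      · rw [Set.mem_Icc]; split_ifs <;> omega
      · dsimp only; split_ifs <;> omega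
    · ext k
      simp only [DescentSet, Finset.mem_filter, Finset.mem_Icc]
      split_ifs <;> omega
    · refine ⟨1, Set.mem_Icc.mpr ⟨le_rfl, by omega⟩, ?_⟩
      dsimp only; split_ifs <;> omega
    · rw [dLinf]
      apply le_antisymm
      · apply max_le
        · refine le_trans ?_ (Finset.le_sup (Finset.mem_Icc.mpr ⟨le_rfl, by omega⟩ :
            (1 : ℕ) ∈ Finset.Icc 1 n))
          split_ifs <;> omega
        · refine le_trans ?_ (Finset.le_sup (Finset.mem_Icc.mpr ⟨by omega, le_rfl⟩ :
            n ∈ Finset.Icc 1 n))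
          split_ifs <;> omega
      · apply Finset.sup_le
        intro j hj; rw [Finset.mem_Icc] at hj
        rw [Nat.max_def]
        split_ifs <;> omega
  · rintro d ⟨σ, hσ, ρ, hρ, -, rfl⟩
    rw [dLinf]
    apply Finset.sup_le
    intro j hj
    rw [Finset.mem_Icc] at hj
    have Hσ := sigma_bounds n i σ hσ hn hi1 hi2 j hj.1 hj.2
    have Hρ := sigma_bounds n i ρ hρ hn hi1 hi2 j hj.1 hj.2
    rcases le_or_gt j (n - i) with h | h
    · have a1 := Hσ.1 h; have a2 := Hρ.1 h
      exact le_trans (by omega) (le_max_left (i - 1) (n - i))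
    · have a1 := Hσ.2 (by omega); have a2 := Hρ.2 (by omega)
      exact le_trans (by omega) (le_max_right (i - 1) (n - i))
end

section
/- Fix n ≥ 3 and i ∈ {2, 3, …, n-1}, and let S = {1, 2, …, n-i}. Then for every pair of permutations π, τ ∈ D(S;n), d_ℓ(π,τ) ≤ max{i-1, n-i}. -/
lemma stmt8_bounds (n i : ℕ) (hn : 3 ≤ n) (hi1 : 2 ≤ i) (hi2 : i ≤ n - 1)
    (σ : ℕ → ℕ) (hσ : σ ∈ DSn n (Finset.Icc 1 (n - i))) (j : ℕ)
    (hj1 : 1 ≤ j) (hjn : j ≤ n) :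
    (j ≤ n - i + 1 → (n - i + 1) - j + 1 ≤ σ j ∧ σ j + (j - 1) ≤ n) ∧
    (n - i + 1 ≤ j → j - (n - i + 1) + 1 ≤ σ j ∧ σ j ≤ j) := by
  obtain ⟨hbij, hdesc⟩ := hσ
  have hmap : ∀ k, 1 ≤ k → k ≤ n → 1 ≤ σ k ∧ σ k ≤ n := fun k h1 h2 => by
    have := hbij.mapsTo (Set.mem_Icc.mpr ⟨h1, h2⟩)
    exact Set.mem_Icc.mp this
  have hinj := hbij.injOn
  have hdes : ∀ k, 1 ≤ k → k ≤ n - i → σ (k + 1) < σ k := by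
    intro k h1 h2
    have hk : k ∈ DescentSet n σ := by
      rw [hdesc]; exact Finset.mem_Icc.mpr ⟨h1, h2⟩
    exact (Finset.mem_filter.mp hk).2
  have hasc : ∀ k, n - i + 1 ≤ k → k ≤ n - 1 → σ k < σ (k + 1) := by
    intro k h1 h2
    have hk : k ∉ DescentSet n σ := by
      rw [hdesc]; simp only [Finset.mem_Icc]; omega
    have hle : ¬ σ (k + 1) < σ k := by
      intro h
      exact hk (by
        simp only [DescentSet, Finset.mem_filter, Finset.mem_Icc]
        exact ⟨⟨by omega, h2⟩, h⟩)
    have hne : σ k ≠ σ (k + 1) := by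
      intro h
      have := hinj (Set.mem_Icc.mpr ⟨by omega, by omega⟩)
        (Set.mem_Icc.mpr (⟨by omega, by omega⟩ : 1 ≤ k + 1 ∧ k + 1 ≤ n)) h
      omega
    omega
  have dec : ∀ d a, 1 ≤ a → a + d ≤ n - i + 1 → σ (a + d) + d ≤ σ a := by
    intro d
    induction d with
    | zero => intro a _ _; simp
    | succ d ih =>
      intro a h1 h2
      have h3 := ih (a + 1) (by omega) (by omega)
      have h4 := hdes a h1 (by omega)
      have he : a + (d + 1) = a + 1 + d := by omega
      rw [he]; omega
  have asc : ∀ d a, n - i + 1 ≤ a → a + d ≤ n → σ a + d ≤ σ (a + d) := by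
    intro d
    induction d with
    | zero => intro a _ _; simp
    | succ d ih =>
      intro a h1 h2
      have h3 := ih (a + 1) (by omega) (by omega)
      have h4 := hasc a h1 (by omega)
      have he : a + (d + 1) = a + 1 + d := by omega
      rw [he]; omega
  constructor
  · intro hjm
    have h1 := dec ((n - i + 1) - j) j hj1 (by omega)
    have h2 := dec (j - 1) 1 le_rfl (by omega)
    have h3 := hmap (n - i + 1) (by omega) (by omega)
    have h4 := hmap 1 (by omega) (by omega)
    rw [show j + ((n - i + 1) - j) = n - i + 1 from by omega] at h1
    rw [show 1 + (j - 1) = j from by omega] at h2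
    omega
  · intro hmj
    have h1 := asc (j - (n - i + 1)) (n - i + 1) le_rfl (by omega)
    have h2 := asc (n - j) j hmj (by omega)
    have h3 := hmap (n - i + 1) (by omega) (by omega)
    have h4 := hmap n (by omega) le_rfl
    rw [show (n - i + 1) + (j - (n - i + 1)) = j from by omega] at h1
    rw [show j + (n - j) = n from by omega] at h2
    omega

/-- For `S = {1,…,n-i}` with `2 ≤ i ≤ n-1`, every pair `π, τ ∈ D(S;n)`
satisfies `d_ℓ(π,τ) ≤ max (i-1) (n-i)`. -/
theorem stmt8 (n i : ℕ) (hn : 3 ≤ n) (hi1 : 2 ≤ i) (hi2 : i ≤ n - 1)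
    (π τ : ℕ → ℕ) (hπ : π ∈ DSn n (Finset.Icc 1 (n - i)))
    (hτ : τ ∈ DSn n (Finset.Icc 1 (n - i))) :
    dLinf n π τ ≤ max (i - 1) (n - i) := by
  apply Finset.sup_le
  intro j hj
  obtain ⟨hj1, hjn⟩ := Finset.mem_Icc.mp hj
  have hπb := stmt8_bounds n i hn hi1 hi2 π hπ j hj1 hjn
  have hτb := stmt8_bounds n i hn hi1 hi2 τ hτ j hj1 hjn
  rcases le_or_gt j (n - i + 1) with h | h
  · refine le_max_of_le_left ?_
    have h1 := hπb.1 h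
    have h2 := hτb.1 h
    omega
  · refine le_max_of_le_right ?_
    have h1 := hπb.2 (by omega)
    have h2 := hτb.2 (by omega)
    omega
end

section
/- Fix n ≥ 3 and i ∈ {2, 3, …, n-1}, and let S = {1, 2, …, n-i}. Then there exist permutations σ, ρ ∈ D(S;n) with d_ℓ(σ,ρ) = max{i-1, n-i}. -/
/-- For `S = {1,…,n-i}` with `2 ≤ i ≤ n-1`, there exist `σ, ρ ∈ D(S;n)` with
`d_ℓ(σ,ρ) = max (i-1) (n-i)`. -/
theorem stmt9 (n i : ℕ) (hn : 3 ≤ n) (hi1 : 2 ≤ i) (hi2 : i ≤ n - 1) :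
    ∃ σ ∈ DSn n (Finset.Icc 1 (n - i)), ∃ ρ ∈ DSn n (Finset.Icc 1 (n - i)),
      dLinf n σ ρ = max (i - 1) (n - i) := by
  set k := n - i with hk
  have hk1 : 1 ≤ k := by omega
  have hk2 : k + 2 ≤ n := by omega
  refine ⟨fun j => if j ≤ k+1 then k+2 - j else j, ⟨⟨?_, ?_, ?_⟩, ?_⟩,
          fun j => if j ≤ k then n+1 - j else j - k, ⟨⟨?_, ?_, ?_⟩, ?_⟩, ?_⟩
  · intro x hx
    simp only [Set.mem_Icc] at *
    split_ifs <;> omega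
  · intro a ha b hb h
    simp only [Set.mem_Icc] at *
    split_ifs at h <;> omega
  · intro y hy
    simp only [Set.mem_Icc] at hy
    refine ⟨if y ≤ k+1 then k+2-y else y, ?_, ?_⟩ <;>
      simp only [Set.mem_Icc] <;> split_ifs <;> omega
  · ext j
    simp only [DescentSet, Finset.mem_filter, Finset.mem_Icc]
    split_ifs <;> omega
  · intro x hx
    simp only [Set.mem_Icc] at *
    split_ifs <;> omega
  · intro a ha b hb h
    simp only [Set.mem_Icc] at *
    split_ifs at h <;> omega
  · intro y hy
    simp only [Set.mem_Icc] at hy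
    refine ⟨if y ≤ n-k then y+k else n+1-y, ?_, ?_⟩ <;>
      simp only [Set.mem_Icc] <;> split_ifs <;> omega
  · ext j
    simp only [DescentSet, Finset.mem_filter, Finset.mem_Icc]
    split_ifs <;> omega
  · unfold dLinf
    apply le_antisymm
    · apply Finset.sup_le
      intro j hj
      simp only [Finset.mem_Icc] at hj
      beta_reduce
      split_ifs <;> omega
    · apply max_le
      · refine le_trans ?_ (Finset.le_sup (by simp; omega : (1:ℕ) ∈ Finset.Icc 1 n))
        beta_reduce
        split_ifs <;> omega
      · refine le_trans ?_ (Finset.le_sup (by simp; omega : n ∈ Finset.Icc 1 n))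
        beta_reduce
        split_ifs <;> omega
end

section
/- Let n ≥ 6 and i ∈ [n-1]. Then the maximum of d_ℓ(σ,ρ) over all pairs of distinct permutations σ, ρ ∈ D({i};n) equals n-2 if i = 1 or i = n-1, equals n-i if 2 ≤ i ≤ ⌊n/2⌋, and equals i if ⌈n/2⌉ ≤ i ≤ n-2. -/
/-!
A permutation `σ` with the single descent `i` increases on `[1, i]` and on `[i+1, n]`, which pins
every entry to an interval: `j ≤ σ_j ≤ n - i + j` for `j ≤ i`, `j - i ≤ σ_j ≤ j` for `j > i`, and
moreover `σ_i ≥ i + 1`, `σ_{i+1} ≤ i` (otherwise `σ` would fix `[1, i]` resp. `[i+1, n]`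
pointwise and the descent could not happen). The widths of these intervals bound `d_ℓ` on
`D({i};n)`, and the rotation `(n-i+1, …, n, 1, …, n-i)` and the transposition of `i` and `i+1`
attain the bound at position `1`, `i + 2` or `n`.
-/

namespace DSn

variable {n i : ℕ} {σ : ℕ → ℕ}

lemma descent_bounds (hσ : σ ∈ DSn n {i}) : 1 ≤ i ∧ i + 1 ≤ n := by
  have hi : i ∈ DescentSet n σ := by rw [hσ.2]; exact Finset.mem_singleton_self i
  have := (Finset.mem_Icc.1 (Finset.mem_filter.1 hi).1)
  omega

lemma apply_mem (hσ : σ ∈ DSn n {i}) {j : ℕ} (hj : 1 ≤ j) (hjn : j ≤ n) : 1 ≤ σ j ∧ σ j ≤ n :=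
  hσ.1.1 ⟨hj, hjn⟩

lemma apply_succ_lt_apply (hσ : σ ∈ DSn n {i}) : σ (i + 1) < σ i := by
  have hi : i ∈ DescentSet n σ := by rw [hσ.2]; exact Finset.mem_singleton_self i
  exact (Finset.mem_filter.1 hi).2

lemma apply_lt_apply_succ (hσ : σ ∈ DSn n {i}) {j : ℕ} (hj : 1 ≤ j) (hjn : j + 1 ≤ n)
    (hji : j ≠ i) : σ j < σ (j + 1) := by
  have hnot : j ∉ DescentSet n σ := by rw [hσ.2]; simpa using hji
  have hle : σ j ≤ σ (j + 1) := not_lt.1 fun h =>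
    hnot (Finset.mem_filter.2 ⟨Finset.mem_Icc.2 ⟨hj, by omega⟩, h⟩)
  have hne : σ j ≠ σ (j + 1) := fun h =>
    absurd (hσ.1.injOn ⟨hj, by omega⟩ ⟨by omega, hjn⟩ h) (by omega)
  omega

lemma apply_add_sub_le (hσ : σ ∈ DSn n {i}) {a b : ℕ} (ha : 1 ≤ a) (hab : a ≤ b) (hbn : b ≤ n)
    (hi : b ≤ i ∨ i < a) : σ a + (b - a) ≤ σ b := by
  induction b, hab using Nat.le_induction with
  | base => omega
  | succ b hab ih =>
    have := ih (by omega) (by omega)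
    have := apply_lt_apply_succ hσ (by omega) hbn (by omega)
    omega

lemma apply_mem_of_le (hσ : σ ∈ DSn n {i}) {j : ℕ} (hj : 1 ≤ j) (hji : j ≤ i) :
    j ≤ σ j ∧ σ j ≤ n - i + j := by
  have := descent_bounds hσ
  have := apply_add_sub_le hσ le_rfl hj (by omega) (Or.inl (by omega))
  have := apply_add_sub_le hσ hj hji (by omega) (Or.inl le_rfl)
  have := apply_mem hσ le_rfl (by omega : 1 ≤ n)
  have := apply_mem hσ (by omega) (by omega : i ≤ n)
  omega

lemma apply_mem_of_lt (hσ : σ ∈ DSn n {i}) {j : ℕ} (hij : i < j) (hjn : j ≤ n) :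
    j - i ≤ σ j ∧ σ j ≤ j := by
  have := apply_add_sub_le hσ (a := i + 1) (by omega) hij hjn (Or.inr i.lt_add_one)
  have := apply_add_sub_le hσ (by omega) hjn le_rfl (Or.inr hij)
  have := apply_mem hσ (by omega) (by omega : i + 1 ≤ n)
  have := apply_mem hσ (by omega) le_rfl
  omega

lemma succ_le_apply_descent (hσ : σ ∈ DSn n {i}) : i + 1 ≤ σ i := by
  obtain ⟨hi, hin⟩ := descent_bounds hσ
  by_contra! hσi
  have hfix : ∀ j, 1 ≤ j → j ≤ i → σ j = j := fun j hj hji => by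
    have := apply_mem_of_le hσ hj hji
    have := apply_add_sub_le hσ hj hji (by omega) (Or.inl le_rfl)
    omega
  have hdesc := apply_succ_lt_apply hσ
  have hpos := (apply_mem hσ (by omega) hin).1
  have hk := hfix (σ (i + 1)) hpos (by omega)
  have := hσ.1.injOn ⟨hpos, by omega⟩ ⟨by omega, hin⟩ hk
  omega

lemma apply_succ_descent_le (hσ : σ ∈ DSn n {i}) : σ (i + 1) ≤ i := by
  obtain ⟨hi, hin⟩ := descent_bounds hσ
  by_contra! hσi
  have hfix : ∀ j, i < j → j ≤ n → σ j = j := fun j hij hjn => by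
    have := apply_mem_of_lt hσ hij hjn
    have := apply_add_sub_le hσ (a := i + 1) (by omega) hij hjn (Or.inr i.lt_add_one)
    omega
  have hdesc := apply_succ_lt_apply hσ
  have hlt := (apply_mem hσ hi (by omega)).2
  have hk := hfix (σ i) (by omega) hlt
  have := hσ.1.injOn ⟨by omega, hlt⟩ ⟨hi, by omega⟩ hk
  omega

end DSn

lemma dLinf_le_of_mem_DSn {n i B : ℕ} {σ ρ : ℕ → ℕ} (hσ : σ ∈ DSn n {i}) (hρ : ρ ∈ DSn n {i})
    (h_left : 2 ≤ i → n - i ≤ B) (h_descent : n - i - 1 ≤ B) (h_ascent : i - 1 ≤ B)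
    (h_right : i + 2 ≤ n → i ≤ B) : dLinf n σ ρ ≤ B := by
  obtain ⟨hi, hin⟩ := DSn.descent_bounds hσ
  refine Finset.sup_le fun j hj => ?_
  obtain ⟨hj, hjn⟩ := Finset.mem_Icc.1 hj
  rcases lt_trichotomy j i with hji | rfl | hij
  · have := DSn.apply_mem_of_le hσ hj hji.le
    have := DSn.apply_mem_of_le hρ hj hji.le
    have := h_left (by omega)
    omega
  · have := DSn.succ_le_apply_descent hσ
    have := DSn.succ_le_apply_descent hρ
    have := DSn.apply_mem hσ hj hjn
    have := DSn.apply_mem hρ hj hjn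
    omega
  · obtain rfl | hij : j = i + 1 ∨ i + 1 < j := by omega
    · have := DSn.apply_succ_descent_le hσ
      have := DSn.apply_succ_descent_le hρ
      have := DSn.apply_mem hσ hj hjn
      have := DSn.apply_mem hρ hj hjn
      omega
    · have := DSn.apply_mem_of_lt hσ (by omega) hjn
      have := DSn.apply_mem_of_lt hρ (by omega) hjn
      have := h_right (by omega)
      omega

lemma natAbs_sub_le_dLinf {n j : ℕ} (σ ρ : ℕ → ℕ) (hj : 1 ≤ j) (hjn : j ≤ n) :
    ((σ j : ℤ) - ρ j).natAbs ≤ dLinf n σ ρ :=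
  Finset.le_sup (f := fun j => ((σ j : ℤ) - ρ j).natAbs) (Finset.mem_Icc.2 ⟨hj, hjn⟩)

lemma distinctOn_of_dLinf_pos {n : ℕ} {σ ρ : ℕ → ℕ} (h : 0 < dLinf n σ ρ) :
    DistinctOn n σ ρ := by
  obtain ⟨j, hj, hpos⟩ := Finset.lt_sup_iff.1 h
  exact ⟨j, Finset.mem_Icc.1 hj, fun hσρ => by simp [hσρ] at hpos⟩

lemma descentSet_eq_singleton {n i : ℕ} {f : ℕ → ℕ} (hi : 1 ≤ i) (hin : i + 1 ≤ n)
    (h : ∀ j, 1 ≤ j → j + 1 ≤ n → (f (j + 1) < f j ↔ j = i)) : DescentSet n f = {i} := by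
  ext j
  simp only [DescentSet, Finset.mem_filter, Finset.mem_Icc, Finset.mem_singleton]
  constructor
  · rintro ⟨⟨hj, hjn⟩, hdesc⟩
    exact (h j hj (by omega)).1 hdesc
  · rintro rfl
    exact ⟨⟨hi, by omega⟩, (h j hi hin).2 rfl⟩

def blockRotation (n i : ℕ) : ℕ → ℕ := fun j => if j ≤ i then n - i + j else j - i

lemma blockRotation_mapsTo {n i : ℕ} (hin : i ≤ n) :
    Set.MapsTo (blockRotation n i) (Set.Icc 1 n) (Set.Icc 1 n) := by
  intro j ⟨hj, hjn⟩
  simp only [blockRotation, Set.mem_Icc]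
  split_ifs <;> omega

lemma blockRotation_sub_blockRotation {n i j : ℕ} (hin : i ≤ n) (hj : 1 ≤ j) (hjn : j ≤ n) :
    blockRotation n (n - i) (blockRotation n i j) = j := by
  simp only [blockRotation]
  split_ifs <;> omega

lemma blockRotation_mem_DSn {n i : ℕ} (hi : 1 ≤ i) (hin : i + 1 ≤ n) :
    blockRotation n i ∈ DSn n {i} := by
  refine ⟨Set.InvOn.bijOn (f' := blockRotation n (n - i)) ⟨fun j hj => ?_, fun j hj => ?_⟩
    (blockRotation_mapsTo (by omega)) (blockRotation_mapsTo (by omega)),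
    descentSet_eq_singleton hi hin fun j hj hjn => ?_⟩
  · exact blockRotation_sub_blockRotation (by omega) hj.1 hj.2
  · simpa [Nat.sub_sub_self (show i ≤ n by omega)] using
      blockRotation_sub_blockRotation (i := n - i) (Nat.sub_le n i) hj.1 hj.2
  · simp only [blockRotation]
    split_ifs <;> omega

lemma swap_mem_DSn {n i : ℕ} (hi : 1 ≤ i) (hin : i + 1 ≤ n) :
    ⇑(Equiv.swap i (i + 1)) ∈ DSn n {i} := by
  have hmaps : Set.MapsTo (Equiv.swap i (i + 1)) (Set.Icc 1 n) (Set.Icc 1 n) := by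
    intro j ⟨hj, hjn⟩
    simp only [Equiv.swap_apply_def, Set.mem_Icc]
    split_ifs <;> omega
  refine ⟨Set.InvOn.bijOn ⟨fun j _ => Equiv.swap_apply_self _ _ _,
    fun j _ => Equiv.swap_apply_self _ _ _⟩ hmaps hmaps,
    descentSet_eq_singleton hi hin fun j hj hjn => ?_⟩
  simp only [Equiv.swap_apply_def]
  split_ifs <;> omega

def linfDistances (n : ℕ) (S : Finset ℕ) : Set ℕ :=
  {d | ∃ σ ∈ DSn n S, ∃ ρ ∈ DSn n S, DistinctOn n σ ρ ∧ d = dLinf n σ ρ}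

lemma isGreatest_linfDistances {n i B j : ℕ} (hi : 1 ≤ i) (hin : i + 1 ≤ n) (hB : 0 < B)
    (h_left : 2 ≤ i → n - i ≤ B) (h_descent : n - i - 1 ≤ B) (h_ascent : i - 1 ≤ B)
    (h_right : i + 2 ≤ n → i ≤ B) (hj : 1 ≤ j) (hjn : j ≤ n)
    (h_attained : B ≤ ((blockRotation n i j : ℤ) - Equiv.swap i (i + 1) j).natAbs) :
    IsGreatest (linfDistances n {i}) B := by
  have hσ := blockRotation_mem_DSn hi hin
  have hρ := swap_mem_DSn hi hin
  have hdist : dLinf n (blockRotation n i) (Equiv.swap i (i + 1)) = B :=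
    le_antisymm (dLinf_le_of_mem_DSn hσ hρ h_left h_descent h_ascent h_right)
      (h_attained.trans (natAbs_sub_le_dLinf _ _ hj hjn))
  refine ⟨⟨_, hσ, _, hρ, distinctOn_of_dLinf_pos (by omega), hdist.symm⟩, ?_⟩
  rintro d ⟨σ, hσ, ρ, hρ, -, rfl⟩
  exact dLinf_le_of_mem_DSn hσ hρ h_left h_descent h_ascent h_right

theorem stmt10_general (n i : ℕ) (hn : 6 ≤ n) :
    ((i = 1 ∨ i = n - 1) →
      IsGreatest {d : ℕ | ∃ σ ∈ DSn n {i}, ∃ ρ ∈ DSn n {i},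
        DistinctOn n σ ρ ∧ d = dLinf n σ ρ} (n - 2)) ∧
    (2 ≤ i ∧ i ≤ n / 2 →
      IsGreatest {d : ℕ | ∃ σ ∈ DSn n {i}, ∃ ρ ∈ DSn n {i},
        DistinctOn n σ ρ ∧ d = dLinf n σ ρ} (n - i)) ∧
    ((n + 1) / 2 ≤ i ∧ i ≤ n - 2 →
      IsGreatest {d : ℕ | ∃ σ ∈ DSn n {i}, ∃ ρ ∈ DSn n {i},
        DistinctOn n σ ρ ∧ d = dLinf n σ ρ} i) := by
  refine ⟨?_, ?_, ?_⟩
  · rintro (rfl | rfl)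
    · refine isGreatest_linfDistances (j := 1) le_rfl (by omega) (by omega) (by omega)
        (by omega) (by omega) (by omega) le_rfl (by omega) ?_
      simp only [blockRotation, Equiv.swap_apply_def]
      split_ifs <;> omega
    · refine isGreatest_linfDistances (j := n) (by omega) (by omega) (by omega) (by omega)
        (by omega) (by omega) (by omega) (by omega) le_rfl ?_
      simp only [blockRotation, Equiv.swap_apply_def]
      split_ifs <;> omega
  · rintro ⟨hi, hin⟩
    refine isGreatest_linfDistances (j := 1) (by omega) (by omega) (by omega) (fun _ => le_rfl)
      (by omega) (by omega) (fun _ => by omega) le_rfl (by omega) ?_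
    simp only [blockRotation, Equiv.swap_apply_def]
    split_ifs <;> omega
  · rintro ⟨hi, hin⟩
    refine isGreatest_linfDistances (j := i + 2) (by omega) (by omega) (by omega)
      (fun _ => by omega) (by omega) (by omega) (fun _ => le_rfl) (by omega) (by omega) ?_
    simp only [blockRotation, Equiv.swap_apply_def]
    split_ifs <;> omega

/-- Maximum `ℓ∞` distance over `D({i};n)` for `n ≥ 6`:
`n-2` if `i = 1` or `i = n-1`; `n-i` if `2 ≤ i ≤ ⌊n/2⌋`; `i` if `⌈n/2⌉ ≤ i ≤ n-2`. -/
theorem stmt10 (n i : ℕ) (hn : 6 ≤ n) (hi1 : 1 ≤ i) (hi2 : i ≤ n - 1) :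
    ((i = 1 ∨ i = n - 1) →
      IsGreatest {d : ℕ | ∃ σ ∈ DSn n {i}, ∃ ρ ∈ DSn n {i},
        DistinctOn n σ ρ ∧ d = dLinf n σ ρ} (n - 2)) ∧
    (2 ≤ i ∧ i ≤ n / 2 →
      IsGreatest {d : ℕ | ∃ σ ∈ DSn n {i}, ∃ ρ ∈ DSn n {i},
        DistinctOn n σ ρ ∧ d = dLinf n σ ρ} (n - i)) ∧
    ((n + 1) / 2 ≤ i ∧ i ≤ n - 2 →
      IsGreatest {d : ℕ | ∃ σ ∈ DSn n {i}, ∃ ρ ∈ DSn n {i},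
        DistinctOn n σ ρ ∧ d = dLinf n σ ρ} i) :=
  stmt10_general n i hn
end

section
/- Let n ≥ 6 and i ∈ [n-1]. Then for every pair of permutations π, τ ∈ D({i};n), d_ℓ(π,τ) ≤ n-2 if i = 1 or i = n-1, d_ℓ(π,τ) ≤ n-i if 2 ≤ i ≤ ⌊n/2⌋, and d_ℓ(π,τ) ≤ i if ⌈n/2⌉ ≤ i ≤ n-2. -/
lemma DSn.val_bounds {n i : ℕ} {σ : ℕ → ℕ} (hσ : σ ∈ DSn n {i}) {j : ℕ}
    (h1 : 1 ≤ j) (h2 : j ≤ n) : 1 ≤ σ j ∧ σ j ≤ n := by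
  have := hσ.1.1 (Set.mem_Icc.mpr ⟨h1, h2⟩)
  exact Set.mem_Icc.mp this

lemma DSn.ascend {n i : ℕ} {σ : ℕ → ℕ} (hσ : σ ∈ DSn n {i}) {p : ℕ}
    (h1 : 1 ≤ p) (h2 : p + 1 ≤ n) (h3 : p ≠ i) : σ p < σ (p + 1) := by
  rcases lt_trichotomy (σ (p+1)) (σ p) with hlt | heq | hgt
  · exfalso
    have hp : p ∈ DescentSet n σ := by
      rw [DescentSet, Finset.mem_filter, Finset.mem_Icc]
      exact ⟨⟨h1, by omega⟩, hlt⟩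
    rw [hσ.2, Finset.mem_singleton] at hp
    exact h3 hp
  · exfalso
    have := hσ.1.2.1 (Set.mem_Icc.mpr ⟨by omega, by omega⟩)
      (Set.mem_Icc.mpr ⟨h1, by omega⟩) heq
    omega
  · exact hgt

lemma DSn.descend {n i : ℕ} {σ : ℕ → ℕ} (hσ : σ ∈ DSn n {i}) :
    σ (i + 1) < σ i := by
  have : i ∈ DescentSet n σ := hσ.2 ▸ Finset.mem_singleton_self i
  exact (Finset.mem_filter.mp this).2

lemma DSn.chain {n i : ℕ} {σ : ℕ → ℕ} (hσ : σ ∈ DSn n {i}) (j d : ℕ)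
    (h1 : 1 ≤ j) :
    j + d ≤ n → (i < j ∨ j + d ≤ i) → σ j + d ≤ σ (j + d) := by
  induction d with
  | zero => intro _ _; simp
  | succ d ih =>
    intro h2 h3
    have hih := ih (by omega) (by omega)
    have hstep := DSn.ascend hσ (p := j + d) (by omega) (by omega) (by omega)
    have e : j + (d + 1) = (j + d) + 1 := by omega
    rw [e]
    omega

lemma DSn.pos_bounds {n i : ℕ} {σ : ℕ → ℕ} (hσ : σ ∈ DSn n {i})
    (h1 : 1 ≤ i) (h2 : i ≤ n - 1) (hn : 1 ≤ n) {j : ℕ}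
    (hj1 : 1 ≤ j) (hj2 : j ≤ n) :
    (j ≤ i → j ≤ σ j ∧ σ j + (i - j) ≤ n) ∧
    (i < j → j ≤ σ j + i ∧ σ j ≤ j) := by
  constructor
  · intro hji
    constructor
    · have hc := DSn.chain hσ 1 (j - 1) le_rfl (by omega) (by omega)
      have e : 1 + (j - 1) = j := by omega
      rw [e] at hc
      have := (DSn.val_bounds hσ le_rfl (by omega)).1
      omega
    · have hc := DSn.chain hσ j (i - j) hj1 (by omega) (by omega)
      have e : j + (i - j) = i := by omega
      rw [e] at hc
      have := (DSn.val_bounds hσ h1 (by omega)).2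
      omega
  · intro hij
    constructor
    · have hc := DSn.chain hσ (i + 1) (j - i - 1) (by omega) (by omega) (by omega)
      have e : (i + 1) + (j - i - 1) = j := by omega
      rw [e] at hc
      have := (DSn.val_bounds hσ (show 1 ≤ i + 1 by omega) (by omega)).1
      omega
    · have hc := DSn.chain hσ j (n - j) hj1 (by omega) (by omega)
      have e : j + (n - j) = n := by omega
      rw [e] at hc
      have := (DSn.val_bounds hσ (show (1:ℕ) ≤ n by omega) le_rfl).2
      omega

/-- Upper bounds on `d_ℓ` over `D({i};n)` for `n ≥ 6`:
`n-2` if `i = 1` or `i = n-1`; `n-i` if `2 ≤ i ≤ ⌊n/2⌋`; `i` if `⌈n/2⌉ ≤ i ≤ n-2`. -/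
theorem stmt12 (n i : ℕ) (hn : 6 ≤ n) (hi1 : 1 ≤ i) (hi2 : i ≤ n - 1)
    (π τ : ℕ → ℕ) (hπ : π ∈ DSn n {i}) (hτ : τ ∈ DSn n {i}) :
    ((i = 1 ∨ i = n - 1) → dLinf n π τ ≤ n - 2) ∧
    (2 ≤ i ∧ i ≤ n / 2 → dLinf n π τ ≤ n - i) ∧
    ((n + 1) / 2 ≤ i ∧ i ≤ n - 2 → dLinf n π τ ≤ i) := by
  refine ⟨?_, ?_, ?_⟩
  · rintro (rfl | rfl)
    · apply Finset.sup_le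
      intro j hj
      rw [Finset.mem_Icc] at hj
      have hπb := DSn.pos_bounds hπ hi1 hi2 (by omega) hj.1 hj.2
      have hτb := DSn.pos_bounds hτ hi1 hi2 (by omega) hj.1 hj.2
      rcases eq_or_lt_of_le hj.1 with hj1 | hj1
      · subst hj1
        have hπd := DSn.descend hπ
        have hτd := DSn.descend hτ
        have hπ2 := (DSn.val_bounds hπ (j := 1 + 1) (by omega) (by omega)).1
        have hτ2 := (DSn.val_bounds hτ (j := 1 + 1) (by omega) (by omega)).1
        have hπ1 := (DSn.val_bounds hπ (j := 1) (by omega) (by omega)).2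
        have hτ1 := (DSn.val_bounds hτ (j := 1) (by omega) (by omega)).2
        omega
      · have h1 := hπb.2 hj1
        have h2 := hτb.2 hj1
        omega
    · apply Finset.sup_le
      intro j hj
      rw [Finset.mem_Icc] at hj
      have hπb := DSn.pos_bounds hπ hi1 hi2 (by omega) hj.1 hj.2
      have hτb := DSn.pos_bounds hτ hi1 hi2 (by omega) hj.1 hj.2
      rcases eq_or_lt_of_le hj.2 with hjn | hjn
      · subst hjn
        have hπd := DSn.descend hπ
        have hτd := DSn.descend hτ
        have e : j - 1 + 1 = j := by omega
        rw [e] at hπd hτd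
        have hπ1 := (DSn.val_bounds hπ (j := j - 1) (by omega) (by omega)).2
        have hτ1 := (DSn.val_bounds hτ (j := j - 1) (by omega) (by omega)).2
        have hπ2 := (DSn.val_bounds hπ (j := j) (by omega) (by omega)).1
        have hτ2 := (DSn.val_bounds hτ (j := j) (by omega) (by omega)).1
        omega
      · have h1 := hπb.1 (by omega)
        have h2 := hτb.1 (by omega)
        omega
  · rintro ⟨h2i, hin2⟩
    apply Finset.sup_le
    intro j hj
    rw [Finset.mem_Icc] at hj
    have hπb := DSn.pos_bounds hπ hi1 hi2 (by omega) hj.1 hj.2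
    have hτb := DSn.pos_bounds hτ hi1 hi2 (by omega) hj.1 hj.2
    rcases le_or_gt j i with hji | hji
    · have h1 := hπb.1 hji
      have h2 := hτb.1 hji
      omega
    · have h1 := hπb.2 hji
      have h2 := hτb.2 hji
      omega
  · rintro ⟨h2i, hin2⟩
    apply Finset.sup_le
    intro j hj
    rw [Finset.mem_Icc] at hj
    have hπb := DSn.pos_bounds hπ hi1 hi2 (by omega) hj.1 hj.2
    have hτb := DSn.pos_bounds hτ hi1 hi2 (by omega) hj.1 hj.2
    rcases le_or_gt j i with hji | hji
    · have h1 := hπb.1 hji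
      have h2 := hτb.1 hji
      omega
    · have h1 := hπb.2 hji
      have h2 := hτb.2 hji
      omega
end

section
/- Let n ≥ 3 and let S be a nonempty proper subset of [n-1]. Then the maximum of d_ℓ over pairs of distinct permutations in D(S;n) equals the maximum of d_ℓ over pairs of distinct permutations in D(S̄;n), where S̄ = [n-1] \ S. -/
/-!
Complementation `σ ↦ n + 1 - σ` is an involution of `S_n` that turns every ascent into a descent
and vice versa, so it maps `D(S;n)` bijectively onto `D(S̄;n)`; it also preserves `d_ℓ`, since
`|(n + 1 - σᵢ) - (n + 1 - ρᵢ)| = |σᵢ - ρᵢ|`. Hence both classes realise the same set of distances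
between distinct permutations, and in particular have the same maximum.
-/

def complement (n : ℕ) (σ : ℕ → ℕ) : ℕ → ℕ := fun i => n + 1 - σ i

def distinctDistances (n : ℕ) (S : Finset ℕ) : Set ℕ :=
  {d | ∃ σ ∈ DSn n S, ∃ ρ ∈ DSn n S, DistinctOn n σ ρ ∧ d = dLinf n σ ρ}

namespace IsPermOn

variable {n : ℕ} {σ : ℕ → ℕ}

theorem mem_Icc (h : IsPermOn n σ) {i : ℕ} (hi : i ∈ Set.Icc 1 n) : 1 ≤ σ i ∧ σ i ≤ n :=
  h.mapsTo hi

theorem complement (h : IsPermOn n σ) : IsPermOn n (complement n σ) := by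
  refine ⟨fun i hi => ?_, fun i hi j hj hij => ?_, fun y hy => ?_⟩
  · have := h.mem_Icc hi
    simp only [_root_.complement, Set.mem_Icc]
    omega
  · have := h.mem_Icc hi
    have := h.mem_Icc hj
    simp only [_root_.complement] at hij
    exact h.injOn hi hj (by omega)
  · obtain ⟨hy₁, hy₂⟩ := hy
    obtain ⟨i, hi, hσi⟩ := h.surjOn (show n + 1 - y ∈ Set.Icc 1 n from ⟨by omega, by omega⟩)
    exact ⟨i, hi, by simp only [_root_.complement, hσi]; omega⟩

end IsPermOn

theorem descentSet_complement {n : ℕ} {σ : ℕ → ℕ} (h : IsPermOn n σ) :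
    DescentSet n (complement n σ) = Finset.Icc 1 (n - 1) \ DescentSet n σ := by
  rw [DescentSet, DescentSet, ← Finset.filter_not]
  refine Finset.filter_congr fun i hi => ?_
  obtain ⟨hi₁, hi₂⟩ := Finset.mem_Icc.mp hi
  have hi : i ∈ Set.Icc 1 n := ⟨hi₁, by omega⟩
  have hi' : i + 1 ∈ Set.Icc 1 n := ⟨by omega, by omega⟩
  have hne : σ i ≠ σ (i + 1) := fun heq => by have := h.injOn hi hi' heq; omega
  have := h.mem_Icc hi
  have := h.mem_Icc hi'
  simp only [complement]
  omega

theorem dLinf_complement {n : ℕ} {σ ρ : ℕ → ℕ} (hσ : IsPermOn n σ) (hρ : IsPermOn n ρ) :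
    dLinf n (complement n σ) (complement n ρ) = dLinf n σ ρ := by
  refine Finset.sup_congr rfl fun i hi => ?_
  have hi : i ∈ Set.Icc 1 n := Finset.mem_Icc.mp hi
  have := hσ.mem_Icc hi
  have := hρ.mem_Icc hi
  simp only [complement]
  omega

theorem DistinctOn.complement {n : ℕ} {σ ρ : ℕ → ℕ} (hσ : IsPermOn n σ) (hρ : IsPermOn n ρ)
    (h : DistinctOn n σ ρ) : DistinctOn n (complement n σ) (complement n ρ) := by
  obtain ⟨i, hi, hne⟩ := h
  have := hσ.mem_Icc hi
  have := hρ.mem_Icc hi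
  exact ⟨i, hi, by simp only [_root_.complement]; omega⟩

theorem complement_mem_DSn {n : ℕ} {S : Finset ℕ} {σ : ℕ → ℕ} (h : σ ∈ DSn n S) :
    complement n σ ∈ DSn n (Finset.Icc 1 (n - 1) \ S) :=
  ⟨h.1.complement, by rw [descentSet_complement h.1, h.2]⟩

theorem distinctDistances_subset_compl (n : ℕ) (S : Finset ℕ) :
    distinctDistances n S ⊆ distinctDistances n (Finset.Icc 1 (n - 1) \ S) := by
  rintro _ ⟨σ, hσ, ρ, hρ, hσρ, rfl⟩
  exact ⟨complement n σ, complement_mem_DSn hσ, complement n ρ, complement_mem_DSn hρ,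
    hσρ.complement hσ.1 hρ.1, (dLinf_complement hσ.1 hρ.1).symm⟩

theorem distinctDistances_compl {n : ℕ} {S : Finset ℕ} (hS : S ⊆ Finset.Icc 1 (n - 1)) :
    distinctDistances n (Finset.Icc 1 (n - 1) \ S) = distinctDistances n S := by
  refine (distinctDistances_subset_compl n _).antisymm' ?_
  have hcompl : Finset.Icc 1 (n - 1) \ (Finset.Icc 1 (n - 1) \ S) = S :=
    sdiff_sdiff_eq_self hS
  simpa only [hcompl] using distinctDistances_subset_compl n (Finset.Icc 1 (n - 1) \ S)

theorem stmt16_general (n : ℕ) (S : Finset ℕ)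
    (hsub : S ⊆ Finset.Icc 1 (n - 1)) :
    ∀ m : ℕ,
      IsGreatest {d : ℕ | ∃ σ ∈ DSn n S, ∃ ρ ∈ DSn n S,
        DistinctOn n σ ρ ∧ d = dLinf n σ ρ} m ↔
      IsGreatest {d : ℕ | ∃ σ ∈ DSn n (Finset.Icc 1 (n - 1) \ S),
        ∃ ρ ∈ DSn n (Finset.Icc 1 (n - 1) \ S),
        DistinctOn n σ ρ ∧ d = dLinf n σ ρ} m := by
  intro m
  change IsGreatest (distinctDistances n S) m ↔
    IsGreatest (distinctDistances n (Finset.Icc 1 (n - 1) \ S)) m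
  rw [distinctDistances_compl hsub]

/-- For nonempty proper `S ⊆ [n-1]`, the maximum `ℓ∞` distance over `D(S;n)`
equals the maximum `ℓ∞` distance over `D(S̄;n)`, where `S̄ = [n-1] \ S`. -/
theorem stmt16 (n : ℕ) (hn : 3 ≤ n) (S : Finset ℕ)
    (hsub : S ⊆ Finset.Icc 1 (n - 1)) (hne : S.Nonempty)
    (hproper : S ≠ Finset.Icc 1 (n - 1)) :
    ∀ m : ℕ,
      IsGreatest {d : ℕ | ∃ σ ∈ DSn n S, ∃ ρ ∈ DSn n S,
        DistinctOn n σ ρ ∧ d = dLinf n σ ρ} m ↔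
      IsGreatest {d : ℕ | ∃ σ ∈ DSn n (Finset.Icc 1 (n - 1) \ S),
        ∃ ρ ∈ DSn n (Finset.Icc 1 (n - 1) \ S),
        DistinctOn n σ ρ ∧ d = dLinf n σ ρ} m :=
  stmt16_general n S hsub
end

section
/- Let n ≥ 3 and i ∈ {2, 3, …, n-1}, and let S̄ = {n-i+1, n-i+2, …, n-1}. Then the maximum of d_ℓ(σ,ρ) over all pairs of distinct permutations σ, ρ ∈ D(S̄;n) equals max{i-1, n-i}. -/
lemma chain_inc_s17 (σ : ℕ → ℕ) (a : ℕ) :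
    ∀ k, (∀ j, a ≤ j → j < a + k → σ j < σ (j + 1)) → σ a + k ≤ σ (a + k) := by
  intro k
  induction k with
  | zero => simp
  | succ m ih =>
    intro h
    have h1 := ih (fun j hj hj' => h j hj (by omega))
    have h2 := h (a + m) (by omega) (by omega)
    show σ a + (m + 1) ≤ σ (a + m + 1)
    omega

lemma chain_dec_s17 (σ : ℕ → ℕ) (a : ℕ) :
    ∀ k, (∀ j, a ≤ j → j < a + k → σ (j + 1) < σ j) → σ (a + k) + k ≤ σ a := by
  intro k
  induction k with
  | zero => simp
  | succ m ih =>
    intro h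
    have h1 := ih (fun j hj hj' => h j hj (by omega))
    have h2 := h (a + m) (by omega) (by omega)
    show σ (a + m + 1) + (m + 1) ≤ σ a
    omega

lemma perm_bounds (n p : ℕ) (hp : 2 ≤ p) (hpn : p + 1 ≤ n) (σ : ℕ → ℕ)
    (hσ : σ ∈ DSn n (Finset.Icc p (n - 1))) :
    ∀ j, 1 ≤ j → j ≤ n →
      (j ≤ p → j ≤ σ j ∧ σ j + p ≤ n + j) ∧ (p ≤ j → σ j + j ≤ n + p ∧ n + 1 ≤ σ j + j) := by
  obtain ⟨hperm, hdesc⟩ := hσ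
  have hup : ∀ j, 1 ≤ j → j ≤ n → 1 ≤ σ j ∧ σ j ≤ n := by
    intro j h1 h2
    have := hperm.1 (Set.mem_Icc.mpr ⟨h1, h2⟩)
    exact Set.mem_Icc.mp this
  have hd : ∀ j, 1 ≤ j → j ≤ n - 1 → (σ (j + 1) < σ j ↔ p ≤ j) := by
    intro j h1 h2
    have := Finset.ext_iff.mp hdesc j
    rw [DescentSet, Finset.mem_filter, Finset.mem_Icc, Finset.mem_Icc] at this
    omega
  have hinc : ∀ j, 1 ≤ j → j < p → σ j < σ (j + 1) := by
    intro j h1 h2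
    have hiff := hd j h1 (by omega)
    have hne : σ j ≠ σ (j + 1) := by
      intro he
      have := hperm.2.1 (Set.mem_Icc.mpr ⟨h1, by omega⟩)
        (Set.mem_Icc.mpr (by constructor <;> omega)) he
      omega
    omega
  have hdec : ∀ j, p ≤ j → j < n → σ (j + 1) < σ j := by
    intro j h1 h2
    exact (hd j (by omega) (by omega)).mpr h1
  intro j h1 hjn
  constructor
  · intro hjp
    constructor
    · have hch := chain_inc_s17 σ 1 (j - 1) (fun t ht ht' => hinc t ht (by omega))
      have e : 1 + (j - 1) = j := by omega
      rw [e] at hch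
      have := (hup 1 le_rfl (by omega)).1
      omega
    · have hch := chain_inc_s17 σ j (p - j) (fun t ht ht' => hinc t (by omega) (by omega))
      have e : j + (p - j) = p := by omega
      rw [e] at hch
      have := (hup p (by omega) (by omega)).2
      omega
  · intro hpj
    constructor
    · have hch := chain_dec_s17 σ p (j - p) (fun t ht ht' => hdec t ht (by omega))
      have e : p + (j - p) = j := by omega
      rw [e] at hch
      have := (hup p (by omega) (by omega)).2
      omega
    · have hch := chain_dec_s17 σ j (n - j) (fun t ht ht' => hdec t (by omega) (by omega))
      have e : j + (n - j) = n := by omega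
      rw [e] at hch
      have := (hup n (by omega) le_rfl).1
      omega

def sig0 (n p : ℕ) : ℕ → ℕ := fun j => if j < p then j else if j = p then n else n + p - j

def rho0 (n i p : ℕ) : ℕ → ℕ := fun j => if j ≤ p then i - 1 + j else n + 1 - j

lemma sig0_mem (n i p : ℕ) (hpi : p + i = n + 1) (hp2 : 2 ≤ p) (hi2 : 2 ≤ i) :
    sig0 n p ∈ DSn n (Finset.Icc p (n - 1)) := by
  constructor
  · have hm : Set.MapsTo (sig0 n p) (Set.Icc 1 n) (Set.Icc 1 n) := by
      intro j hj
      rw [Set.mem_Icc] at *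
      simp only [sig0]
      split_ifs <;> omega
    refine ((Set.finite_Icc 1 n).injOn_iff_bijOn_of_mapsTo hm).mp ?_
    intro a ha b hb hab
    rw [Set.mem_Icc] at ha hb
    simp only [sig0] at hab
    split_ifs at hab <;> omega
  · ext j
    rw [DescentSet, Finset.mem_filter, Finset.mem_Icc, Finset.mem_Icc]
    simp only [sig0]
    split_ifs <;> omega

lemma rho0_mem (n i p : ℕ) (hpi : p + i = n + 1) (hp2 : 2 ≤ p) (hi2 : 2 ≤ i) :
    rho0 n i p ∈ DSn n (Finset.Icc p (n - 1)) := by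
  constructor
  · have hm : Set.MapsTo (rho0 n i p) (Set.Icc 1 n) (Set.Icc 1 n) := by
      intro j hj
      rw [Set.mem_Icc] at *
      simp only [rho0]
      split_ifs <;> omega
    refine ((Set.finite_Icc 1 n).injOn_iff_bijOn_of_mapsTo hm).mp ?_
    intro a ha b hb hab
    rw [Set.mem_Icc] at ha hb
    simp only [rho0] at hab
    split_ifs at hab <;> omega
  · ext j
    rw [DescentSet, Finset.mem_filter, Finset.mem_Icc, Finset.mem_Icc]
    simp only [rho0]
    split_ifs <;> omega

/-- For `S̄ = {n-i+1,…,n-1}` with `2 ≤ i ≤ n-1`, the maximum `ℓ∞` distance over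
`D(S̄;n)` is `max (i-1) (n-i)`. -/
theorem stmt17 (n i : ℕ) (hn : 3 ≤ n) (hi1 : 2 ≤ i) (hi2 : i ≤ n - 1) :
    IsGreatest {d : ℕ | ∃ σ ∈ DSn n (Finset.Icc (n - i + 1) (n - 1)),
      ∃ ρ ∈ DSn n (Finset.Icc (n - i + 1) (n - 1)),
      DistinctOn n σ ρ ∧ d = dLinf n σ ρ} (max (i - 1) (n - i)) := by
  set p := n - i + 1 with hpdef
  have hpi : p + i = n + 1 := by omega
  have hp2 : 2 ≤ p := by omega
  have hpn : p + 1 ≤ n := by omega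
  constructor
  · refine ⟨sig0 n p, sig0_mem n i p hpi hp2 hi1, rho0 n i p, rho0_mem n i p hpi hp2 hi1,
      ⟨1, Set.mem_Icc.mpr ⟨le_rfl, by omega⟩, ?_⟩, ?_⟩
    · simp only [sig0, rho0]
      split_ifs <;> omega
    · simp only [dLinf]
      apply le_antisymm
      · have hm1 : (1 : ℕ) ∈ Finset.Icc 1 n := by rw [Finset.mem_Icc]; omega
        have hm2 : p + 1 ∈ Finset.Icc 1 n := by rw [Finset.mem_Icc]; omega
        have t1 := Finset.le_sup
          (f := fun t => ((sig0 n p t : ℤ) - (rho0 n i p t : ℤ)).natAbs) hm1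
        have t2 := Finset.le_sup
          (f := fun t => ((sig0 n p t : ℤ) - (rho0 n i p t : ℤ)).natAbs) hm2
        have v1 : sig0 n p 1 = 1 := by simp only [sig0]; split_ifs <;> omega
        have v2 : rho0 n i p 1 = i := by simp only [rho0]; split_ifs <;> omega
        have v3 : sig0 n p (p + 1) = n - 1 := by simp only [sig0]; split_ifs <;> omega
        have v4 : rho0 n i p (p + 1) = i - 1 := by simp only [rho0]; split_ifs <;> omega
        rw [v1, v2] at t1
        rw [v3, v4] at t2
        omega
      · apply Finset.sup_le
        intro j hj
        rw [Finset.mem_Icc] at hj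
        simp only [sig0, rho0]
        split_ifs <;> omega
  · rintro d ⟨σ, hσ, ρ, hρ, -, rfl⟩
    simp only [dLinf]
    apply Finset.sup_le
    intro j hj
    rw [Finset.mem_Icc] at hj
    have Pσ := perm_bounds n p hp2 hpn σ hσ j hj.1 hj.2
    have Pρ := perm_bounds n p hp2 hpn ρ hρ j hj.1 hj.2
    by_cases hc : j ≤ p
    · have a1 := Pσ.1 hc
      have a2 := Pρ.1 hc
      omega
    · have a1 := Pσ.2 (by omega)
      have a2 := Pρ.2 (by omega)
      omega
end

section
/- Let n ≥ 6 and i ∈ [n-1], and let S̄ = [n-1] \ {i}. Then the maximum of d_ℓ(σ,ρ) over all pairs of distinct permutations σ, ρ ∈ D(S̄;n) equals n-2 if i = 1 or i = n-1, equals n-i if 2 ≤ i ≤ ⌊n/2⌋, and equals i if ⌈n/2⌉ ≤ i ≤ n-2. -/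
/- ---------- auxiliary lemmas ---------- -/

/-- A strictly decreasing run: quantitative version. -/
lemma chain_le_aux (σ : ℕ → ℕ) (a b : ℕ)
    (h : ∀ p, a ≤ p → p < b → σ (p + 1) < σ p) :
    ∀ k, a ≤ k → k ≤ b → ∀ j, a ≤ j → j ≤ k → σ k + (k - j) ≤ σ j := by
  intro k
  induction k with
  | zero =>
    intro _ _ j _ hjk
    have hj0 : j = 0 := by omega
    subst hj0; simp
  | succ m ih =>
    intro hak hkb j haj hjk
    rcases Nat.eq_or_lt_of_le hjk with he | hl
    · subst he; simp
    · have h1 : σ (m + 1) < σ m := h m (by omega) (by omega)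
      have h2 := ih (by omega) (by omega) j haj (by omega)
      omega

/-- Extract pointwise facts from membership in `DSn n ([1,n-1] \ {i})`. -/
lemma dsn_facts (n i : ℕ) (hn : 6 ≤ n) (hi1 : 1 ≤ i) (hi2 : i ≤ n - 1)
    (σ : ℕ → ℕ) (hσ : σ ∈ DSn n (Finset.Icc 1 (n - 1) \ {i})) :
    (∀ j, 1 ≤ j → j ≤ n → 1 ≤ σ j ∧ σ j ≤ n) ∧
    (∀ p, 1 ≤ p → p ≤ n - 1 → p ≠ i → σ (p + 1) < σ p) ∧
    σ i < σ (i + 1) := by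
  obtain ⟨⟨hmap, hinj, -⟩, hdesc⟩ := hσ
  have hval : ∀ j, 1 ≤ j → j ≤ n → 1 ≤ σ j ∧ σ j ≤ n := by
    intro j h1 h2
    have := hmap (Set.mem_Icc.mpr ⟨h1, h2⟩)
    exact Set.mem_Icc.mp this
  refine ⟨hval, ?_, ?_⟩
  · intro p h1 h2 hpi
    have hp : p ∈ Finset.Icc 1 (n - 1) \ {i} := by
      simp [Finset.mem_sdiff, Finset.mem_Icc, h1, h2, hpi]
    rw [← hdesc] at hp
    simp only [DescentSet, Finset.mem_filter] at hp
    exact hp.2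
  · have hi : i ∉ Finset.Icc 1 (n - 1) \ {i} := by simp
    rw [← hdesc] at hi
    simp only [DescentSet, Finset.mem_filter, Finset.mem_Icc, not_and, not_lt] at hi
    have hle : σ i ≤ σ (i + 1) := hi ⟨hi1, hi2⟩
    have hne : σ i ≠ σ (i + 1) := by
      intro he
      have : i = i + 1 := hinj (Set.mem_Icc.mpr ⟨hi1, by omega⟩)
        (Set.mem_Icc.mpr ⟨by omega, by omega⟩) he
      omega
    omega

/-- The key pointwise bounds for a permutation in `DSn n ([1,n-1] \ {i})`. -/
lemma dsn_bounds (n i : ℕ) (hn : 6 ≤ n) (hi1 : 1 ≤ i) (hi2 : i ≤ n - 1)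
    (σ : ℕ → ℕ) (hσ : σ ∈ DSn n (Finset.Icc 1 (n - 1) \ {i})) :
    ∀ j, 1 ≤ j → j ≤ n →
      (j ≤ i → i + 1 - j ≤ σ j ∧ σ j ≤ n + 1 - j) ∧
      (i < j → n + 1 - j ≤ σ j ∧ σ j ≤ n + i + 1 - j) ∧
      (i = 1 → j = 1 → σ j ≤ n - 1) ∧
      (i = n - 1 → j = n → 2 ≤ σ j) := by
  obtain ⟨hval, hdesc, hasc⟩ := dsn_facts n i hn hi1 hi2 σ hσ
  have hchain1 : ∀ p, 1 ≤ p → p < i → σ (p + 1) < σ p := by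
    intro p h1 h2; exact hdesc p h1 (by omega) (by omega)
  have hchain2 : ∀ p, i + 1 ≤ p → p < n → σ (p + 1) < σ p := by
    intro p h1 h2; exact hdesc p (by omega) (by omega) (by omega)
  have C1 := chain_le_aux σ 1 i hchain1
  have C2 := chain_le_aux σ (i + 1) n hchain2
  intro j h1 h2
  refine ⟨?_, ?_, ?_, ?_⟩
  · intro hji
    have b1 := C1 i hi1 le_rfl j h1 hji
    have b2 := C1 j h1 hji 1 le_rfl h1
    have v1 := hval i hi1 (by omega)
    have v2 := hval 1 (by omega) (by omega)
    have v3 := hval j h1 h2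
    omega
  · intro hij
    have b1 := C2 n (by omega) le_rfl j (by omega) h2
    have b2 := C2 j (by omega) h2 (i + 1) le_rfl (by omega)
    have v1 := hval n (by omega) le_rfl
    have v2 := hval (i + 1) (by omega) (by omega)
    have v3 := hval j h1 h2
    omega
  · intro hi1' hj1
    have v2 := hval 2 (by omega) (by omega)
    rw [hi1'] at hasc
    norm_num at hasc
    rw [hj1]
    omega
  · intro hin hjn
    have v2 := hval (n - 1) (by omega) (by omega)
    have hs : σ (n - 1) < σ (n - 1 + 1) := by rw [← hin]; exact hasc
    have hnn : n - 1 + 1 = n := by omega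
    rw [hnn] at hs
    rw [hjn]
    omega

/-- Membership helper: build membership in `DSn` from maps-to, inj-on and descent data. -/
lemma mem_DSn_helper (n : ℕ) (S : Finset ℕ) (σ : ℕ → ℕ)
    (hmap : Set.MapsTo σ (Set.Icc 1 n) (Set.Icc 1 n))
    (hinj : Set.InjOn σ (Set.Icc 1 n))
    (hdesc : DescentSet n σ = S) :
    σ ∈ DSn n S :=
  ⟨((Set.finite_Icc 1 n).injOn_iff_bijOn_of_mapsTo hmap).mp hinj, hdesc⟩

/-- Maximum `ℓ∞` distance over `D([n-1] \ {i};n)` for `n ≥ 6`: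
`n-2` if `i = 1` or `i = n-1`; `n-i` if `2 ≤ i ≤ ⌊n/2⌋`; `i` if `⌈n/2⌉ ≤ i ≤ n-2`. -/
theorem stmt18 (n i : ℕ) (hn : 6 ≤ n) (hi1 : 1 ≤ i) (hi2 : i ≤ n - 1) :
    ((i = 1 ∨ i = n - 1) →
      IsGreatest {d : ℕ | ∃ σ ∈ DSn n (Finset.Icc 1 (n - 1) \ {i}),
        ∃ ρ ∈ DSn n (Finset.Icc 1 (n - 1) \ {i}),
        DistinctOn n σ ρ ∧ d = dLinf n σ ρ} (n - 2)) ∧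
    (2 ≤ i ∧ i ≤ n / 2 →
      IsGreatest {d : ℕ | ∃ σ ∈ DSn n (Finset.Icc 1 (n - 1) \ {i}),
        ∃ ρ ∈ DSn n (Finset.Icc 1 (n - 1) \ {i}),
        DistinctOn n σ ρ ∧ d = dLinf n σ ρ} (n - i)) ∧
    ((n + 1) / 2 ≤ i ∧ i ≤ n - 2 →
      IsGreatest {d : ℕ | ∃ σ ∈ DSn n (Finset.Icc 1 (n - 1) \ {i}),
        ∃ ρ ∈ DSn n (Finset.Icc 1 (n - 1) \ {i}),
        DistinctOn n σ ρ ∧ d = dLinf n σ ρ} i) := by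
  -- generic upper bound machinery
  have UB : ∀ v : ℕ, (∀ j, 1 ≤ j → j ≤ n →
      ∀ x y : ℕ, ((j ≤ i → i + 1 - j ≤ x ∧ x ≤ n + 1 - j) ∧
        (i < j → n + 1 - j ≤ x ∧ x ≤ n + i + 1 - j) ∧
        (i = 1 → j = 1 → x ≤ n - 1) ∧ (i = n - 1 → j = n → 2 ≤ x)) →
        ((j ≤ i → i + 1 - j ≤ y ∧ y ≤ n + 1 - j) ∧
        (i < j → n + 1 - j ≤ y ∧ y ≤ n + i + 1 - j) ∧
        (i = 1 → j = 1 → y ≤ n - 1) ∧ (i = n - 1 → j = n → 2 ≤ y)) →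
        ((x : ℤ) - y).natAbs ≤ v) →
      v ∈ upperBounds {d : ℕ | ∃ σ ∈ DSn n (Finset.Icc 1 (n - 1) \ {i}),
        ∃ ρ ∈ DSn n (Finset.Icc 1 (n - 1) \ {i}),
        DistinctOn n σ ρ ∧ d = dLinf n σ ρ} := by
    intro v hv d hd
    obtain ⟨σ, hσ, ρ, hρ, -, rfl⟩ := hd
    apply Finset.sup_le
    intro j hj
    rw [Finset.mem_Icc] at hj
    exact hv j hj.1 hj.2 (σ j) (ρ j)
      (dsn_bounds n i hn hi1 hi2 σ hσ j hj.1 hj.2)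
      (dsn_bounds n i hn hi1 hi2 ρ hρ j hj.1 hj.2)
  refine ⟨?_, ?_, ?_⟩
  · -- case i = 1 or i = n - 1
    rintro (rfl | hin)
    · -- i = 1
      constructor
      · -- membership: witnesses
        refine ⟨(fun j => if j = 1 then 1 else n + 2 - j), ?_,
          (fun j => if j = 1 then n - 1 else if j = 2 then n else n + 1 - j), ?_,
          ⟨1, Set.mem_Icc.mpr ⟨le_rfl, by omega⟩, by beta_reduce; split_ifs <;> omega⟩, ?_⟩
        · apply mem_DSn_helper
          · intro a ha; rw [Set.mem_Icc] at ha ⊢; beta_reduce at *; split_ifs <;> omega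
          · intro a ha b hb hab
            rw [Set.mem_Icc] at ha hb; beta_reduce at *; split_ifs at hab <;> omega
          · ext p
            simp only [DescentSet, Finset.mem_filter, Finset.mem_sdiff,
              Finset.mem_Icc, Finset.mem_singleton]
            beta_reduce at *; split_ifs <;> omega
        · apply mem_DSn_helper
          · intro a ha; rw [Set.mem_Icc] at ha ⊢; beta_reduce at *; split_ifs <;> omega
          · intro a ha b hb hab
            rw [Set.mem_Icc] at ha hb; beta_reduce at *; split_ifs at hab <;> omega
          · ext p
            simp only [DescentSet, Finset.mem_filter, Finset.mem_sdiff,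
              Finset.mem_Icc, Finset.mem_singleton]
            beta_reduce at *; split_ifs <;> omega
        · -- dLinf computation
          apply le_antisymm
          · apply Finset.le_sup (b := 1) (Finset.mem_Icc.mpr ⟨le_rfl, by omega⟩)
              |>.trans_eq' ?_
            beta_reduce at *; split_ifs <;> omega
          · apply Finset.sup_le
            intro j hj
            rw [Finset.mem_Icc] at hj
            beta_reduce at *; split_ifs <;> omega
      · apply UB
        intro j h1 h2 x y hx hy
        obtain ⟨hx1, hx2, hx3, -⟩ := hx
        obtain ⟨hy1, hy2, hy3, -⟩ := hy
        rcases Nat.eq_or_lt_of_le h1 with he | hl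
        · have := hx3 rfl he.symm; have := hy3 rfl he.symm
          have := hx1 (by omega); have := hy1 (by omega); omega
        · have := hx2 (by omega); have := hy2 (by omega); omega
    · -- i = n - 1
      constructor
      · refine ⟨(fun j => if j = n then n else n - j), ?_,
          (fun j => if j = n then 2 else if j = n - 1 then 1 else n + 1 - j), ?_,
          ⟨n, Set.mem_Icc.mpr ⟨by omega, le_rfl⟩, by beta_reduce; split_ifs <;> omega⟩, ?_⟩
        · apply mem_DSn_helper
          · intro a ha; rw [Set.mem_Icc] at ha ⊢; beta_reduce at *; split_ifs <;> omega
          · intro a ha b hb hab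
            rw [Set.mem_Icc] at ha hb; beta_reduce at *; split_ifs at hab <;> omega
          · ext p
            simp only [DescentSet, Finset.mem_filter, Finset.mem_sdiff,
              Finset.mem_Icc, Finset.mem_singleton]
            subst hin
            beta_reduce at *; split_ifs <;> omega
        · apply mem_DSn_helper
          · intro a ha; rw [Set.mem_Icc] at ha ⊢; beta_reduce at *; split_ifs <;> omega
          · intro a ha b hb hab
            rw [Set.mem_Icc] at ha hb; beta_reduce at *; split_ifs at hab <;> omega
          · ext p
            simp only [DescentSet, Finset.mem_filter, Finset.mem_sdiff,
              Finset.mem_Icc, Finset.mem_singleton]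
            subst hin
            beta_reduce at *; split_ifs <;> omega
        · apply le_antisymm
          · apply Finset.le_sup (b := n) (Finset.mem_Icc.mpr ⟨by omega, le_rfl⟩)
              |>.trans_eq' ?_
            beta_reduce at *; split_ifs <;> omega
          · apply Finset.sup_le
            intro j hj
            rw [Finset.mem_Icc] at hj
            beta_reduce at *; split_ifs <;> omega
      · apply UB
        intro j h1 h2 x y hx hy
        obtain ⟨hx1, hx2, -, hx4⟩ := hx
        obtain ⟨hy1, hy2, -, hy4⟩ := hy
        rcases Nat.eq_or_lt_of_le h2 with he | hl
        · have := hx4 hin he; have := hy4 hin he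
          have := hx2 (by omega); have := hy2 (by omega); omega
        · have := hx1 (by omega); have := hy1 (by omega); omega
  · -- case 2 ≤ i ≤ n/2
    rintro ⟨hc1, hc2⟩
    constructor
    · refine ⟨(fun j => if j = 1 then n else if j ≤ i then i + 1 - j else n + i - j), ?_,
        (fun j => if j ≤ i then i + 1 - j else n + i + 1 - j), ?_,
        ⟨1, Set.mem_Icc.mpr ⟨le_rfl, by omega⟩, by beta_reduce; split_ifs <;> omega⟩, ?_⟩
      · apply mem_DSn_helper
        · intro a ha; rw [Set.mem_Icc] at ha ⊢; beta_reduce at *; split_ifs <;> omega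
        · intro a ha b hb hab
          rw [Set.mem_Icc] at ha hb; beta_reduce at *; split_ifs at hab <;> omega
        · ext p
          simp only [DescentSet, Finset.mem_filter, Finset.mem_sdiff,
            Finset.mem_Icc, Finset.mem_singleton]
          beta_reduce at *; split_ifs <;> omega
      · apply mem_DSn_helper
        · intro a ha; rw [Set.mem_Icc] at ha ⊢; beta_reduce at *; split_ifs <;> omega
        · intro a ha b hb hab
          rw [Set.mem_Icc] at ha hb; beta_reduce at *; split_ifs at hab <;> omega
        · ext p
          simp only [DescentSet, Finset.mem_filter, Finset.mem_sdiff,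
            Finset.mem_Icc, Finset.mem_singleton]
          beta_reduce at *; split_ifs <;> omega
      · apply le_antisymm
        · apply Finset.le_sup (b := 1) (Finset.mem_Icc.mpr ⟨le_rfl, by omega⟩)
            |>.trans_eq' ?_
          beta_reduce at *; split_ifs <;> omega
        · apply Finset.sup_le
          intro j hj
          rw [Finset.mem_Icc] at hj
          beta_reduce at *; split_ifs <;> omega
    · apply UB
      intro j h1 h2 x y hx hy
      obtain ⟨hx1, hx2, -, -⟩ := hx
      obtain ⟨hy1, hy2, -, -⟩ := hy
      rcases le_or_gt j i with hl | hl
      · have := hx1 hl; have := hy1 hl; omega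
      · have := hx2 hl; have := hy2 hl; omega
  · -- case (n+1)/2 ≤ i ≤ n-2
    rintro ⟨hc1, hc2⟩
    constructor
    · refine ⟨(fun j => if j ≤ i then i + 1 - j else n + i + 1 - j), ?_,
        (fun j => if j ≤ i then n - j else if j = i + 1 then n else n + 1 - j), ?_,
        ⟨n, Set.mem_Icc.mpr ⟨by omega, le_rfl⟩, by beta_reduce; split_ifs <;> omega⟩, ?_⟩
      · apply mem_DSn_helper
        · intro a ha; rw [Set.mem_Icc] at ha ⊢; beta_reduce at *; split_ifs <;> omega
        · intro a ha b hb hab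
          rw [Set.mem_Icc] at ha hb; beta_reduce at *; split_ifs at hab <;> omega
        · ext p
          simp only [DescentSet, Finset.mem_filter, Finset.mem_sdiff,
            Finset.mem_Icc, Finset.mem_singleton]
          beta_reduce at *; split_ifs <;> omega
      · apply mem_DSn_helper
        · intro a ha; rw [Set.mem_Icc] at ha ⊢; beta_reduce at *; split_ifs <;> omega
        · intro a ha b hb hab
          rw [Set.mem_Icc] at ha hb; beta_reduce at *; split_ifs at hab <;> omega
        · ext p
          simp only [DescentSet, Finset.mem_filter, Finset.mem_sdiff,
            Finset.mem_Icc, Finset.mem_singleton]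
          beta_reduce at *; split_ifs <;> omega
      · apply le_antisymm
        · apply Finset.le_sup (b := n) (Finset.mem_Icc.mpr ⟨by omega, le_rfl⟩)
            |>.trans_eq' ?_
          beta_reduce at *; split_ifs <;> omega
        · apply Finset.sup_le
          intro j hj
          rw [Finset.mem_Icc] at hj
          beta_reduce at *; split_ifs <;> omega
    · apply UB
      intro j h1 h2 x y hx hy
      obtain ⟨hx1, hx2, -, -⟩ := hx
      obtain ⟨hy1, hy2, -, -⟩ := hy
      rcases le_or_gt j i with hl | hl
      · have := hx1 hl; have := hy1 hl; omega
      · have := hx2 hl; have := hy2 hl; omega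
end

section
/- Let n ≥ 3 and let S be a nonempty proper subset of [n-1]. Then the minimum of d_H(σ,ρ) over all pairs of distinct permutations σ, ρ ∈ D(S;n) equals 2, and the minimum of d_ℓ(σ,ρ) over all pairs of distinct permutations σ, ρ ∈ D(S;n) equals 1. In particular, for every σ ∈ D(S;n) there exists σ' ∈ D(S;n) with σ' ≠ σ, d_H(σ,σ') = 2 and d_ℓ(σ,σ') = 1. -/
lemma dsn_nonempty (n : ℕ) (hn : 1 ≤ n) (S : Finset ℕ)
    (hsub : S ⊆ Finset.Icc 1 (n - 1)) : (DSn n S).Nonempty := by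
  classical
  set a : ℕ → ℕ := fun i => (S.filter (· < i)).sup id with ha
  set b : ℕ → ℕ := fun i => if h : ((insert n S).filter (i ≤ ·)).Nonempty
      then ((insert n S).filter (i ≤ ·)).min' h else n with hb
  -- basic facts
  have hSn : ∀ s ∈ S, 1 ≤ s ∧ s ≤ n - 1 := fun s hs => by
    simpa using hsub hs
  have ha1 : ∀ i, 1 ≤ i → a i < i := by
    intro i hi
    apply Finset.sup_lt_iff (by rw [bot_eq_zero]; omega : (⊥ : ℕ) < i) |>.2
    intro s hs
    simpa using (Finset.mem_filter.1 hs).2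
  have ha2 : ∀ i s, s ∈ S → s < i → s ≤ a i := by
    intro i s hs hsi
    exact Finset.le_sup (f := id) (Finset.mem_filter.2 ⟨hs, hsi⟩)
  have ha7 : ∀ i, a i ∈ S ∨ a i = 0 := by
    intro i
    rcases (S.filter (· < i)).eq_empty_or_nonempty with h | h
    · right; simp [ha, h]
    · left
      obtain ⟨s, hs, heq⟩ := Finset.exists_mem_eq_sup _ h id
      rw [ha]; simp only [heq]
      exact (Finset.mem_filter.1 hs).1
  have hbne : ∀ i, i ≤ n → ((insert n S).filter (i ≤ ·)).Nonempty := by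
    intro i hi
    exact ⟨n, Finset.mem_filter.2 ⟨Finset.mem_insert_self _ _, hi⟩⟩
  have hb3 : ∀ i, i ≤ n → i ≤ b i := by
    intro i hi
    rw [hb]; simp only [dif_pos (hbne i hi)]
    exact (Finset.mem_filter.1 (Finset.min'_mem _ _)).2
  have hb4 : ∀ i, i ≤ n → b i ≤ n := by
    intro i hi
    rw [hb]; simp only [dif_pos (hbne i hi)]
    exact Finset.min'_le _ _ (Finset.mem_filter.2 ⟨Finset.mem_insert_self _ _, hi⟩)
  have hb5 : ∀ i, i ≤ n → b i ∈ S ∨ b i = n := by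
    intro i hi
    rw [hb]; simp only [dif_pos (hbne i hi)]
    have hv1 := (Finset.mem_filter.1 (Finset.min'_mem _ (hbne i hi))).1
    rcases Finset.mem_insert.1 hv1 with h | h
    · right; exact h
    · left; exact h
  have hb6 : ∀ i s, s ∈ S → i ≤ s → b i ≤ s := by
    intro i s hs hsi
    have hin : i ≤ n := le_trans hsi (by have hv2 := hSn s hs; omega)
    rw [hb]; simp only [dif_pos (hbne i hin)]
    exact Finset.min'_le _ _ (Finset.mem_filter.2 ⟨Finset.mem_insert_of_mem hs, hsi⟩)
  set σ : ℕ → ℕ := fun i => if 1 ≤ i ∧ i ≤ n then n - b i + (i - a i) else 0 with hσ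
  have hval : ∀ i, 1 ≤ i → i ≤ n → σ i = n - b i + (i - a i) := by
    intro i h1 h2; simp [hσ, h1, h2]
  clear_value σ b a
  -- maps to
  have hmap : Set.MapsTo σ (Set.Icc 1 n) (Set.Icc 1 n) := by
    intro i hi
    simp only [Set.mem_Icc] at hi ⊢
    rw [hval i hi.1 hi.2]
    have hv3 := ha1 i hi.1
    have hv4 := hb3 i hi.2
    have hv5 := hb4 i hi.2
    omega
  -- b monotone-ish comparison fact
  have hble : ∀ i j, i ≤ j → j ≤ n → b i ≤ b j := by
    intro i j hij hjn
    rcases hb5 j hjn with h | h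
    · exact hb6 i _ h (le_trans hij (hb3 j hjn))
    · rw [h]; exact hb4 i (le_trans hij hjn)
  -- injectivity
  have key : ∀ i j, 1 ≤ i → i ≤ n → 1 ≤ j → j ≤ n → i < j → σ i ≠ σ j := by
    intro i j hi1 hi2 hj1 hj2 hij heq
    rw [hval i hi1 hi2, hval j hj1 hj2] at heq
    have hbij : b i ≤ b j := hble i j (le_of_lt hij) hj2
    rcases eq_or_lt_of_le hbij with hbe | hbl
    · -- same block: show a i = a j
      have haij : a i = a j := by
        have h1 : a j < i := by
          by_contra h
          push_neg at h
          rcases ha7 j with hS | h0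
          · have hv6 := hb6 i _ hS h
            have hv7 := ha1 j hj1
            have hv8 := hb3 j hj2
            omega
          · omega
        have h2 : a j ≤ a i := by
          rcases ha7 j with hS | h0
          · exact ha2 i _ hS h1
          · omega
        have h3 : a i ≤ a j := by
          rcases ha7 i with hS | h0
          · exact ha2 j _ hS (lt_trans (ha1 i hi1) hij)
          · have hv8 := ha1 j hj1; omega
        omega
      rw [haij, hbe] at heq
      have h4 : a j < i := haij ▸ ha1 i hi1
      have h5 : a j < j := ha1 j hj1
      have hv9 := hb3 j hj2
      have hv10 := hb4 j hj2
      omega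
    · -- different blocks
      have hbiS : b i ∈ S := by
        rcases hb5 i hi2 with h | h
        · exact h
        · have hv11 := hb4 j hj2; omega
      have hbilt : b i < j := by
        by_contra h
        push_neg at h
        have hv12 := hb6 j _ hbiS h
        omega
      have hba : b i ≤ a j := ha2 j _ hbiS hbilt
      have hv13 := ha1 i hi1
      have hv14 := hb3 i hi2
      have hv15 := hb4 i hi2
      have hv16 := ha1 j hj1
      have hv17 := hb3 j hj2
      have hv18 := hb4 j hj2
      omega
  have hinj : Set.InjOn σ (Set.Icc 1 n) := by
    intro i hi j hj heq
    simp only [Set.mem_Icc] at hi hj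
    rcases lt_trichotomy i j with h | h | h
    · exact absurd heq (key i j hi.1 hi.2 hj.1 hj.2 h)
    · exact h
    · exact absurd heq.symm (key j i hj.1 hj.2 hi.1 hi.2 h)
  have hperm : IsPermOn n σ :=
    (Set.Finite.injOn_iff_bijOn_of_mapsTo (Set.finite_Icc 1 n) hmap).1 hinj
  -- descent set
  have hdesc : DescentSet n σ = S := by
    ext i
    simp only [DescentSet, Finset.mem_filter, Finset.mem_Icc]
    constructor
    · rintro ⟨⟨h1, h2⟩, hlt⟩
      by_contra hiS
      -- i not in S: ascent
      have hi1n : i + 1 ≤ n := by omega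
      have hbi : b (i+1) = b i := by
        have hbig : i + 1 ≤ b i := by
          rcases hb5 i (by omega) with h | h
          · have hv19 := hb3 i (by omega)
            rcases eq_or_lt_of_le hv19 with he | hl
            · exact absurd (he ▸ h) hiS
            · omega
          · omega
        have h1' : b (i+1) ≤ b i := by
          rcases hb5 i (by omega) with h | h
          · exact hb6 (i+1) _ h hbig
          · rw [h]; exact hb4 (i+1) hi1n
        have h2' : b i ≤ b (i+1) := hble i (i+1) (by omega) hi1n
        omega
      have hai : a (i+1) = a i := by
        have h1' : a (i+1) < i := by
          have hv20 := ha1 (i+1) (by omega)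
          rcases ha7 (i+1) with hS | h0
          · rcases eq_or_lt_of_le (by omega : a (i+1) ≤ i) with he | hl
            · exact absurd (he ▸ hS) hiS
            · exact hl
          · omega
        have h2' : a (i+1) ≤ a i := by
          rcases ha7 (i+1) with hS | h0
          · exact ha2 i _ hS h1'
          · omega
        have h3' : a i ≤ a (i+1) := by
          rcases ha7 i with hS | h0
          · exact ha2 (i+1) _ hS (by have hv21 := ha1 i h1; omega)
          · omega
        omega
      rw [hval i h1 (by omega), hval (i+1) (by omega) hi1n, hbi, hai] at hlt
      have hv22 := ha1 i h1
      have hv23 := hb3 i (by omega)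
      have hv24 := hb4 i (by omega)
      omega
    · intro hiS
      have h12 := hSn i hiS
      refine ⟨⟨h12.1, h12.2⟩, ?_⟩
      have h1 : 1 ≤ i := h12.1
      have h2 : i ≤ n - 1 := h12.2
      have hbi : b i = i := le_antisymm (hb6 i i hiS le_rfl) (hb3 i (by omega))
      have hai1 : a (i+1) = i := by
        have hv25 := ha2 (i+1) i hiS (by omega)
        have hv26 := ha1 (i+1) (by omega)
        omega
      rw [hval i h1 (by omega), hval (i+1) (by omega) (by omega), hbi, hai1]
      have hv27 := ha1 i h1
      have hv28 := hb3 (i+1) (by omega)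
      have hv29 := hb4 (i+1) (by omega)
      omega
  exact ⟨σ, hperm, hdesc⟩


lemma swap_lt_iff (k a b : ℕ) (hab : a ≠ b) (h1 : ¬(a = k ∧ b = k+1)) (h2 : ¬(a = k+1 ∧ b = k)) :
    ((if b = k then k+1 else if b = k+1 then k else b) <
      (if a = k then k+1 else if a = k+1 then k else a) ↔ b < a) := by
  split_ifs <;> omega

lemma mySwapStep (n : ℕ) (hn : 3 ≤ n) (S : Finset ℕ) (hne : S.Nonempty)
    (hproper : S ≠ Finset.Icc 1 (n - 1)) :
    ∀ σ ∈ DSn n S, ∃ σ' ∈ DSn n S, DistinctOn n σ σ' ∧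
      dHamming n σ σ' = 2 ∧ dLinf n σ σ' = 1 := by
  rintro σ ⟨hperm, hdesc⟩
  set p : ℕ → ℕ := Function.invFunOn σ (Set.Icc 1 n) with hp
  have hinv := hperm.invOn_invFunOn
  have hpm : ∀ k, 1 ≤ k → k ≤ n → p k ∈ Set.Icc 1 n := by
    intro k h1 h2
    exact hperm.surjOn.mapsTo_invFunOn ⟨h1, h2⟩
  have hpr : ∀ k, 1 ≤ k → k ≤ n → σ (p k) = k := by
    intro k h1 h2
    exact hinv.2 ⟨h1, h2⟩
  have hpinj : ∀ k k', 1 ≤ k → k ≤ n → 1 ≤ k' → k' ≤ n → p k = p k' → k = k' := by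
    intro k k' h1 h2 h3 h4 h
    rw [← hpr k h1 h2, ← hpr k' h3 h4, h]
  -- find k with non-adjacent positions of k, k+1
  have hk : ∃ k, 1 ≤ k ∧ k + 1 ≤ n ∧ p k + 1 ≠ p (k+1) ∧ p (k+1) + 1 ≠ p k := by
    by_contra hcon
    push_neg at hcon
    have hadj : ∀ k, 1 ≤ k → k + 1 ≤ n → p k + 1 = p (k+1) ∨ p (k+1) + 1 = p k := by
      intro k h1 h2
      by_contra h
      push_neg at h
      exact h.2 (hcon k h1 h2 h.1)
    rcases hadj 1 (le_refl 1) (by omega) with hc | hc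
    · -- increasing walk: p k = p 1 + (k - 1), σ = id
      have key : ∀ k, 2 ≤ k → k ≤ n → p k = p (k-1) + 1 := by
        intro k
        induction k using Nat.strong_induction_on with
        | _ k ih =>
          intro h2 hkn
          rcases Nat.lt_or_ge k 3 with h3 | h3
          · have : k = 2 := by omega
            subst this
            simpa using hc.symm
          · rcases hadj (k-1) (by omega) (by omega) with h | h
            · have : k - 1 + 1 = k := by omega
              rw [this] at h
              omega
            · exfalso
              have hk1 : p (k-1) = p (k-1-1) + 1 := ih (k-1) (by omega) (by omega) (by omega)
              have : k - 1 + 1 = k := by omega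
              rw [this] at h
              have hpk : p k = p (k-1-1) := by omega
              have := hpinj k (k-1-1) (by omega) hkn (by omega) (by omega) hpk
              omega
      have walk : ∀ k, 1 ≤ k → k ≤ n → p k = p 1 + (k - 1) := by
        intro k
        induction k with
        | zero => omega
        | succ m ih =>
          intro h1 h2
          rcases Nat.eq_or_lt_of_le h1 with h | h
          · simp [← h]
          · have hm := ih (by omega) (by omega)
            have := key (m+1) (by omega) h2
            simp only [Nat.add_sub_cancel] at this
            omega
      have hp1 : p 1 = 1 := by
        have h1 := (hpm 1 le_rfl (by omega)).1
        have h2 := (hpm n (by omega) le_rfl).2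
        have := walk n (by omega) le_rfl
        omega
      have hid : ∀ i, 1 ≤ i → i ≤ n → σ i = i := by
        intro i h1 h2
        have := walk i h1 h2
        rw [hp1] at this
        have h3 : p i = i := by omega
        conv_lhs => rw [← h3]
        exact hpr i h1 h2
      have : S = ∅ := by
        rw [← hdesc]
        apply Finset.eq_empty_of_forall_notMem
        intro i hi
        simp only [DescentSet, Finset.mem_filter, Finset.mem_Icc] at hi
        obtain ⟨⟨h1, h2⟩, hlt⟩ := hi
        rw [hid i h1 (by omega), hid (i+1) (by omega) (by omega)] at hlt
        omega
      exact absurd (this ▸ hne) (by simp)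
    · -- decreasing walk: σ i = n + 1 - i
      have key : ∀ k, 2 ≤ k → k ≤ n → p k + 1 = p (k-1) := by
        intro k
        induction k using Nat.strong_induction_on with
        | _ k ih =>
          intro h2 hkn
          rcases Nat.lt_or_ge k 3 with h3 | h3
          · have : k = 2 := by omega
            subst this
            simpa using hc
          · rcases hadj (k-1) (by omega) (by omega) with h | h
            · exfalso
              have hk1 : p (k-1) + 1 = p (k-1-1) := ih (k-1) (by omega) (by omega) (by omega)
              have : k - 1 + 1 = k := by omega
              rw [this] at h
              have hpk : p k = p (k-1-1) := by omega
              have := hpinj k (k-1-1) (by omega) hkn (by omega) (by omega) hpk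
              omega
            · have : k - 1 + 1 = k := by omega
              rw [this] at h
              omega
      have walk : ∀ k, 1 ≤ k → k ≤ n → p k + (k - 1) = p 1 := by
        intro k
        induction k with
        | zero => omega
        | succ m ih =>
          intro h1 h2
          rcases Nat.eq_or_lt_of_le h1 with h | h
          · simp [← h]
          · have hm := ih (by omega) (by omega)
            have := key (m+1) (by omega) h2
            simp only [Nat.add_sub_cancel] at this
            omega
      have hp1 : p 1 = n := by
        have h1 := (hpm 1 le_rfl (by omega)).2
        have h2 := (hpm n (by omega) le_rfl).1
        have := walk n (by omega) le_rfl
        omega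
      have hrev : ∀ i, 1 ≤ i → i ≤ n → σ i = n + 1 - i := by
        intro i h1 h2
        have hw := walk (n+1-i) (by omega) (by omega)
        rw [hp1] at hw
        have hpi : p (n+1-i) = i := by omega
        have := hpr (n+1-i) (by omega) (by omega)
        rw [hpi] at this
        rw [this]
      have : S = Finset.Icc 1 (n-1) := by
        rw [← hdesc]
        ext i
        simp only [DescentSet, Finset.mem_filter, Finset.mem_Icc]
        constructor
        · rintro ⟨h, _⟩; exact h
        · rintro ⟨h1, h2⟩
          refine ⟨⟨h1, h2⟩, ?_⟩
          rw [hrev i h1 (by omega), hrev (i+1) (by omega) (by omega)]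
          omega
      exact absurd this hproper
  obtain ⟨k, hk1, hk2, hnadj1, hnadj2⟩ := hk
  set i0 := p k with hi0
  set j0 := p (k+1) with hj0
  have hi0m : i0 ∈ Set.Icc 1 n := hpm k hk1 (by omega)
  have hj0m : j0 ∈ Set.Icc 1 n := hpm (k+1) (by omega) hk2
  have hσi0 : σ i0 = k := hpr k hk1 (by omega)
  have hσj0 : σ j0 = k + 1 := hpr (k+1) (by omega) hk2
  have hij0 : i0 ≠ j0 := by
    intro h
    rw [h, hσj0] at hσi0
    omega
  set σ' : ℕ → ℕ := fun i => if σ i = k then k+1 else if σ i = k+1 then k else σ i with hσ'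
  -- which positions change
  have hchange : ∀ i ∈ Set.Icc 1 n, σ' i ≠ σ i ↔ (i = i0 ∨ i = j0) := by
    intro i hi
    constructor
    · intro h
      simp only [hσ'] at h
      by_cases h1 : σ i = k
      · left
        exact hperm.injOn hi hi0m (by rw [h1, hσi0])
      · by_cases h2 : σ i = k + 1
        · right
          exact hperm.injOn hi hj0m (by rw [h2, hσj0])
        · simp [h1, h2] at h
    · rintro (rfl | rfl) <;> simp [hσ', hσi0, hσj0] <;> omega
  have hungch : ∀ i, i ≠ i0 → i ≠ j0 → i ∈ Set.Icc 1 n → σ' i = σ i := by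
    intro i h1 h2 hi
    by_contra h
    rcases (hchange i hi).1 h with h | h <;> tauto
  -- σ' is a permutation
  have hswap : ∀ x, σ' x = Equiv.swap k (k+1) (σ x) := by
    intro x
    simp only [hσ']
    rw [Equiv.swap_apply_def]
  have hswapbij : Set.BijOn (⇑(Equiv.swap k (k+1))) (Set.Icc 1 n) (Set.Icc 1 n) := by
    have hmapsto : Set.MapsTo (⇑(Equiv.swap k (k+1))) (Set.Icc 1 n) (Set.Icc 1 n) := by
      intro x hx
      simp only [Set.mem_Icc] at hx ⊢
      rw [Equiv.swap_apply_def]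
      split_ifs <;> omega
    refine ⟨hmapsto, (Equiv.injective _).injOn, ?_⟩
    intro y hy
    refine ⟨Equiv.swap k (k+1) y, hmapsto hy, ?_⟩
    simp
  have hperm' : IsPermOn n σ' := by
    have : σ' = ⇑(Equiv.swap k (k+1)) ∘ σ := by
      funext x; exact hswap x
    rw [IsPermOn, this]
    exact hswapbij.comp hperm
  -- descent set preserved
  have hdesc' : DescentSet n σ' = S := by
    rw [← hdesc]
    apply Finset.filter_congr
    intro i hi
    simp only [Finset.mem_Icc] at hi
    have hiI : i ∈ Set.Icc 1 n := ⟨hi.1, by omega⟩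
    have hi1I : i + 1 ∈ Set.Icc 1 n := ⟨by omega, by omega⟩
    have hab : σ i ≠ σ (i+1) := fun h => by
      have := hperm.injOn hiI hi1I h
      omega
    have hne1 : ¬(σ i = k ∧ σ (i+1) = k+1) := by
      rintro ⟨h1, h2⟩
      have e1 : i = i0 := hperm.injOn hiI hi0m (by rw [h1, hσi0])
      have e2 : i + 1 = j0 := hperm.injOn hi1I hj0m (by rw [h2, hσj0])
      exact hnadj1 (by omega)
    have hne2 : ¬(σ i = k+1 ∧ σ (i+1) = k) := by
      rintro ⟨h1, h2⟩
      have e1 : i = j0 := hperm.injOn hiI hj0m (by rw [h1, hσj0])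
      have e2 : i + 1 = i0 := hperm.injOn hi1I hi0m (by rw [h2, hσi0])
      exact hnadj2 (by omega)
    simp only [hσ']
    exact swap_lt_iff k (σ i) (σ (i+1)) hab hne1 hne2
  -- Hamming distance = 2
  have hfilter : (Finset.Icc 1 n).filter (fun i => σ i ≠ σ' i) = {i0, j0} := by
    ext i
    simp only [Finset.mem_filter, Finset.mem_Icc, Finset.mem_insert, Finset.mem_singleton]
    constructor
    · rintro ⟨h1, h2⟩
      exact (hchange i ⟨h1.1, h1.2⟩).1 (Ne.symm h2)
    · rintro (rfl | rfl)
      · exact ⟨⟨hi0m.1, hi0m.2⟩, fun h => (hchange i0 hi0m).2 (Or.inl rfl) h.symm⟩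
      · exact ⟨⟨hj0m.1, hj0m.2⟩, fun h => (hchange j0 hj0m).2 (Or.inr rfl) h.symm⟩
  have hham : dHamming n σ σ' = 2 := by
    rw [dHamming, hfilter]
    rw [Finset.card_insert_of_notMem (by simpa using hij0), Finset.card_singleton]
  -- Linf distance = 1
  have hlinf : dLinf n σ σ' = 1 := by
    apply le_antisymm
    · apply Finset.sup_le
      intro i hi
      simp only [Finset.mem_Icc] at hi
      simp only [hσ']
      split_ifs with h1 h2 <;> omega
    · have hmem : i0 ∈ Finset.Icc 1 n := Finset.mem_Icc.2 ⟨hi0m.1, hi0m.2⟩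
      have hval : ((σ i0 : ℤ) - (σ' i0 : ℤ)).natAbs = 1 := by
        have h1 : σ' i0 = k + 1 := by simp [hσ', hσi0]
        rw [hσi0, h1]
        omega
      rw [dLinf]
      calc (1:ℕ) = ((σ i0 : ℤ) - (σ' i0 : ℤ)).natAbs := hval.symm
        _ ≤ _ := Finset.le_sup (f := fun i => ((σ i : ℤ) - (σ' i : ℤ)).natAbs) hmem
  have hdist : DistinctOn n σ σ' := by
    refine ⟨i0, hi0m, ?_⟩
    exact fun h => (hchange i0 hi0m).2 (Or.inl rfl) h.symm
  exact ⟨σ', ⟨hperm', hdesc'⟩, hdist, hham, hlinf⟩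

lemma two_le_dH (n : ℕ) (σ ρ : ℕ → ℕ) (hσ : IsPermOn n σ) (hρ : IsPermOn n ρ)
    (hd : DistinctOn n σ ρ) : 2 ≤ dHamming n σ ρ := by
  classical
  obtain ⟨i0, hi0, hne⟩ := hd
  have hi0F : i0 ∈ (Finset.Icc 1 n).filter fun i => σ i ≠ ρ i :=
    Finset.mem_filter.2 ⟨Finset.mem_Icc.2 ⟨hi0.1, hi0.2⟩, hne⟩
  by_contra h
  push_neg at h
  have hcard : ((Finset.Icc 1 n).filter fun i => σ i ≠ ρ i).card = 1 := by
    have : 1 ≤ ((Finset.Icc 1 n).filter fun i => σ i ≠ ρ i).card :=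
      Finset.card_pos.2 ⟨i0, hi0F⟩
    have := Nat.lt_of_lt_of_le (by omega : dHamming n σ ρ < 2) (le_refl _)
    rw [dHamming] at h
    omega
  obtain ⟨a, hfa⟩ := Finset.card_eq_one.1 hcard
  have hia : i0 = a := by
    have := hfa ▸ hi0F
    simpa using this
  subst hia
  -- every other index agrees
  have hagree : ∀ j ∈ Set.Icc 1 n, j ≠ i0 → σ j = ρ j := by
    intro j hj hne'
    by_contra hne''
    have : j ∈ (Finset.Icc 1 n).filter fun i => σ i ≠ ρ i :=
      Finset.mem_filter.2 ⟨Finset.mem_Icc.2 ⟨hj.1, hj.2⟩, hne''⟩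
    rw [hfa] at this
    exact hne' (by simpa using this)
  -- σ i0 is hit by ρ at some j
  have hσi0 : σ i0 ∈ Set.Icc 1 n := hσ.mapsTo hi0
  obtain ⟨j, hj, hρj⟩ := hρ.surjOn hσi0
  by_cases hji : j = i0
  · subst hji
    exact hne hρj.symm
  · have : σ j = σ i0 := (hagree j hj hji) ▸ hρj
    exact hji (hσ.injOn hj hi0 this)

lemma one_le_dL (n : ℕ) (σ ρ : ℕ → ℕ) (hd : DistinctOn n σ ρ) : 1 ≤ dLinf n σ ρ := by
  obtain ⟨i0, hi0, hne⟩ := hd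
  have h1 : 1 ≤ ((σ i0 : ℤ) - (ρ i0 : ℤ)).natAbs := by omega
  calc (1:ℕ) ≤ ((σ i0 : ℤ) - (ρ i0 : ℤ)).natAbs := h1
    _ ≤ dLinf n σ ρ := Finset.le_sup (f := fun i => ((σ i : ℤ) - (ρ i : ℤ)).natAbs)
        (Finset.mem_Icc.2 ⟨hi0.1, hi0.2⟩)

/-- For nonempty proper `S ⊆ [n-1]`, the minimum Hamming distance over pairs of
distinct permutations in `D(S;n)` is `2`, the minimum `ℓ∞` distance is `1`;
in particular, every `σ ∈ D(S;n)` admits `σ' ∈ D(S;n)`, `σ' ≠ σ`, with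
`d_H(σ,σ') = 2` and `d_ℓ(σ,σ') = 1`. -/
theorem stmt19 (n : ℕ) (hn : 3 ≤ n) (S : Finset ℕ)
    (hsub : S ⊆ Finset.Icc 1 (n - 1)) (hne : S.Nonempty)
    (hproper : S ≠ Finset.Icc 1 (n - 1)) :
    IsLeast {d : ℕ | ∃ σ ∈ DSn n S, ∃ ρ ∈ DSn n S,
      DistinctOn n σ ρ ∧ d = dHamming n σ ρ} 2 ∧
    IsLeast {d : ℕ | ∃ σ ∈ DSn n S, ∃ ρ ∈ DSn n S,
      DistinctOn n σ ρ ∧ d = dLinf n σ ρ} 1 ∧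
    ∀ σ ∈ DSn n S, ∃ σ' ∈ DSn n S, DistinctOn n σ σ' ∧
      dHamming n σ σ' = 2 ∧ dLinf n σ σ' = 1 := by
  obtain ⟨σ0, hσ0⟩ := dsn_nonempty n (by omega) S hsub
  have main := mySwapStep n hn S hne hproper
  obtain ⟨σ1, hσ1, hdist1, hham1, hlinf1⟩ := main σ0 hσ0
  refine ⟨⟨⟨σ0, hσ0, σ1, hσ1, hdist1, hham1.symm⟩, ?_⟩,
    ⟨⟨σ0, hσ0, σ1, hσ1, hdist1, hlinf1.symm⟩, ?_⟩, main⟩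
  · rintro d ⟨σ, hσ, ρ, hρ, hd, rfl⟩
    exact two_le_dH n σ ρ hσ.1 hρ.1 hd
  · rintro d ⟨σ, hσ, ρ, hρ, hd, rfl⟩
    exact one_le_dL n σ ρ hd
end
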